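/- arXiv:2508.18054 — 9 statements merged into one kernel-verified Lean document; each statement's English description precedes it below -/
import Mathlib

section
/- Let n ≥ 2 be an integer, L > 0, f : [0,L] → ℝ a smooth positive function, ν ≥ 0, μ > 0, and let w : [0,L] → ℝ be a C² solution of the warped Sturm–Liouville problem with Neumann boundary conditions and with w(L) > 0. Suppose that either (i) ν = 0 and w has exactly one zero in [0,L], or (ii) ν > 0, f is non-decreasing and non-constant on [0,L], and w > 0 on [0,L]. Then there exist r₁, r₂ with 0 < r₁ ≤ r₂ < L such that a(r) > 0 for all r ∈ [0,r₁), a(r) = 0 for all r ∈ [r₁,r₂], and a(r) < 0 for all r ∈ (r₂,L]. -/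
open Set intervalIntegral MeasureTheory Function
open scoped ENNReal

lemma aux_int_pos {h : ℝ → ℝ} {L p : ℝ} (hL : 0 < L)
    (hc : ContinuousOn h (Icc 0 L)) (hnn : ∀ x ∈ Icc (0:ℝ) L, 0 ≤ h x)
    (hp : p ∈ Icc (0:ℝ) L) (hpp : 0 < h p) :
    0 < ∫ x in (0:ℝ)..L, h x := by
  have hint : IntervalIntegrable h volume 0 L := by
    rw [← uIcc_of_le hL.le] at hc
    exact hc.intervalIntegrable
  have hae : 0 ≤ᵐ[volume.restrict (Set.uIoc (0:ℝ) L)] h := by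
    rw [Set.uIoc_of_le hL.le]
    exact (ae_restrict_iff' measurableSet_Ioc).mpr
      (Filter.Eventually.of_forall fun x hx => hnn x (Ioc_subset_Icc_self hx))
  rw [integral_pos_iff_support_of_nonneg_ae' hae hint]
  refine ⟨hL, ?_⟩
  have hcw : ContinuousWithinAt h (Icc 0 L) p := hc p hp
  have hev : ∀ᶠ x in nhdsWithin p (Icc 0 L), 0 < h x :=
    hcw.eventually (eventually_gt_nhds hpp)
  rcases mem_nhdsWithin.mp hev with ⟨U, hUopen, hpU, hUsub⟩
  rcases Metric.isOpen_iff.mp hUopen p hpU with ⟨ε, hε, hball⟩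
  have key : ∃ c d : ℝ, c < d ∧ Ioo c d ⊆ support h ∩ Ioc 0 L := by
    rcases lt_or_eq_of_le hp.2 with hpL | hpL
    · refine ⟨p, min L (p + ε), lt_min hpL (by linarith), fun x hx => ?_⟩
      have hx1 : p < x := hx.1
      have hx2 := (lt_min_iff.mp hx.2).1
      have hx3 := (lt_min_iff.mp hx.2).2
      have hx0 : 0 < x := lt_of_le_of_lt hp.1 hx1
      have hmem : x ∈ Icc (0:ℝ) L := ⟨hx0.le, hx2.le⟩
      have hU : x ∈ U := by
        apply hball
        rw [Metric.mem_ball, Real.dist_eq, abs_lt]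
        constructor
        · linarith
        · linarith
      exact ⟨mem_support.mpr (hUsub ⟨hU, hmem⟩).ne', hx0, hx2.le⟩
    · refine ⟨max 0 (L - ε), L, max_lt hL (by linarith), fun x hx => ?_⟩
      have hx0 : 0 < x := lt_of_le_of_lt (le_max_left _ _) hx.1
      have hxe : L - ε < x := lt_of_le_of_lt (le_max_right _ _) hx.1
      have hmem : x ∈ Icc (0:ℝ) L := ⟨hx0.le, hx.2.le⟩
      have hU : x ∈ U := by
        apply hball
        rw [Metric.mem_ball, Real.dist_eq, abs_lt, hpL]
        constructor
        · linarith [hx.2]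
        · linarith [hx.2]
      exact ⟨mem_support.mpr (hUsub ⟨hU, hmem⟩).ne', hx0, hx.2.le⟩
  rcases key with ⟨c, d, hcd, hsub⟩
  calc (0:ℝ≥0∞) < volume (Ioo c d) := by simp [Real.volume_Ioo, hcd]
    _ ≤ _ := measure_mono hsub

lemma aux_int_zero (n : ℕ) (hn : 2 ≤ n) (L : ℝ) (hL : 0 < L)
    (f w : ℝ → ℝ) (hf : ContDiff ℝ (⊤ : ℕ∞) f) (hfpos : ∀ r ∈ Set.Icc (0:ℝ) L, 0 < f r)
    (ν μ : ℝ)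
    (hw : ContDiff ℝ 2 w)
    (hode : ∀ r ∈ Set.Icc (0:ℝ) L,
      deriv (deriv w) r + ((n : ℝ) - 1) * (deriv f r / f r) * deriv w r
        - ν / (f r) ^ 2 * w r = -μ * w r)
    (hbc0 : deriv w 0 = 0) (hbcL : deriv w L = 0) :
    ∫ r in (0:ℝ)..L, f r ^ (n - 1) * (ν / (f r) ^ 2 - μ) * w r = 0 := by
  have hw1 : ContDiff ℝ 1 (deriv w) := by
    have : ContDiff ℝ (1 + 1 : ℕ) w := by norm_num; exact hw
    exact (contDiff_succ_iff_deriv.mp this).2.2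
  have hwd : Differentiable ℝ (deriv w) := hw1.differentiable one_ne_zero
  have hfd : Differentiable ℝ f := hf.differentiable (by simp)
  have key : ∀ x ∈ Set.uIcc (0:ℝ) L,
      HasDerivAt (fun r => f r ^ (n - 1) * deriv w r)
        (f x ^ (n - 1) * (ν / (f x) ^ 2 - μ) * w x) x := by
    intro x hx
    rw [uIcc_of_le hL.le] at hx
    have hfx : f x ≠ 0 := (hfpos x hx).ne'
    have h1 : HasDerivAt (fun r => f r ^ (n - 1))
        (((n:ℝ) - 1) * f x ^ (n - 2) * deriv f x) x := by
      have := ((hfd x).hasDerivAt).fun_pow (n - 1)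
      have hs : n - 1 - 1 = n - 2 := by omega
      rw [hs] at this
      refine this.congr_deriv (Eq.symm ?_)
      push_cast [Nat.cast_sub (by omega : 1 ≤ n)]
      ring
    have h2 : HasDerivAt (deriv w) (deriv (deriv w) x) x := (hwd x).hasDerivAt
    have := h1.fun_mul h2
    refine this.congr_deriv (Eq.symm ?_)
    have hode' := hode x hx
    have hw2 : deriv (deriv w) x
        = ν / (f x) ^ 2 * w x - μ * w x - ((n:ℝ) - 1) * (deriv f x / f x) * deriv w x := by
      linarith
    rw [hw2]
    have hpow : f x ^ (n - 1) = f x ^ (n - 2) * f x := by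
      rw [← pow_succ]; congr 1; omega
    rw [hpow]
    field_simp
    ring
  have hcont : ContinuousOn (fun r => f r ^ (n - 1) * (ν / (f r) ^ 2 - μ) * w r)
      (Set.uIcc (0:ℝ) L) := by
    rw [uIcc_of_le hL.le]
    have hfc : ContinuousOn f (Icc 0 L) := hf.continuous.continuousOn
    have hwc : ContinuousOn w (Icc 0 L) := hw.continuous.continuousOn
    exact ((hfc.pow _).mul (((continuousOn_const.div (hfc.pow 2)
      (fun x hx => pow_ne_zero 2 (hfpos x hx).ne')).sub continuousOn_const))).mul hwc
  rw [integral_eq_sub_of_hasDerivAt key hcont.intervalIntegrable]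
  simp [hbc0, hbcL]

/-- Let `n ≥ 2`, `L > 0`, `f` a smooth positive (on `[0,L]`) warping
function, `ν ≥ 0`, `μ > 0`, and let `w` be a `C²` solution of the warped Sturm–Liouville
problem `w'' + (n-1)(f'/f) w' - (ν/f²) w = -μ w` on `[0,L]` with Neumann boundary
conditions `w'(0) = w'(L) = 0` and `w(L) > 0`.  If either (i) `ν = 0` and `w` has exactly
one zero in `[0,L]`, or (ii) `ν > 0`, `f` is non-decreasing and non-constant on `[0,L]`,
and `w > 0` on `[0,L]`, then, with `a(r) := f(r)^(n-1) (ν/f(r)² - μ) w(r)`, there are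
`0 < r₁ ≤ r₂ < L` with `a > 0` on `[0,r₁)`, `a = 0` on `[r₁,r₂]`, and `a < 0` on `(r₂,L]`. -/
theorem stmt0 (n : ℕ) (hn : 2 ≤ n) (L : ℝ) (hL : 0 < L)
    (f w : ℝ → ℝ) (hf : ContDiff ℝ (⊤ : ℕ∞) f) (hfpos : ∀ r ∈ Set.Icc (0:ℝ) L, 0 < f r)
    (ν μ : ℝ) (hν : 0 ≤ ν) (hμ : 0 < μ)
    (hw : ContDiff ℝ 2 w)
    (hode : ∀ r ∈ Set.Icc (0:ℝ) L,
      deriv (deriv w) r + ((n : ℝ) - 1) * (deriv f r / f r) * deriv w r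
        - ν / (f r) ^ 2 * w r = -μ * w r)
    (hbc0 : deriv w 0 = 0) (hbcL : deriv w L = 0)
    (hwL : 0 < w L)
    (hcase :
      (ν = 0 ∧ ∃! r, r ∈ Set.Icc (0:ℝ) L ∧ w r = 0) ∨
      (0 < ν ∧ MonotoneOn f (Set.Icc (0:ℝ) L) ∧
        (∃ r ∈ Set.Icc (0:ℝ) L, ∃ r' ∈ Set.Icc (0:ℝ) L, f r ≠ f r') ∧
        ∀ r ∈ Set.Icc (0:ℝ) L, 0 < w r)) :
    ∃ r₁ r₂ : ℝ, 0 < r₁ ∧ r₁ ≤ r₂ ∧ r₂ < L ∧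
      (∀ r ∈ Set.Ico (0:ℝ) r₁, 0 < f r ^ (n - 1) * (ν / (f r) ^ 2 - μ) * w r) ∧
      (∀ r ∈ Set.Icc r₁ r₂, f r ^ (n - 1) * (ν / (f r) ^ 2 - μ) * w r = 0) ∧
      (∀ r ∈ Set.Ioc r₂ L, f r ^ (n - 1) * (ν / (f r) ^ 2 - μ) * w r < 0) := by
  have hint0 := aux_int_zero n hn L hL f w hf hfpos ν μ hw hode hbc0 hbcL
  have hwc : Continuous w := hw.continuous
  have hfc : Continuous f := hf.continuous
  rcases hcase with ⟨hν0, r₀, ⟨hr₀mem, hwr₀⟩, huniq⟩ | ⟨hνpos, hmono, ⟨r, hr, r', hr', hne⟩, hwpos⟩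
  · -- Case (i): ν = 0
    -- the integrand equals -(μ f^{n-1} w)
    have hia : ∀ r : ℝ, f r ^ (n - 1) * (ν / (f r) ^ 2 - μ) * w r
        = -(μ * f r ^ (n - 1) * w r) := by
      intro r; rw [hν0, zero_div]; ring
    have hinth : ∫ r in (0:ℝ)..L, μ * f r ^ (n - 1) * w r = 0 := by
      have : ∫ r in (0:ℝ)..L, -(μ * f r ^ (n - 1) * w r) = 0 := by
        rw [← hint0]; congr 1; funext r; rw [hia]
      rwa [intervalIntegral.integral_neg, neg_eq_zero] at this
    -- positivity after r₀
    have hposR : ∀ x ∈ Set.Ioc r₀ L, 0 < w x := by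
      intro x hx
      rcases lt_trichotomy (w x) 0 with hneg | hzero | hpos
      · exfalso
        have h0 : (0:ℝ) ∈ Icc (w x) (w L) := ⟨hneg.le, hwL.le⟩
        rcases intermediate_value_Icc hx.2 hwc.continuousOn h0 with ⟨y, hy, hwy⟩
        have hy' : y ∈ Icc (0:ℝ) L := ⟨le_trans (le_trans hr₀mem.1 hx.1.le) hy.1, hy.2⟩
        have := huniq y ⟨hy', hwy⟩
        have : r₀ < y := lt_of_lt_of_le hx.1 hy.1
        rw [huniq y ⟨hy', hwy⟩] at this
        exact lt_irrefl _ this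
      · exfalso
        have hx' : x ∈ Icc (0:ℝ) L := ⟨le_trans hr₀mem.1 hx.1.le, hx.2⟩
        have := huniq x ⟨hx', hzero⟩
        rw [this] at hx; exact lt_irrefl _ hx.1
      · exact hpos
    have hr₀L : r₀ < L := by
      rcases lt_or_eq_of_le hr₀mem.2 with h | h
      · exact h
      · exfalso; rw [h] at hwr₀; rw [hwr₀] at hwL; exact lt_irrefl _ hwL
    -- w 0 < 0
    have hw0 : w 0 < 0 := by
      by_contra hge0
      push_neg at hge0
      have hge : ∀ x ∈ Icc (0:ℝ) L, 0 ≤ w x := by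
        intro x hx
        by_contra hlt
        push_neg at hlt
        have h0 : (0:ℝ) ∈ Icc (w x) (w L) := ⟨hlt.le, hwL.le⟩
        rcases intermediate_value_Icc hx.2 hwc.continuousOn h0 with ⟨y, hy, hwy⟩
        have h0' : (0:ℝ) ∈ Icc (w x) (w 0) := ⟨hlt.le, hge0⟩
        rcases intermediate_value_Icc' hx.1 hwc.continuousOn h0' with ⟨z, hz, hwz⟩
        have hy' : y ∈ Icc (0:ℝ) L := ⟨le_trans hx.1 hy.1, hy.2⟩
        have hz' : z ∈ Icc (0:ℝ) L := ⟨hz.1, le_trans hz.2 hx.2⟩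
        have e1 := huniq y ⟨hy', hwy⟩
        have e2 := huniq z ⟨hz', hwz⟩
        have : x ≤ r₀ := e1 ▸ hy.1
        have : r₀ ≤ x := e2 ▸ hz.2
        have hxr : x = r₀ := le_antisymm (e1 ▸ hy.1) (by linarith [e2 ▸ hz.2])
        rw [hxr, hwr₀] at hlt; exact lt_irrefl _ hlt
      have hposint : 0 < ∫ r in (0:ℝ)..L, μ * f r ^ (n - 1) * w r := by
        apply aux_int_pos hL
        · exact ((continuous_const.mul (hfc.pow _)).mul hwc).continuousOn
        · intro x hx
          exact mul_nonneg (mul_nonneg hμ.le (pow_nonneg (hfpos x hx).le _)) (hge x hx)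
        · exact Set.right_mem_Icc.mpr hL.le
        · exact mul_pos (mul_pos hμ (pow_pos (hfpos L (Set.right_mem_Icc.mpr hL.le)) _)) hwL
      rw [hinth] at hposint; exact lt_irrefl _ hposint
    have hr₀0 : 0 < r₀ := by
      rcases lt_or_eq_of_le hr₀mem.1 with h | h
      · exact h
      · exfalso; rw [← h] at hwr₀; rw [hwr₀] at hw0; exact lt_irrefl _ hw0
    -- negativity before r₀
    have hnegL : ∀ x ∈ Set.Ico (0:ℝ) r₀, w x < 0 := by
      intro x hx
      rcases lt_trichotomy (w x) 0 with hneg | hzero | hpos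
      · exact hneg
      · exfalso
        have hx' : x ∈ Icc (0:ℝ) L := ⟨hx.1, le_trans hx.2.le hr₀mem.2⟩
        have := huniq x ⟨hx', hzero⟩
        rw [this] at hx; exact lt_irrefl _ hx.2
      · exfalso
        have h0 : (0:ℝ) ∈ Icc (w 0) (w x) := ⟨hw0.le, hpos.le⟩
        rcases intermediate_value_Icc hx.1 hwc.continuousOn h0 with ⟨z, hz, hwz⟩
        have hz' : z ∈ Icc (0:ℝ) L := ⟨hz.1, le_trans hz.2 (le_trans hx.2.le hr₀mem.2)⟩
        have := huniq z ⟨hz', hwz⟩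
        have : r₀ ≤ x := this ▸ hz.2
        exact absurd hx.2 (not_lt.mpr this)
    refine ⟨r₀, r₀, hr₀0, le_refl _, hr₀L, ?_, ?_, ?_⟩
    · intro r hr
      have hr' : r ∈ Icc (0:ℝ) L := ⟨hr.1, le_trans hr.2.le hr₀mem.2⟩
      rw [hia]
      have h1 := pow_pos (hfpos r hr') (n - 1)
      have h2 := hnegL r hr
      nlinarith [mul_pos (mul_pos hμ h1) (neg_pos.mpr h2)]
    · intro r hr
      have : r = r₀ := le_antisymm hr.2 hr.1
      rw [this, hwr₀]; ring
    · intro r hr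
      have hr' : r ∈ Icc (0:ℝ) L := ⟨le_trans hr₀mem.1 hr.1.le, hr.2⟩
      rw [hia]
      have h1 := pow_pos (hfpos r hr') (n - 1)
      have h2 := hposR r hr
      nlinarith [mul_pos (mul_pos hμ h1) h2]
  · -- Case (ii): ν > 0
    set g : ℝ → ℝ := fun r => ν - μ * (f r) ^ 2 with hg
    have hgc : Continuous g := continuous_const.sub (continuous_const.mul (hfc.pow 2))
    have hganti : AntitoneOn g (Icc 0 L) := by
      intro x hx y hy hxy
      have hle := hmono hx hy hxy
      have hx0 := hfpos x hx
      have h2 : f x ^ 2 ≤ f y ^ 2 := by nlinarith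
      simp only [hg]
      nlinarith [mul_le_mul_of_nonneg_left h2 hμ.le]
    have h0L : f 0 < f L := by
      have h0m : (0:ℝ) ∈ Icc (0:ℝ) L := Set.left_mem_Icc.mpr hL.le
      have hLm : L ∈ Icc (0:ℝ) L := Set.right_mem_Icc.mpr hL.le
      rcases lt_or_ge (f r) (f r') with h | h
      · calc f 0 ≤ f r := hmono h0m hr hr.1
          _ < f r' := h
          _ ≤ f L := hmono hr' hLm hr'.2
      · have h' : f r' < f r := lt_of_le_of_ne h (Ne.symm hne)
        calc f 0 ≤ f r' := hmono h0m hr' hr'.1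
          _ < f r := h'
          _ ≤ f L := hmono hr hLm hr.2
    have h0m : (0:ℝ) ∈ Icc (0:ℝ) L := Set.left_mem_Icc.mpr hL.le
    have hLm : L ∈ Icc (0:ℝ) L := Set.right_mem_Icc.mpr hL.le
    have hgL0 : g L < g 0 := by
      simp only [hg]
      have h00 := hfpos 0 h0m
      have h2 : f 0 ^ 2 < f L ^ 2 := by nlinarith
      nlinarith [mul_lt_mul_of_pos_left h2 hμ]
    -- rewrite the integrand
    have hia : ∀ x ∈ Icc (0:ℝ) L, f x ^ (n - 1) * (ν / (f x) ^ 2 - μ) * w x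
        = f x ^ (n - 1) * (g x / (f x) ^ 2) * w x := by
      intro x hx
      have hfx : f x ≠ 0 := (hfpos x hx).ne'
      congr 1
      congr 1
      field_simp [hg]
      ring
    have hacont : ContinuousOn (fun x => f x ^ (n - 1) * (ν / (f x) ^ 2 - μ) * w x)
        (Icc (0:ℝ) L) := by
      have hfco : ContinuousOn f (Icc 0 L) := hfc.continuousOn
      exact (((hfco.pow _).mul ((continuousOn_const.div (hfco.pow 2)
        (fun x hx => pow_ne_zero 2 (hfpos x hx).ne')).sub continuousOn_const)).mul
        hwc.continuousOn)
    -- sign of a from sign of g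
    have hsign_pos : ∀ x ∈ Icc (0:ℝ) L, 0 < g x →
        0 < f x ^ (n - 1) * (ν / (f x) ^ 2 - μ) * w x := by
      intro x hx hgx
      rw [hia x hx]
      exact mul_pos (mul_pos (pow_pos (hfpos x hx) _)
        (div_pos hgx (pow_pos (hfpos x hx) 2))) (hwpos x hx)
    have hsign_neg : ∀ x ∈ Icc (0:ℝ) L, g x < 0 →
        f x ^ (n - 1) * (ν / (f x) ^ 2 - μ) * w x < 0 := by
      intro x hx hgx
      rw [hia x hx]
      exact mul_neg_of_neg_of_pos (mul_neg_of_pos_of_neg (pow_pos (hfpos x hx) _)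
        (div_neg_of_neg_of_pos hgx (pow_pos (hfpos x hx) 2))) (hwpos x hx)
    have hsign_zero : ∀ x ∈ Icc (0:ℝ) L, g x = 0 →
        f x ^ (n - 1) * (ν / (f x) ^ 2 - μ) * w x = 0 := by
      intro x hx hgx
      rw [hia x hx, hgx]; simp
    -- g 0 > 0
    have hg0 : 0 < g 0 := by
      by_contra hle
      push_neg at hle
      have hnonpos : ∀ x ∈ Icc (0:ℝ) L, g x ≤ g 0 := fun x hx => hganti h0m hx hx.1
      have hposint : 0 < ∫ x in (0:ℝ)..L,
          -(f x ^ (n - 1) * (ν / (f x) ^ 2 - μ) * w x) := by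
        apply aux_int_pos hL (p := L)
        · exact hacont.neg
        · intro x hx
          rcases lt_or_eq_of_le (le_trans (hnonpos x hx) hle) with h | h
          · linarith [hsign_neg x hx h]
          · rw [hsign_zero x hx h]; simp
        · exact hLm
        · have : g L < 0 := lt_of_lt_of_le hgL0 hle
          linarith [hsign_neg L hLm this]
      rw [intervalIntegral.integral_neg, hint0, neg_zero] at hposint
      exact lt_irrefl _ hposint
    -- g L < 0
    have hgL : g L < 0 := by
      by_contra hle
      push_neg at hle
      have hnonneg : ∀ x ∈ Icc (0:ℝ) L, g L ≤ g x := fun x hx => hganti hx hLm hx.2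
      have hposint : 0 < ∫ x in (0:ℝ)..L,
          f x ^ (n - 1) * (ν / (f x) ^ 2 - μ) * w x := by
        apply aux_int_pos hL (p := 0)
        · exact hacont
        · intro x hx
          rcases lt_or_eq_of_le (le_trans hle (hnonneg x hx)) with h | h
          · exact (hsign_pos x hx h).le
          · rw [hsign_zero x hx h.symm]
        · exact h0m
        · exact hsign_pos 0 h0m (lt_of_le_of_lt hle hgL0)
      rw [hint0] at hposint
      exact lt_irrefl _ hposint
    -- define r₁, r₂
    set S : Set ℝ := Icc 0 L ∩ {x | g x ≤ 0} with hS
    set T : Set ℝ := Icc 0 L ∩ {x | 0 ≤ g x} with hT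
    have hSne : S.Nonempty := ⟨L, hLm, hgL.le⟩
    have hTne : T.Nonempty := ⟨0, h0m, hg0.le⟩
    have hSclosed : IsClosed S := isClosed_Icc.inter (isClosed_le hgc continuous_const)
    have hTclosed : IsClosed T := isClosed_Icc.inter (isClosed_le continuous_const hgc)
    have hSbdd : BddBelow S := ⟨0, fun x hx => hx.1.1⟩
    have hTbdd : BddAbove T := ⟨L, fun x hx => hx.1.2⟩
    set r₁ := sInf S with hr₁
    set r₂ := sSup T with hr₂
    have hr₁S : r₁ ∈ S := hSclosed.csInf_mem hSne hSbdd
    have hr₂T : r₂ ∈ T := hTclosed.csSup_mem hTne hTbdd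
    have hr₁pos : 0 < r₁ := by
      rcases lt_or_eq_of_le hr₁S.1.1 with h | h
      · exact h
      · exfalso; rw [← h] at hr₁S; exact absurd hr₁S.2 (not_le.mpr hg0)
    have hr₂L : r₂ < L := by
      rcases lt_or_eq_of_le hr₂T.1.2 with h | h
      · exact h
      · exfalso; rw [h] at hr₂T; exact absurd hr₂T.2 (not_le.mpr hgL)
    have hbefore : ∀ x ∈ Set.Ico (0:ℝ) r₁, 0 < g x := by
      intro x hx
      by_contra hle
      push_neg at hle
      have hx' : x ∈ Icc (0:ℝ) L := ⟨hx.1, le_trans hx.2.le hr₁S.1.2⟩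
      have : r₁ ≤ x := csInf_le hSbdd ⟨hx', hle⟩
      exact absurd hx.2 (not_lt.mpr this)
    have hafter : ∀ x ∈ Set.Ioc r₂ L, g x < 0 := by
      intro x hx
      by_contra hle
      push_neg at hle
      have hx' : x ∈ Icc (0:ℝ) L := ⟨le_trans hr₂T.1.1 hx.1.le, hx.2⟩
      have : x ≤ r₂ := le_csSup hTbdd ⟨hx', hle⟩
      exact absurd hx.1 (not_lt.mpr this)
    have hr₁₂ : r₁ ≤ r₂ := by
      by_contra hlt
      push_neg at hlt
      set m := (r₁ + r₂) / 2 with hm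
      have hm1 : m < r₁ := by simp only [hm]; linarith
      have hm2 : r₂ < m := by simp only [hm]; linarith
      have h1 : 0 < g m := hbefore m ⟨by linarith [hr₂T.1.1], hm1⟩
      have h2 : g m < 0 := hafter m ⟨hm2, by linarith [hr₁S.1.2]⟩
      linarith
    refine ⟨r₁, r₂, hr₁pos, hr₁₂, hr₂L, ?_, ?_, ?_⟩
    · intro x hx
      have hx' : x ∈ Icc (0:ℝ) L := ⟨hx.1, le_trans hx.2.le hr₁S.1.2⟩
      exact hsign_pos x hx' (hbefore x hx)
    · intro x hx
      have hx' : x ∈ Icc (0:ℝ) L := ⟨le_trans hr₁S.1.1 hx.1, le_trans hx.2 hr₂T.1.2⟩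
      have hgr₁ : g r₁ ≤ 0 := hr₁S.2
      have hgr₂ : 0 ≤ g r₂ := hr₂T.2
      have h1 : g x ≤ 0 := by
        have := hganti hr₁S.1 hx' hx.1
        linarith
      have h2 : 0 ≤ g x := by
        have := hganti hx' hr₂T.1 hx.2
        linarith
      exact hsign_zero x hx' (le_antisymm h1 h2)
    · intro x hx
      have hx' : x ∈ Icc (0:ℝ) L := ⟨le_trans hr₂T.1.1 hx.1.le, hx.2⟩
      exact hsign_neg x hx' (hafter x hx)
end

section
/- Let n ≥ 2 be an integer, L > 0, f : [0,L] → ℝ a smooth positive function, ν ≥ 0, μ > 0, and let w : [0,L] → ℝ be a C² solution of the warped Sturm–Liouville problem with Neumann boundary conditions and with w(L) > 0. Suppose that either (i) ν = 0 and w has exactly one zero in [0,L], or (ii) ν > 0, f is non-decreasing and non-constant on [0,L], and w > 0 on [0,L]. Then w'(r) > 0 for all r ∈ (0,L). -/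
set_option maxHeartbeats 1600000 in
/-- Under the same hypotheses as Statement 0 (warped Sturm–Liouville
problem with Neumann boundary conditions, `w(L) > 0`, and either case (i) or (ii)),
the derivative `w'` is strictly positive on the open interval `(0,L)`. -/
theorem stmt1 (n : ℕ) (hn : 2 ≤ n) (L : ℝ) (hL : 0 < L)
    (f w : ℝ → ℝ) (hf : ContDiff ℝ (⊤ : ℕ∞) f) (hfpos : ∀ r ∈ Set.Icc (0:ℝ) L, 0 < f r)
    (ν μ : ℝ) (hν : 0 ≤ ν) (hμ : 0 < μ)
    (hw : ContDiff ℝ 2 w)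
    (hode : ∀ r ∈ Set.Icc (0:ℝ) L,
      deriv (deriv w) r + ((n : ℝ) - 1) * (deriv f r / f r) * deriv w r
        - ν / (f r) ^ 2 * w r = -μ * w r)
    (hbc0 : deriv w 0 = 0) (hbcL : deriv w L = 0)
    (hwL : 0 < w L)
    (hcase :
      (ν = 0 ∧ ∃! r, r ∈ Set.Icc (0:ℝ) L ∧ w r = 0) ∨
      (0 < ν ∧ MonotoneOn f (Set.Icc (0:ℝ) L) ∧
        (∃ r ∈ Set.Icc (0:ℝ) L, ∃ r' ∈ Set.Icc (0:ℝ) L, f r ≠ f r') ∧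
        ∀ r ∈ Set.Icc (0:ℝ) L, 0 < w r)) :
    ∀ r ∈ Set.Ioo (0:ℝ) L, 0 < deriv w r := by
  obtain ⟨m, rfl⟩ : ∃ m, n = m + 2 := ⟨n - 2, by omega⟩
  -- basic differentiability facts
  have hw1 : ContDiff ℝ 1 (deriv w) :=
    ((contDiff_succ_iff_deriv (n := 1)).mp (by exact_mod_cast hw)).2.2
  have hw' : Differentiable ℝ (deriv w) := hw1.differentiable one_ne_zero
  have hfd : Differentiable ℝ f := hf.differentiable (by simp)
  have hwc : Continuous w := hw.continuous
  -- the auxiliary function g = f^(m+1) * w'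
  set g : ℝ → ℝ := fun r => f r ^ (m + 1) * deriv w r with hg_def
  set G : ℝ → ℝ := fun r => f r ^ (m + 1) * (ν / f r ^ 2 - μ) * w r with hG_def
  have hgd : Differentiable ℝ g := (hfd.pow _).mul hw'
  have key : ∀ r ∈ Set.Icc (0:ℝ) L, HasDerivAt g (G r) r := by
    intro r hr
    have hfr : 0 < f r := hfpos r hr
    have h1 : HasDerivAt (fun x => f x ^ (m + 1))
        ((m + 1 : ℕ) * f r ^ (m + 1 - 1) * deriv f r) r :=
      (hfd r).hasDerivAt.pow (m + 1)
    have h2 : HasDerivAt (deriv w) (deriv (deriv w) r) r := (hw' r).hasDerivAt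
    have h3 := h1.mul h2
    have hODE := hode r hr
    convert h3 using 1
    case e'_4 => exact rfl
    case e'_5 => exact rfl
    case e'_8 => rfl
    have hfr' : f r ≠ 0 := ne_of_gt hfr
    have hD : deriv (deriv w) r = -μ * w r + ν / (f r) ^ 2 * w r
        - ((m + 2 : ℝ) - 1) * (deriv f r / f r) * deriv w r := by
      push_cast at hODE ⊢; linarith
    rw [hD]
    simp only [hG_def, Nat.add_sub_cancel]
    push_cast
    field_simp
    ring
  have hderiv : ∀ r ∈ Set.Icc (0:ℝ) L, deriv g r = G r := fun r hr => (key r hr).deriv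
  have hg0 : g 0 = 0 := by simp [hg_def, hbc0]
  have hgL : g L = 0 := by simp [hg_def, hbcL]
  -- reduce to positivity of g
  suffices hgoal : ∀ x ∈ Set.Ioo (0:ℝ) L, 0 < g x by
    intro x hx
    have h1 := hgoal x hx
    have h2 : 0 < f x ^ (m + 1) :=
      pow_pos (hfpos x ⟨hx.1.le, hx.2.le⟩) _
    by_contra h
    push_neg at h
    have : g x ≤ 0 := mul_nonpos_of_nonneg_of_nonpos h2.le h
    linarith
  rcases hcase with ⟨hν0, r₀, ⟨hr₀mem, hwr₀⟩, huniq⟩ | ⟨hνpos, hfmono, ⟨r1, hr1, r2, hr2, hfne⟩, hwpos⟩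
  · -- case (i): ν = 0
    subst hν0
    have hGf : ∀ r ∈ Set.Icc (0:ℝ) L, G r = f r ^ (m + 1) * (0 - μ) * w r := by
      intro r hr
      simp [hG_def]
    have hr₀L : r₀ < L := by
      rcases lt_or_eq_of_le hr₀mem.2 with h | h
      · exact h
      · exfalso; rw [h] at hwr₀; linarith
    have hpos : ∀ y ∈ Set.Ioc r₀ L, 0 < w y := by
      intro y hy
      rcases lt_trichotomy (w y) 0 with h | h | h
      · exfalso
        have hsub := intermediate_value_Icc hy.2 hwc.continuousOn
        have h0 : (0:ℝ) ∈ Set.Icc (w y) (w L) := ⟨h.le, hwL.le⟩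
        obtain ⟨z, hz, hz0⟩ := hsub h0
        have hzr : z = r₀ := huniq z ⟨⟨le_trans (le_trans hr₀mem.1 hy.1.le) hz.1, hz.2⟩, hz0⟩
        have : r₀ < z := lt_of_lt_of_le hy.1 hz.1
        rw [hzr] at this
        exact lt_irrefl _ this
      · exfalso
        have : y = r₀ := huniq y ⟨⟨le_trans hr₀mem.1 hy.1.le, hy.2⟩, h⟩
        exact absurd this (ne_of_gt hy.1)
      · exact h
    by_cases hsgn : ∀ c ∈ Set.Icc (0:ℝ) L, 0 ≤ w c
    · -- w ≥ 0 everywhere: contradiction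
      exfalso
      have hanti : AntitoneOn g (Set.Icc 0 L) := by
        apply antitoneOn_of_deriv_nonpos (convex_Icc 0 L) hgd.continuous.continuousOn
        · exact fun x _ => (hgd x).differentiableWithinAt
        · intro x hx
          rw [interior_Icc] at hx
          have hxm : x ∈ Set.Icc (0:ℝ) L := ⟨hx.1.le, hx.2.le⟩
          rw [hderiv x hxm, hGf x hxm]
          have h1 : 0 < f x ^ (m + 1) := pow_pos (hfpos x hxm) _
          have h2 : 0 ≤ w x := hsgn x hxm
          nlinarith [mul_nonneg (mul_nonneg h1.le hμ.le) h2]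
      have hzero : ∀ r ∈ Set.Icc (0:ℝ) L, g r = 0 := by
        intro r hr
        have h1 : g r ≤ g 0 := hanti ⟨le_refl 0, hL.le⟩ hr hr.1
        have h2 : g L ≤ g r := hanti hr ⟨hL.le, le_refl L⟩ hr.2
        rw [hg0] at h1; rw [hgL] at h2; linarith
      set ρ := (r₀ + L) / 2 with hρ_def
      have hρ1 : r₀ < ρ := by simp [hρ_def]; linarith
      have hρ2 : ρ < L := by simp [hρ_def]; linarith
      have hρ0 : 0 < ρ := lt_of_le_of_lt hr₀mem.1 hρ1
      have hρm : ρ ∈ Set.Icc (0:ℝ) L := ⟨hρ0.le, hρ2.le⟩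
      have hev : g =ᶠ[nhds ρ] fun _ => (0:ℝ) := by
        filter_upwards [Ioo_mem_nhds hρ0 hρ2] with x hx
        exact hzero x ⟨hx.1.le, hx.2.le⟩
      have hd0 : deriv g ρ = 0 := by rw [hev.deriv_eq]; simp
      rw [hderiv ρ hρm, hGf ρ hρm] at hd0
      have h1 : 0 < f ρ ^ (m + 1) := pow_pos (hfpos ρ hρm) _
      have h2 : 0 < w ρ := hpos ρ ⟨hρ1, hρ2.le⟩
      nlinarith [mul_pos (mul_pos h1 hμ) h2]
    · push_neg at hsgn
      obtain ⟨c, hcm, hc⟩ := hsgn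
      have hcr₀ : c < r₀ := by
        rcases lt_trichotomy c r₀ with h | h | h
        · exact h
        · exfalso; rw [h] at hc; linarith
        · exfalso; have := hpos c ⟨h, hcm.2⟩; linarith
      have hr₀pos : 0 < r₀ := lt_of_le_of_lt hcm.1 hcr₀
      have hneg : ∀ y ∈ Set.Ico (0:ℝ) r₀, w y < 0 := by
        intro y hy
        rcases lt_trichotomy (w y) 0 with h | h | h
        · exact h
        · exfalso
          exact absurd (huniq y ⟨⟨hy.1, le_trans hy.2.le hr₀mem.2⟩, h⟩) (ne_of_lt hy.2)
        · exfalso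
          rcases le_total y c with hyc | hyc
          · have hsub := intermediate_value_Icc' hyc hwc.continuousOn
            obtain ⟨z, hz, hz0⟩ := hsub ⟨hc.le, h.le⟩
            have hzr : z = r₀ := huniq z
              ⟨⟨le_trans hy.1 hz.1, le_trans (le_trans hz.2 hcr₀.le) hr₀mem.2⟩, hz0⟩
            have : z < r₀ := lt_of_le_of_lt hz.2 hcr₀
            linarith [hzr ▸ this]
          · have hsub := intermediate_value_Icc hyc hwc.continuousOn
            obtain ⟨z, hz, hz0⟩ := hsub ⟨hc.le, h.le⟩
            have hzr : z = r₀ := huniq z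
              ⟨⟨le_trans hcm.1 hz.1, le_trans (le_trans hz.2 hy.2.le) hr₀mem.2⟩, hz0⟩
            have : z < r₀ := lt_of_le_of_lt hz.2 hy.2
            linarith [hzr ▸ this]
      have hmono : StrictMonoOn g (Set.Icc 0 r₀) := by
        apply strictMonoOn_of_deriv_pos (convex_Icc 0 r₀) hgd.continuous.continuousOn
        intro x hx
        rw [interior_Icc] at hx
        have hxm : x ∈ Set.Icc (0:ℝ) L := ⟨hx.1.le, le_trans hx.2.le hr₀mem.2⟩
        rw [hderiv x hxm, hGf x hxm]
        have h1 : 0 < f x ^ (m + 1) := pow_pos (hfpos x hxm) _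
        have h2 : w x < 0 := hneg x ⟨hx.1.le, hx.2⟩
        nlinarith [mul_pos (mul_pos h1 hμ) (neg_pos.mpr h2)]
      have hanti : StrictAntiOn g (Set.Icc r₀ L) := by
        apply strictAntiOn_of_deriv_neg (convex_Icc r₀ L) hgd.continuous.continuousOn
        intro x hx
        rw [interior_Icc] at hx
        have hxm : x ∈ Set.Icc (0:ℝ) L := ⟨le_trans hr₀mem.1 hx.1.le, hx.2.le⟩
        rw [hderiv x hxm, hGf x hxm]
        have h1 : 0 < f x ^ (m + 1) := pow_pos (hfpos x hxm) _
        have h2 : 0 < w x := hpos x ⟨hx.1, hx.2.le⟩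
        nlinarith [mul_pos (mul_pos h1 hμ) h2]
      intro x hx
      rcases le_or_gt x r₀ with h | h
      · have := hmono ⟨le_refl 0, hr₀pos.le⟩ ⟨hx.1.le, h⟩ hx.1
        rw [hg0] at this; exact this
      · have := hanti ⟨h.le, hx.2.le⟩ ⟨hr₀mem.2, le_refl L⟩ hx.2
        rw [hgL] at this; exact this
  · -- case (ii): ν > 0
    set s : ℝ → ℝ := fun r => ν / f r ^ 2 - μ with hs_def
    have hs_anti : ∀ a ∈ Set.Icc (0:ℝ) L, ∀ b ∈ Set.Icc (0:ℝ) L, a ≤ b → s b ≤ s a := by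
      intro a ha b hb hab
      have h1 : 0 < f a := hfpos a ha
      have h2 : 0 < f b := hfpos b hb
      have h3 : f a ≤ f b := hfmono ha hb hab
      have h4 : f a ^ 2 ≤ f b ^ 2 := by nlinarith
      have : ν / f b ^ 2 ≤ ν / f a ^ 2 :=
        div_le_div_of_nonneg_left hν (by positivity) h4
      simp only [hs_def]; linarith
    have hGs : ∀ r, G r = f r ^ (m + 1) * s r * w r := fun r => rfl
    intro x hx
    have hxm : x ∈ Set.Icc (0:ℝ) L := ⟨hx.1.le, hx.2.le⟩
    rcases lt_trichotomy (s x) 0 with hsx | hsx | hsx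
    · -- g strictly decreasing on [x, L]
      have hanti : StrictAntiOn g (Set.Icc x L) := by
        apply strictAntiOn_of_deriv_neg (convex_Icc x L) hgd.continuous.continuousOn
        intro y hy
        rw [interior_Icc] at hy
        have hym : y ∈ Set.Icc (0:ℝ) L := ⟨le_trans hx.1.le hy.1.le, hy.2.le⟩
        rw [hderiv y hym, hGs y]
        have h1 : 0 < f y ^ (m + 1) := pow_pos (hfpos y hym) _
        have h2 : 0 < w y := hwpos y hym
        have h3 : s y ≤ s x := hs_anti x hxm y hym hy.1.le
        nlinarith [mul_le_mul_of_nonneg_left h3 (mul_pos h1 h2).le,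
          mul_neg_of_pos_of_neg (mul_pos h1 h2) hsx]
      have := hanti ⟨le_refl x, hx.2.le⟩ ⟨hx.2.le, le_refl L⟩ hx.2
      rw [hgL] at this; exact this
    · -- s x = 0 : the delicate case
      have hmono : MonotoneOn g (Set.Icc 0 x) := by
        apply monotoneOn_of_deriv_nonneg (convex_Icc 0 x) hgd.continuous.continuousOn
        · exact fun y _ => (hgd y).differentiableWithinAt
        · intro y hy
          rw [interior_Icc] at hy
          have hym : y ∈ Set.Icc (0:ℝ) L := ⟨hy.1.le, le_trans hy.2.le hx.2.le⟩
          rw [hderiv y hym, hGs y]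
          have h1 : 0 < f y ^ (m + 1) := pow_pos (hfpos y hym) _
          have h2 : 0 < w y := hwpos y hym
          have h3 : s x ≤ s y := hs_anti y hym x hxm hy.2.le
          nlinarith [mul_nonneg (mul_pos h1 h2).le (show (0:ℝ) ≤ s y by linarith)]
      have hanti : AntitoneOn g (Set.Icc x L) := by
        apply antitoneOn_of_deriv_nonpos (convex_Icc x L) hgd.continuous.continuousOn
        · exact fun y _ => (hgd y).differentiableWithinAt
        · intro y hy
          rw [interior_Icc] at hy
          have hym : y ∈ Set.Icc (0:ℝ) L := ⟨le_trans hx.1.le hy.1.le, hy.2.le⟩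
          rw [hderiv y hym, hGs y]
          have h1 : 0 < f y ^ (m + 1) := pow_pos (hfpos y hym) _
          have h2 : 0 < w y := hwpos y hym
          have h3 : s y ≤ s x := hs_anti x hxm y hym hy.1.le
          nlinarith [mul_nonneg (mul_pos h1 h2).le (show (0:ℝ) ≤ -s y by linarith)]
      have hgx1 : 0 ≤ g x := by
        have := hmono ⟨le_refl 0, hx.1.le⟩ ⟨hx.1.le, le_refl x⟩ hx.1.le
        rw [hg0] at this; exact this
      rcases lt_or_eq_of_le hgx1 with h | h
      · exact h
      · -- g x = 0 forces f constant, contradiction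
        exfalso
        have hgxL : 0 ≤ g x := hgx1
        have hzero : ∀ r ∈ Set.Icc (0:ℝ) L, g r = 0 := by
          intro r hr
          rcases le_total r x with hrx | hrx
          · have h1 : g r ≤ g x := hmono ⟨hr.1, hrx⟩ ⟨hx.1.le, le_refl x⟩ hrx
            have h2 : g 0 ≤ g r := hmono ⟨le_refl 0, hx.1.le⟩ ⟨hr.1, hrx⟩ hr.1
            rw [hg0] at h2; rw [← h] at h1; linarith
          · have h1 : g r ≤ g x := hanti ⟨le_refl x, hx.2.le⟩ ⟨hrx, hr.2⟩ hrx
            have h2 : g L ≤ g r := hanti ⟨hrx, hr.2⟩ ⟨hx.2.le, le_refl L⟩ hr.2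
            rw [hgL] at h2; rw [← h] at h1; linarith
        have hsq : ∀ r ∈ Set.Ioo (0:ℝ) L, f r ^ 2 = ν / μ := by
          intro r hr
          have hrm : r ∈ Set.Icc (0:ℝ) L := ⟨hr.1.le, hr.2.le⟩
          have hev : g =ᶠ[nhds r] fun _ => (0:ℝ) := by
            filter_upwards [Ioo_mem_nhds hr.1 hr.2] with y hy
            exact hzero y ⟨hy.1.le, hy.2.le⟩
          have hd0 : deriv g r = 0 := by rw [hev.deriv_eq]; simp
          rw [hderiv r hrm, hGs r] at hd0
          have h1 : 0 < f r ^ (m + 1) := pow_pos (hfpos r hrm) _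
          have h2 : 0 < w r := hwpos r hrm
          have hsr : s r = 0 := by
            rcases mul_eq_zero.mp hd0 with h3 | h3
            · rcases mul_eq_zero.mp h3 with h4 | h4
              · linarith
              · exact h4
            · linarith
          have hf2 : 0 < f r ^ 2 := pow_pos (hfpos r hrm) _
          have h5 : ν / f r ^ 2 = μ := by simp only [hs_def] at hsr; linarith
          rw [div_eq_iff (ne_of_gt hf2)] at h5
          rw [eq_div_iff (ne_of_gt hμ)]
          nlinarith [h5]
        have hconst : ∀ r ∈ Set.Icc (0:ℝ) L, f r ^ 2 = ν / μ := by
          have hsubset : Set.Icc (0:ℝ) L ⊆ {r | f r ^ 2 = ν / μ} := by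
            rw [← closure_Ioo hL.ne]
            apply closure_minimal
            · exact fun r hr => hsq r hr
            · exact isClosed_eq ((hf.continuous.pow 2)) continuous_const
          exact fun r hr => hsubset hr
        have h1 := hconst r1 hr1
        have h2 := hconst r2 hr2
        have hp1 : 0 < f r1 := hfpos r1 hr1
        have hp2 : 0 < f r2 := hfpos r2 hr2
        have : (f r1 - f r2) * (f r1 + f r2) = 0 := by nlinarith
        rcases mul_eq_zero.mp this with h3 | h3
        · exact hfne (by linarith)
        · linarith
    · -- g strictly increasing on [0, x]
      have hmono : StrictMonoOn g (Set.Icc 0 x) := by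
        apply strictMonoOn_of_deriv_pos (convex_Icc 0 x) hgd.continuous.continuousOn
        intro y hy
        rw [interior_Icc] at hy
        have hym : y ∈ Set.Icc (0:ℝ) L := ⟨hy.1.le, le_trans hy.2.le hx.2.le⟩
        rw [hderiv y hym, hGs y]
        have h1 : 0 < f y ^ (m + 1) := pow_pos (hfpos y hym) _
        have h2 : 0 < w y := hwpos y hym
        have h3 : s x ≤ s y := hs_anti y hym x hxm hy.2.le
        nlinarith [mul_pos (mul_pos h1 h2) (show (0:ℝ) < s y by linarith)]
      have := hmono ⟨le_refl 0, hx.1.le⟩ ⟨hx.1.le, le_refl x⟩ hx.1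
      rw [hg0] at this; exact this
end

section
/- Let n ≥ 2 be an integer, L > 0, f : [0,L] → ℝ a smooth positive function, and μ > 0. Let w : [0,L] → ℝ be a C² function satisfying w''(r) + (n−1)·(f'(r)/f(r))·w'(r) = −μ·w(r) for all r ∈ [0,L], with the mixed boundary conditions w(0) = 0 and w'(L) = 0. If w ≥ 0 on [0,L] and w is not identically zero, then w'(r) > 0 for all r ∈ (0,L); in particular, w' has no zeros in the open interval (0,L). -/
/-- Let `n ≥ 2`, `L > 0`, `f` smooth and positive on `[0,L]`, `μ > 0`,
and let `w` be a `C²` solution of `w'' + (n-1)(f'/f) w' = -μ w` on `[0,L]` with mixed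
boundary conditions `w(0) = 0`, `w'(L) = 0`.  If `w ≥ 0` on `[0,L]` and `w` is not
identically zero there, then `w' > 0` on `(0,L)`; in particular `w'` has no zeros in
the open interval `(0,L)`. -/
theorem stmt2 (n : ℕ) (hn : 2 ≤ n) (L : ℝ) (hL : 0 < L)
    (f w : ℝ → ℝ) (hf : ContDiff ℝ (⊤ : ℕ∞) f) (hfpos : ∀ r ∈ Set.Icc (0:ℝ) L, 0 < f r)
    (μ : ℝ) (hμ : 0 < μ)
    (hw : ContDiff ℝ 2 w)
    (hode : ∀ r ∈ Set.Icc (0:ℝ) L,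
      deriv (deriv w) r + ((n : ℝ) - 1) * (deriv f r / f r) * deriv w r = -μ * w r)
    (hbc0 : w 0 = 0) (hbcL : deriv w L = 0)
    (hnonneg : ∀ r ∈ Set.Icc (0:ℝ) L, 0 ≤ w r)
    (hnz : ∃ r ∈ Set.Icc (0:ℝ) L, w r ≠ 0) :
    (∀ r ∈ Set.Ioo (0:ℝ) L, 0 < deriv w r) ∧
      ∀ r ∈ Set.Ioo (0:ℝ) L, deriv w r ≠ 0 := by
  obtain ⟨m, rfl⟩ : ∃ m, n = m + 2 := ⟨n - 2, by omega⟩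
  set I := Set.Icc (0:ℝ) L with hI
  have hwd : Differentiable ℝ w := hw.differentiable (by norm_num)
  have hw1 : ContDiff ℝ 1 (deriv w) := by
    have h2 : ContDiff ℝ (1 + 1) w := by
      exact hw
    exact (contDiff_succ_iff_deriv.mp h2).2.2
  have hdw : Differentiable ℝ (deriv w) := hw1.differentiable (by norm_num)
  have hfd : Differentiable ℝ f := hf.differentiable (by simp)
  set g : ℝ → ℝ := fun r => f r ^ (m + 1) * deriv w r with hg
  have hgd : ∀ r : ℝ, HasDerivAt g
      ((↑(m + 1) * f r ^ m * deriv f r) * deriv w r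
        + f r ^ (m + 1) * deriv (deriv w) r) r := by
    intro r
    exact (by simpa using (((hfd r).hasDerivAt.pow (m + 1)).mul (hdw r).hasDerivAt) :
      HasDerivAt (f ^ (m + 1) * deriv w) ((↑(m + 1) * f r ^ m * deriv f r) * deriv w r
        + f r ^ (m + 1) * deriv (deriv w) r) r)
  have hgderiv : ∀ r ∈ I, deriv g r = -(μ * (f r ^ (m + 1) * w r)) := by
    intro r hr
    have hfr : f r ≠ 0 := (hfpos r hr).ne'
    have h := hode r hr
    rw [(hgd r).deriv]
    have hww : deriv (deriv w) r
        = -μ * w r - ((m : ℝ) + 1) * (deriv f r / f r) * deriv w r := by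
      push_cast at h
      linarith
    rw [hww]
    push_cast
    field_simp
    ring
  have hgc : Continuous g := ((hfd.continuous).pow (m + 1)).mul hdw.continuous
  have hganti : AntitoneOn g I := by
    apply antitoneOn_of_deriv_nonpos (convex_Icc 0 L) hgc.continuousOn
      (fun x _ => (hgd x).differentiableAt.differentiableWithinAt)
    intro x hx
    rw [interior_Icc] at hx
    have hxI : x ∈ I := Set.Ioo_subset_Icc_self hx
    rw [hgderiv x hxI]
    have h1 : 0 ≤ w x := hnonneg x hxI
    have h2 : 0 < f x := hfpos x hxI
    have : 0 ≤ μ * (f x ^ (m + 1) * w x) :=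
      mul_nonneg hμ.le (mul_nonneg (pow_nonneg h2.le _) h1)
    linarith
  have hLI : L ∈ I := Set.right_mem_Icc.mpr hL.le
  have hgL : g L = 0 := by simp [hg, hbcL]
  have hdwnn : ∀ r ∈ I, 0 ≤ deriv w r := by
    intro r hr
    have h1 : g L ≤ g r := hganti hr hLI hr.2
    rw [hgL] at h1
    have hf' : 0 < f r ^ (m + 1) := pow_pos (hfpos r hr) _
    have h1' : 0 ≤ f r ^ (m + 1) * deriv w r := h1
    nlinarith [h1', hf']
  have hwmono : MonotoneOn w I := by
    apply monotoneOn_of_deriv_nonneg (convex_Icc 0 L) hwd.continuous.continuousOn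
      (fun x _ => (hwd x).differentiableWithinAt)
    intro x hx
    rw [interior_Icc] at hx
    exact hdwnn x (Set.Ioo_subset_Icc_self hx)
  have key : ∀ r ∈ Set.Ioo (0:ℝ) L, 0 < deriv w r := by
    intro r0 hr0
    by_contra hcon
    have hr0I : r0 ∈ I := Set.Ioo_subset_Icc_self hr0
    have h0 : deriv w r0 = 0 := le_antisymm (not_lt.mp hcon) (hdwnn r0 hr0I)
    have hg0 : g r0 = 0 := by simp [hg, h0]
    have hzero : ∀ s ∈ Set.Icc r0 L, deriv w s = 0 := by
      intro s hs
      have hsI : s ∈ I := ⟨le_trans hr0.1.le hs.1, hs.2⟩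
      have h1 : g s ≤ g r0 := hganti hr0I hsI hs.1
      have h2 : g L ≤ g s := hganti hsI hLI hs.2
      rw [hg0] at h1
      rw [hgL] at h2
      have hgs : f s ^ (m + 1) * deriv w s = 0 := le_antisymm h1 h2
      have hf' : (0:ℝ) < f s ^ (m + 1) := pow_pos (hfpos s hsI) _
      rcases mul_eq_zero.mp hgs with h | h
      · exact absurd h hf'.ne'
      · exact h
    set s := (r0 + L) / 2 with hsdef
    have hsmem : s ∈ Set.Ioo r0 L := ⟨by simp only [hsdef]; linarith [hr0.2], by
      simp only [hsdef]; linarith [hr0.2]⟩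
    have hsI : s ∈ I := ⟨le_trans hr0.1.le hsmem.1.le, hsmem.2.le⟩
    have hdd : deriv (deriv w) s = 0 := by
      have hev : deriv w =ᶠ[nhds s] fun _ => (0:ℝ) := by
        filter_upwards [Ioo_mem_nhds hsmem.1 hsmem.2] with x hx
        exact hzero x (Set.Ioo_subset_Icc_self hx)
      rw [hev.deriv_eq]
      simp
    have hws : w s = 0 := by
      have h := hode s hsI
      rw [hdd, hzero s (Set.Ioo_subset_Icc_self hsmem)] at h
      simp at h
      rcases h with h | h
      · exact absurd h hμ.ne'
      · exact h
    have hwanti : AntitoneOn w (Set.Icc r0 L) := by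
      apply antitoneOn_of_deriv_nonpos (convex_Icc r0 L) hwd.continuous.continuousOn
        (fun x _ => (hwd x).differentiableWithinAt)
      intro x hx
      rw [interior_Icc] at hx
      rw [hzero x (Set.Ioo_subset_Icc_self hx)]
    obtain ⟨r, hrI, hrne⟩ := hnz
    apply hrne
    rcases le_total r s with hle | hle
    · have h1 := hwmono hrI hsI hle
      have h2 := hnonneg r hrI
      rw [hws] at h1
      linarith
    · have hrIcc : r ∈ Set.Icc r0 L := ⟨le_trans hsmem.1.le hle, hrI.2⟩
      have h1 := hwanti ⟨hsmem.1.le, hsmem.2.le⟩ hrIcc hle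
      have h2 := hnonneg r hrI
      rw [hws] at h1
      linarith
  exact ⟨key, fun r hr => (key r hr).ne'⟩
end

section
/- For all γ, γ' with 0 < γ ≤ γ' and all z ≥ 0, I_{γ'}(z) ≤ I_γ(z); that is, for fixed z ≥ 0 the modified Bessel function of the first kind is non-increasing in its order. -/
set_option maxHeartbeats 1000000

open MeasureTheory Set Real
open scoped ENNReal

namespace Stmt7Aux

lemma meas_f (a z : ℝ) :
    Measurable fun τ : ℝ => (1 - τ ^ 2) ^ (a - 1/2) * Real.exp (z * τ) := by
  fun_prop

lemma rpow_bnd {y e : ℝ} (h1 : 1/2 ≤ y) (h2 : y ≤ 2) : y ^ e ≤ 2 ^ |e| := by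
  have hy : (0:ℝ) < y := by linarith
  rcases le_total 0 e with he | he
  · rw [abs_of_nonneg he]
    exact Real.rpow_le_rpow hy.le h2 he
  · rw [abs_of_nonpos he]
    calc y ^ e ≤ (1/2 : ℝ) ^ e := Real.rpow_le_rpow_of_nonpos one_half_pos h1 he
      _ = 2 ^ (-e) := by
          rw [Real.rpow_neg (by norm_num), ← Real.inv_rpow (by norm_num)]
          norm_num

lemma int_left {r : ℝ} (h : -1 < r) :
    IntegrableOn (fun x : ℝ => (1 + x) ^ r) (Ioo (-1) 1) := by
  have h1 : IntervalIntegrable (fun x : ℝ => x ^ r) volume 0 2 := intervalIntegral.intervalIntegrable_rpow' h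
  have h2 := h1.comp_sub_right (-1)
  norm_num at h2
  have h3 : IntervalIntegrable (fun x : ℝ => (1 + x) ^ r) volume (-1) 1 := by
    simpa [add_comm] using h2
  exact ((intervalIntegrable_iff_integrableOn_Ioo_of_le (by norm_num)).1 h3)

lemma int_right {r : ℝ} (h : -1 < r) :
    IntegrableOn (fun x : ℝ => (1 - x) ^ r) (Ioo (-1) 1) := by
  have h1 : IntervalIntegrable (fun x : ℝ => x ^ r) volume 0 2 := intervalIntegral.intervalIntegrable_rpow' h
  have h2 := h1.comp_sub_left 1
  norm_num at h2
  exact ((intervalIntegrable_iff_integrableOn_Ioo_of_le (by norm_num)).1 h2.symm)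

lemma integrableOn_f (a z : ℝ) (ha : 0 < a) :
    IntegrableOn (fun τ : ℝ => (1 - τ ^ 2) ^ (a - 1/2) * Real.exp (z * τ)) (Ioo (-1) 1) := by
  have hr : (-1 : ℝ) < a - 1/2 := by linarith
  set C : ℝ := 2 ^ |a - 1/2| with hC
  have hC0 : (0:ℝ) ≤ C := Real.rpow_nonneg (by norm_num) _
  have hg : IntegrableOn
      (fun τ : ℝ => C * Real.exp |z| * ((1 + τ) ^ (a - 1/2) + (1 - τ) ^ (a - 1/2)))
      (Ioo (-1) 1) := (((int_left hr).add (int_right hr)).const_mul _)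
  refine Integrable.mono hg ((meas_f a z).aestronglyMeasurable) ?_
  rw [ae_restrict_iff' measurableSet_Ioo]
  refine Filter.Eventually.of_forall (fun τ hτ => ?_)
  obtain ⟨h1, h2⟩ := hτ
  have hp1 : (0:ℝ) < 1 + τ := by linarith
  have hp2 : (0:ℝ) < 1 - τ := by linarith
  have hsum : (0:ℝ) ≤ (1 + τ) ^ (a - 1/2) + (1 - τ) ^ (a - 1/2) :=
    add_nonneg (Real.rpow_nonneg hp1.le _) (Real.rpow_nonneg hp2.le _)
  have hbound : (1 - τ ^ 2) ^ (a - 1/2) ≤ C * ((1 + τ) ^ (a - 1/2) + (1 - τ) ^ (a - 1/2)) := by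
    rcases le_total τ 0 with h | h
    · have hsq : (1 : ℝ) - τ ^ 2 = (1 + τ) * (1 - τ) := by ring
      rw [hsq, Real.mul_rpow hp1.le hp2.le]
      calc (1 + τ) ^ (a - 1/2) * (1 - τ) ^ (a - 1/2)
          ≤ (1 + τ) ^ (a - 1/2) * C :=
            mul_le_mul_of_nonneg_left (rpow_bnd (by linarith) (by linarith))
              (Real.rpow_nonneg hp1.le _)
        _ ≤ C * ((1 + τ) ^ (a - 1/2) + (1 - τ) ^ (a - 1/2)) := by
            rw [mul_comm]
            exact mul_le_mul_of_nonneg_left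
              (le_add_of_nonneg_right (Real.rpow_nonneg hp2.le _)) hC0
    · have hsq : (1 : ℝ) - τ ^ 2 = (1 - τ) * (1 + τ) := by ring
      rw [hsq, Real.mul_rpow hp2.le hp1.le]
      calc (1 - τ) ^ (a - 1/2) * (1 + τ) ^ (a - 1/2)
          ≤ (1 - τ) ^ (a - 1/2) * C :=
            mul_le_mul_of_nonneg_left (rpow_bnd (by linarith) (by linarith))
              (Real.rpow_nonneg hp2.le _)
        _ ≤ C * ((1 + τ) ^ (a - 1/2) + (1 - τ) ^ (a - 1/2)) := by
            rw [mul_comm]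
            exact mul_le_mul_of_nonneg_left
              (le_add_of_nonneg_left (Real.rpow_nonneg hp1.le _)) hC0
  have hexp : Real.exp (z * τ) ≤ Real.exp |z| := by
    refine Real.exp_le_exp.2 ?_
    calc z * τ ≤ |z * τ| := le_abs_self _
      _ = |z| * |τ| := abs_mul _ _
      _ ≤ |z| * 1 := mul_le_mul_of_nonneg_left (abs_le.2 ⟨h1.le, h2.le⟩) (abs_nonneg _)
      _ = |z| := mul_one _
  rw [Real.norm_eq_abs, Real.norm_eq_abs,
    abs_of_nonneg (mul_nonneg (Real.rpow_nonneg (by nlinarith) _) (Real.exp_nonneg _)),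
    abs_of_nonneg (mul_nonneg (mul_nonneg hC0 (Real.exp_nonneg _)) hsum)]
  calc (1 - τ ^ 2) ^ (a - 1/2) * Real.exp (z * τ)
      ≤ (C * ((1 + τ) ^ (a - 1/2) + (1 - τ) ^ (a - 1/2))) * Real.exp |z| :=
        mul_le_mul hbound hexp (Real.exp_nonneg _) (mul_nonneg hC0 hsum)
    _ = C * Real.exp |z| * ((1 + τ) ^ (a - 1/2) + (1 - τ) ^ (a - 1/2)) := by ring

lemma integrableOn_beta {s t : ℝ} (hs : 0 < s) (ht : 0 < t) :
    IntegrableOn (fun p : ℝ => p ^ (s - 1) * (1 - p) ^ (t - 1)) (Ioo 0 1) := by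
  have hs1 : (-1:ℝ) < s - 1 := by linarith
  have ht1 : (-1:ℝ) < t - 1 := by linarith
  set C : ℝ := 2 ^ |s - 1| + 2 ^ |t - 1| with hC
  have hC0 : (0:ℝ) ≤ C :=
    add_nonneg (Real.rpow_nonneg (by norm_num) _) (Real.rpow_nonneg (by norm_num) _)
  have hil : IntegrableOn (fun p : ℝ => p ^ (s - 1)) (Ioo 0 1) :=
    (intervalIntegral.integrableOn_Ioo_rpow_iff one_pos).2 hs1
  have hir : IntegrableOn (fun p : ℝ => (1 - p) ^ (t - 1)) (Ioo 0 1) := by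
    have h1 : IntervalIntegrable (fun x : ℝ => x ^ (t-1)) volume 0 1 :=
      intervalIntegral.intervalIntegrable_rpow' ht1
    have h2 := h1.comp_sub_left 1
    norm_num at h2
    exact ((intervalIntegrable_iff_integrableOn_Ioo_of_le (by norm_num)).1 h2.symm)
  have hg : IntegrableOn (fun p : ℝ => C * (p ^ (s - 1) + (1 - p) ^ (t - 1))) (Ioo 0 1) :=
    ((hil.add hir).const_mul _)
  have hmeas : Measurable fun p : ℝ => p ^ (s - 1) * (1 - p) ^ (t - 1) := by fun_prop
  refine Integrable.mono hg hmeas.aestronglyMeasurable ?_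
  rw [ae_restrict_iff' measurableSet_Ioo]
  refine Filter.Eventually.of_forall (fun p hp => ?_)
  obtain ⟨h1, h2⟩ := hp
  have hp2 : (0:ℝ) < 1 - p := by linarith
  have hsum : (0:ℝ) ≤ p ^ (s - 1) + (1 - p) ^ (t - 1) :=
    add_nonneg (Real.rpow_nonneg h1.le _) (Real.rpow_nonneg hp2.le _)
  have hbound : p ^ (s - 1) * (1 - p) ^ (t - 1) ≤ C * (p ^ (s - 1) + (1 - p) ^ (t - 1)) := by
    rcases le_total p (1/2) with h | h
    · calc p ^ (s - 1) * (1 - p) ^ (t - 1)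
          ≤ p ^ (s - 1) * (2 ^ |t - 1|) :=
            mul_le_mul_of_nonneg_left (rpow_bnd (by linarith) (by linarith))
              (Real.rpow_nonneg h1.le _)
        _ ≤ C * (p ^ (s - 1) + (1 - p) ^ (t - 1)) := by
            rw [mul_comm]
            refine mul_le_mul (le_trans (le_add_of_nonneg_left
              (Real.rpow_nonneg (by norm_num : (0:ℝ) ≤ 2) _)) (le_refl C)) ?_
              (Real.rpow_nonneg h1.le _) hC0
            exact le_add_of_nonneg_right (Real.rpow_nonneg hp2.le _)
    · calc p ^ (s - 1) * (1 - p) ^ (t - 1)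
          ≤ (2 ^ |s - 1|) * (1 - p) ^ (t - 1) :=
            mul_le_mul_of_nonneg_right (rpow_bnd (by linarith) (by linarith))
              (Real.rpow_nonneg hp2.le _)
        _ ≤ C * (p ^ (s - 1) + (1 - p) ^ (t - 1)) := by
            refine mul_le_mul (le_add_of_nonneg_right
              (Real.rpow_nonneg (by norm_num : (0:ℝ) ≤ 2) _)) ?_
              (Real.rpow_nonneg hp2.le _) hC0
            exact le_add_of_nonneg_left (Real.rpow_nonneg h1.le _)
  rw [Real.norm_eq_abs, Real.norm_eq_abs,
    abs_of_nonneg (mul_nonneg (Real.rpow_nonneg h1.le _) (Real.rpow_nonneg hp2.le _)),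
    abs_of_nonneg (mul_nonneg hC0 hsum)]
  exact hbound

lemma betaIntegral_real {s t : ℝ} (hs : 0 < s) (ht : 0 < t) :
    ∫ p in Ioo (0:ℝ) 1, p ^ (s - 1) * (1 - p) ^ (t - 1)
      = Real.Gamma s * Real.Gamma t / Real.Gamma (s + t) := by
  have hst : (0:ℝ) < s + t := by linarith
  have hbeta : Complex.betaIntegral (s:ℂ) (t:ℂ)
      = ((∫ p in (0:ℝ)..1, p ^ (s - 1) * (1 - p) ^ (t - 1) : ℝ) : ℂ) := by
    rw [Complex.betaIntegral, ← intervalIntegral.integral_ofReal]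
    refine intervalIntegral.integral_congr (fun x hx => ?_)
    have hx' : x ∈ Icc (0:ℝ) 1 := by rwa [uIcc_of_le (by norm_num)] at hx
    rw [show ((s:ℂ) - 1) = ((s - 1 : ℝ) : ℂ) by push_cast; ring,
       show ((t:ℂ) - 1) = ((t - 1 : ℝ) : ℂ) by push_cast; ring,
       show (1 - (x:ℂ)) = ((1 - x : ℝ) : ℂ) by push_cast; ring,
       ← Complex.ofReal_cpow hx'.1, ← Complex.ofReal_cpow (by linarith [hx'.2] : (0:ℝ) ≤ 1 - x),
       ← Complex.ofReal_mul]
  have h := Complex.Gamma_mul_Gamma_eq_betaIntegral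
      (s := (s:ℂ)) (t := (t:ℂ)) (by simpa using hs) (by simpa using ht)
  rw [hbeta, show ((s:ℂ) + (t:ℂ)) = ((s + t : ℝ) : ℂ) by push_cast; ring,
    Complex.Gamma_ofReal, Complex.Gamma_ofReal, Complex.Gamma_ofReal,
    ← Complex.ofReal_mul, ← Complex.ofReal_mul, Complex.ofReal_inj] at h
  have hIoo : ∫ p in (0:ℝ)..1, p ^ (s - 1) * (1 - p) ^ (t - 1)
      = ∫ p in Ioo (0:ℝ) 1, p ^ (s - 1) * (1 - p) ^ (t - 1) := by
    rw [intervalIntegral.integral_of_le (by norm_num : (0:ℝ) ≤ 1),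
      integral_Ioc_eq_integral_Ioo]
  rw [← hIoo, eq_div_iff (Real.Gamma_pos_of_pos hst).ne', mul_comm]
  exact h.symm

lemma F_ofReal_aux {a z : ℝ} (ha : 0 < a)
    (hint : IntegrableOn (fun τ : ℝ => (1 - τ ^ 2) ^ (a - 1/2) * Real.exp (z * τ)) (Ioo (-1) 1)) :
    ∫⁻ τ in Ioo (-1:ℝ) 1, ENNReal.ofReal ((1 - τ ^ 2) ^ (a - 1/2) * Real.exp (z * τ))
      = ENNReal.ofReal (∫ τ in (-1:ℝ)..1, (1 - τ ^ 2) ^ (a - 1/2) * Real.exp (z * τ)) := by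
  rw [intervalIntegral.integral_of_le (by norm_num : (-1:ℝ) ≤ 1), integral_Ioc_eq_integral_Ioo,
    ofReal_integral_eq_lintegral_ofReal hint ?_]
  rw [Filter.EventuallyLE, ae_restrict_iff' measurableSet_Ioo]
  refine Filter.Eventually.of_forall (fun τ hτ => ?_)
  have : (0:ℝ) < 1 - τ ^ 2 := by nlinarith [hτ.1, hτ.2]
  exact mul_nonneg (Real.rpow_nonneg this.le _) (Real.exp_nonneg _)

theorem lintegral_image_eq_lintegral_abs_deriv_mul' {s : Set ℝ} {f f' : ℝ → ℝ}
    (hs : MeasurableSet s) (hf' : ∀ x ∈ s, HasDerivWithinAt f (f' x) s x)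
    (hf : Set.InjOn f s) (g : ℝ → ℝ≥0∞) :
    ∫⁻ x in f '' s, g x = ∫⁻ x in s, ENNReal.ofReal |f' x| * g (f x) := by
  simpa only [ContinuousLinearMap.det_toSpanSingleton] using
    lintegral_image_eq_lintegral_abs_det_fderiv_mul volume hs
      (fun x hx => (hf' x hx).hasFDerivWithinAt) hf g

lemma step_gamma {δ z : ℝ} (hδ : 0 < δ) (hz : 0 < z) (c : ℝ) :
    ∫⁻ u in Ioo (0:ℝ) c, ENNReal.ofReal (z ^ δ * u ^ (δ - 1) * Real.exp (-(z * u)))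
      ≤ ENNReal.ofReal (Real.Gamma δ) := by
  have hΓ : ENNReal.ofReal (Real.Gamma δ)
      = ∫⁻ t in Ioi (0:ℝ), ENNReal.ofReal (Real.exp (-t) * t ^ (δ - 1)) := by
    rw [Real.Gamma_eq_integral hδ]
    rw [ofReal_integral_eq_lintegral_ofReal (Real.GammaIntegral_convergent hδ) ?_]
    rw [Filter.EventuallyLE, ae_restrict_iff' measurableSet_Ioi]
    exact Filter.Eventually.of_forall
      (fun t ht => mul_nonneg (Real.exp_nonneg _) (Real.rpow_nonneg (le_of_lt ht) _))
  have hcov : ∫⁻ u in Ioo (0:ℝ) c, ENNReal.ofReal (z ^ δ * u ^ (δ - 1) * Real.exp (-(z * u)))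
      = ∫⁻ t in Ioo (0:ℝ) (z * c), ENNReal.ofReal (Real.exp (-t) * t ^ (δ - 1)) := by
    have himg : Ioo (0:ℝ) (z * c) = (fun u : ℝ => z * u) '' Ioo 0 c := by
      rw [Set.image_mul_left_Ioo hz, mul_zero]
    rw [himg, lintegral_image_eq_lintegral_abs_deriv_mul' measurableSet_Ioo
      (f' := fun _ => z)
      (fun x _ => by simpa using ((hasDerivAt_id x).const_mul z).hasDerivWithinAt)
      (fun a _ b _ h => mul_left_cancel₀ hz.ne' h)]
    refine setLIntegral_congr_fun measurableSet_Ioo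
      (fun u hu => ?_)
    rw [← ENNReal.ofReal_mul (abs_nonneg z)]
    congr 1
    rw [abs_of_pos hz]
    rw [Real.mul_rpow hz.le hu.1.le]
    have : z ^ δ = z * z ^ (δ - 1) := by
      rw [show δ = 1 + (δ - 1) by ring, Real.rpow_add hz, Real.rpow_one]
      ring_nf
    rw [this]; ring
  rw [hcov, hΓ]
  exact lintegral_mono_set Ioo_subset_Ioi_self

lemma step_beta {γ δ τ : ℝ} (hγ : 0 < γ) (hδ : 0 < δ) (hτ : τ ∈ Ioo (-1:ℝ) 1) :
    ENNReal.ofReal ((2:ℝ) ^ (-δ) * (1 - τ ^ 2) ^ (γ + δ - 1/2)) *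
      ∫⁻ p in Ioo (0:ℝ) 1, ENNReal.ofReal (p ^ (δ - 1) * (1 - p) ^ (γ - 1/2))
    ≤ ∫⁻ u in Ioo (0:ℝ) (1 - τ),
        ENNReal.ofReal (u ^ (δ - 1) * (1 - (τ + u) ^ 2) ^ (γ - 1/2)) := by
  obtain ⟨hτ1, hτ2⟩ := hτ
  set a : ℝ := 1 - τ ^ 2 with ha_def
  have ha : 0 < a := by nlinarith
  set w : ℝ := (1 + τ) / 2 with hw_def
  have hw0 : 0 < w := by simp only [hw_def]; linarith
  have hw1 : w < 1 := by simp only [hw_def]; linarith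
  set k : ℝ := a / 2 with hk_def
  have hk : 0 < k := by positivity
  have hkw : k = (1 - τ) * w := by simp only [hk_def, hw_def, ha_def]; ring
  set D : ℝ → ℝ := fun p => 1 - p + w * p with hD_def
  set φ : ℝ → ℝ := fun p => k * p / D p with hφ_def
  have hD : ∀ p : ℝ, 0 < p → p < 1 → 0 < D p := by
    intro p h0 h1; simp only [hD_def]; nlinarith
  have hDle : ∀ p : ℝ, 0 < p → p < 1 → D p ≤ 1 := by
    intro p h0 h1; simp only [hD_def]; nlinarith
  -- image identification
  have himg : φ '' Ioo 0 1 = Ioo 0 (1 - τ) := by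
    ext u
    constructor
    · rintro ⟨p, ⟨hp0, hp1⟩, rfl⟩
      have hDp := hD p hp0 hp1
      constructor
      · exact div_pos (mul_pos hk hp0) hDp
      · rw [div_lt_iff₀ hDp]
        simp only [hD_def, hkw]
        nlinarith
    · rintro ⟨hu0, hu1⟩
      have hE : 0 < u * (1 - w) + (1 - τ) * w := by nlinarith
      refine ⟨u / (u * (1 - w) + (1 - τ) * w), ⟨?_, ?_⟩, ?_⟩
      · positivity
      · rw [div_lt_one hE]; nlinarith
      · have h1τ : (0:ℝ) < 1 - τ := by linarith
        simp only [hφ_def, hD_def, hkw]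
        rw [div_eq_iff]
        · field_simp
          ring
        · have : 1 - u / (u * (1 - w) + (1 - τ) * w) + w * (u / (u * (1 - w) + (1 - τ) * w))
              = (1 - τ) * w / (u * (1 - w) + (1 - τ) * w) := by
            rw [eq_div_iff hE.ne']
            linear_combination (w - 1) * (div_mul_cancel₀ u hE.ne')
          rw [this]
          positivity
  -- injectivity
  have hinj : Set.InjOn φ (Ioo 0 1) := by
    rintro p ⟨hp0, hp1⟩ q ⟨hq0, hq1⟩ h
    have hDp := hD p hp0 hp1
    have hDq := hD q hq0 hq1
    simp only [hφ_def] at h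
    rw [div_eq_div_iff hDp.ne' hDq.ne'] at h
    simp only [hD_def] at h
    have h2 : k * (p - q) = 0 := by nlinarith [h]
    rcases mul_eq_zero.1 h2 with h' | h'
    · exact absurd h' hk.ne'
    · linarith
  -- derivative
  have hderiv : ∀ p ∈ Ioo (0:ℝ) 1, HasDerivWithinAt φ (k / (D p) ^ 2) (Ioo (0:ℝ) 1) p := by
    rintro p ⟨hp0, hp1⟩
    have hDp := hD p hp0 hp1
    have h1 : HasDerivAt (fun q : ℝ => k * q) k p := by
      simpa using (hasDerivAt_id p).const_mul k
    have h2 : HasDerivAt D (w - 1) p := by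
      have hDfun : D = fun q : ℝ => 1 + (w - 1) * q := by
        funext q; simp only [hD_def]; ring
      rw [hDfun]
      simpa using ((hasDerivAt_id p).const_mul (w - 1)).const_add 1
    have h3 := h1.div h2 hDp.ne'
    have h4 : (k * D p - k * p * (w - 1)) / (D p) ^ 2 = k / (D p) ^ 2 := by
      have : k * D p - k * p * (w - 1) = k := by simp only [hD_def]; ring
      rw [this]
    rw [h4] at h3
    exact h3.hasDerivWithinAt
  -- the key pointwise inequality
  have hpoint : ∀ p ∈ Ioo (0:ℝ) 1,
      ENNReal.ofReal ((2:ℝ) ^ (-δ) * a ^ (γ + δ - 1/2)) *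
        ENNReal.ofReal (p ^ (δ - 1) * (1 - p) ^ (γ - 1/2))
      ≤ ENNReal.ofReal |k / (D p) ^ 2| *
        ENNReal.ofReal ((φ p) ^ (δ - 1) * (1 - (τ + φ p) ^ 2) ^ (γ - 1/2)) := by
    rintro p ⟨hp0, hp1⟩
    have hDp := hD p hp0 hp1
    have hDple := hDle p hp0 hp1
    have hp2 : (0:ℝ) < 1 - p := by linarith
    have hφp : 0 < φ p := div_pos (mul_pos hk hp0) hDp
    have hkey : 1 - (τ + φ p) ^ 2 = a * (1 - p) / (D p) ^ 2 := by
      have hne : D p ≠ 0 := hDp.ne'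
      simp only [hφ_def]
      field_simp
      simp only [hD_def, hk_def, ha_def, hw_def]
      ring
    rw [← ENNReal.ofReal_mul (by positivity), ← ENNReal.ofReal_mul (by positivity)]
    refine ENNReal.ofReal_le_ofReal ?_
    rw [hkey, abs_of_pos (by positivity : (0:ℝ) < k / (D p) ^ 2)]
    have hφ_eq : φ p = k * p / D p := rfl
    have hk1 : k * k ^ (δ - 1) = k ^ δ := by
      nth_rewrite 1 [← Real.rpow_one k]
      rw [← Real.rpow_add hk]
      norm_num
    have hk2 : k ^ δ = a ^ δ * (2:ℝ) ^ (-δ) := by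
      rw [hk_def, Real.div_rpow ha.le (by norm_num), Real.rpow_neg (by norm_num),
        div_eq_mul_inv]
    have ha2 : a ^ δ * a ^ (γ - 1/2) = a ^ (γ + δ - 1/2) := by
      rw [← Real.rpow_add ha]
      ring_nf
    have hd2 : (D p) ^ (δ + 2*γ)
        = (D p) ^ (2:ℕ) * ((D p) ^ (δ - 1) * ((D p) ^ (γ - 1/2) * (D p) ^ (γ - 1/2))) := by
      rw [← Real.rpow_natCast (D p) 2, ← Real.rpow_add hDp, ← Real.rpow_add hDp,
        ← Real.rpow_add hDp]
      congr 1
      push_cast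
      ring
    have hrhs : k / (D p) ^ 2 * ((φ p) ^ (δ - 1) * (a * (1 - p) / (D p) ^ 2) ^ (γ - 1/2))
        = (2:ℝ) ^ (-δ) * a ^ (γ + δ - 1/2) * (p ^ (δ - 1) * (1 - p) ^ (γ - 1/2))
          / (D p) ^ (δ + 2 * γ) := by
      rw [hφ_eq,
        (Real.div_rpow (mul_nonneg hk.le hp0.le) hDp.le _ :
          (k * p / D p) ^ (δ - 1) = (k * p) ^ (δ - 1) / (D p) ^ (δ - 1)),
        Real.mul_rpow hk.le hp0.le,
        (Real.div_rpow (mul_nonneg ha.le hp2.le) (by positivity) _ :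
          (a * (1 - p) / (D p) ^ 2) ^ (γ - 1/2)
            = (a * (1 - p)) ^ (γ - 1/2) / ((D p) ^ 2) ^ (γ - 1/2)),
        Real.mul_rpow ha.le hp2.le,
        hd2, ← ha2]
      have hpow2 : ((D p) ^ (2:ℕ)) ^ (γ - 1/2) = (D p) ^ (γ - 1/2) * (D p) ^ (γ - 1/2) := by
        rw [← Real.rpow_natCast (D p) 2, ← Real.rpow_mul hDp.le, ← Real.rpow_add hDp]
        congr 1
        push_cast
        ring
      have hk3 : k ^ (δ - 1) = a ^ δ * (2:ℝ) ^ (-δ) / k := by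
        rw [← hk2, ← hk1]
        field_simp
      rw [hpow2, hk3]
      have n1 : ((D p):ℝ) ^ (2:ℕ) ≠ 0 := by positivity
      have n2 : (D p) ^ (δ - 1) ≠ 0 := (Real.rpow_pos_of_pos hDp _).ne'
      have n3 : (D p) ^ (γ - 1/2) ≠ 0 := (Real.rpow_pos_of_pos hDp _).ne'
      field_simp
    rw [hrhs]
    have hDpow : (D p) ^ (δ + 2 * γ) ≤ 1 :=
      Real.rpow_le_one hDp.le hDple (by linarith)
    have hDpowpos : 0 < (D p) ^ (δ + 2 * γ) := Real.rpow_pos_of_pos hDp _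
    rw [le_div_iff₀ hDpowpos]
    have hN : (0:ℝ) ≤ (2:ℝ) ^ (-δ) * a ^ (γ + δ - 1/2) * (p ^ (δ - 1) * (1 - p) ^ (γ - 1/2)) := by
      positivity
    calc (2:ℝ) ^ (-δ) * a ^ (γ + δ - 1/2) * (p ^ (δ - 1) * (1 - p) ^ (γ - 1/2))
          * (D p) ^ (δ + 2*γ)
        ≤ (2:ℝ) ^ (-δ) * a ^ (γ + δ - 1/2) * (p ^ (δ - 1) * (1 - p) ^ (γ - 1/2)) * 1 :=
          mul_le_mul_of_nonneg_left hDpow hN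
      _ = (2:ℝ) ^ (-δ) * a ^ (γ + δ - 1/2) * (p ^ (δ - 1) * (1 - p) ^ (γ - 1/2)) := mul_one _
  -- assemble
  have hmeasR : Measurable fun p : ℝ =>
      ENNReal.ofReal |k / (D p) ^ 2| *
        ENNReal.ofReal ((φ p) ^ (δ - 1) * (1 - (τ + φ p) ^ 2) ^ (γ - 1/2)) := by
    simp only [hφ_def, hD_def]
    fun_prop
  calc ENNReal.ofReal ((2:ℝ) ^ (-δ) * a ^ (γ + δ - 1/2)) *
        ∫⁻ p in Ioo (0:ℝ) 1, ENNReal.ofReal (p ^ (δ - 1) * (1 - p) ^ (γ - 1/2))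
      = ∫⁻ p in Ioo (0:ℝ) 1, ENNReal.ofReal ((2:ℝ) ^ (-δ) * a ^ (γ + δ - 1/2)) *
          ENNReal.ofReal (p ^ (δ - 1) * (1 - p) ^ (γ - 1/2)) :=
        (lintegral_const_mul' _ _ ENNReal.ofReal_ne_top).symm
    _ ≤ ∫⁻ p in Ioo (0:ℝ) 1, ENNReal.ofReal |k / (D p) ^ 2| *
          ENNReal.ofReal ((φ p) ^ (δ - 1) * (1 - (τ + φ p) ^ 2) ^ (γ - 1/2)) :=
        setLIntegral_mono hmeasR hpoint
    _ = ∫⁻ u in Ioo (0:ℝ) (1 - τ), ENNReal.ofReal (u ^ (δ - 1) * (1 - (τ + u) ^ 2) ^ (γ - 1/2)) := by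
        have hcov := lintegral_image_eq_lintegral_abs_deriv_mul' (f := φ)
          (f' := fun p => k / D p ^ 2) measurableSet_Ioo hderiv hinj
          (fun u => ENNReal.ofReal (u ^ (δ - 1) * (1 - (τ + u) ^ 2) ^ (γ - 1/2)))
        rw [himg] at hcov
        exact hcov.symm

lemma lintegral_swap_triangle {F : ℝ → ℝ → ℝ≥0∞}
    (hF : Measurable (fun q : ℝ × ℝ => F q.1 q.2)) :
    ∫⁻ τ in Ioo (-1:ℝ) 1, ∫⁻ u in Ioo (0:ℝ) (1 - τ), F τ u
      = ∫⁻ u in Ioo (0:ℝ) 2, ∫⁻ τ in Ioo (-1:ℝ) (1 - u), F τ u := by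
  set S : Set (ℝ × ℝ) := {q | (-1 < q.1 ∧ q.1 < 1) ∧ 0 < q.2 ∧ q.2 < 1 - q.1} with hS_def
  have hS : MeasurableSet S := by
    apply MeasurableSet.inter
    · exact ((measurableSet_lt measurable_const measurable_fst).inter
        (measurableSet_lt measurable_fst measurable_const))
    · exact ((measurableSet_lt measurable_const measurable_snd).inter
        (measurableSet_lt measurable_snd (measurable_const.sub measurable_fst)))
  set G : ℝ × ℝ → ℝ≥0∞ := S.indicator (fun q => F q.1 q.2) with hG_def
  have hGmeas : Measurable G := (hF.indicator hS)
  have h1 : ∫⁻ τ in Ioo (-1:ℝ) 1, ∫⁻ u in Ioo (0:ℝ) (1 - τ), F τ u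
      = ∫⁻ τ : ℝ, ∫⁻ u : ℝ, G (τ, u) := by
    rw [← lintegral_indicator measurableSet_Ioo _]
    refine lintegral_congr (fun τ => ?_)
    by_cases hτ : τ ∈ Ioo (-1:ℝ) 1
    · rw [indicator_of_mem hτ, ← lintegral_indicator measurableSet_Ioo _]
      refine lintegral_congr (fun u => ?_)
      rw [indicator_apply, hG_def, indicator_apply]
      have : (u ∈ Ioo (0:ℝ) (1 - τ)) ↔ ((τ, u) ∈ S) := by
        simp only [hS_def, mem_Ioo, mem_setOf_eq]
        obtain ⟨h1, h2⟩ := hτ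
        constructor
        · rintro ⟨a, b⟩; exact ⟨⟨h1, h2⟩, a, b⟩
        · rintro ⟨_, a, b⟩; exact ⟨a, b⟩
      rw [if_congr this rfl rfl]
    · rw [indicator_of_notMem hτ]
      symm
      have : ∀ u : ℝ, G (τ, u) = 0 := by
        intro u
        rw [hG_def, indicator_of_notMem]
        simp only [hS_def, mem_setOf_eq]
        rintro ⟨h', _⟩
        exact hτ ⟨h'.1, h'.2⟩
      simp only [this, lintegral_const, zero_mul]
  have h2 : ∫⁻ u in Ioo (0:ℝ) 2, ∫⁻ τ in Ioo (-1:ℝ) (1 - u), F τ u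
      = ∫⁻ u : ℝ, ∫⁻ τ : ℝ, G (τ, u) := by
    rw [← lintegral_indicator measurableSet_Ioo _]
    refine lintegral_congr (fun u => ?_)
    by_cases hu : u ∈ Ioo (0:ℝ) 2
    · rw [indicator_of_mem hu, ← lintegral_indicator measurableSet_Ioo _]
      refine lintegral_congr (fun τ => ?_)
      rw [indicator_apply, hG_def, indicator_apply]
      have : (τ ∈ Ioo (-1:ℝ) (1 - u)) ↔ ((τ, u) ∈ S) := by
        simp only [hS_def, mem_Ioo, mem_setOf_eq]
        obtain ⟨h1, h2⟩ := hu
        constructor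
        · rintro ⟨a, b⟩
          exact ⟨⟨a, by linarith⟩, h1, by linarith⟩
        · rintro ⟨⟨a, _⟩, _, c⟩
          exact ⟨a, by linarith⟩
      rw [if_congr this rfl rfl]
    · rw [indicator_of_notMem hu]
      symm
      have : ∀ τ : ℝ, G (τ, u) = 0 := by
        intro τ
        rw [hG_def, indicator_of_notMem]
        simp only [hS_def, mem_setOf_eq]
        rintro ⟨h', h''⟩
        exact hu ⟨h''.1, by linarith [h'.1, h''.2]⟩
      simp only [this, lintegral_const, zero_mul]
  rw [h1, h2]
  have := lintegral_lintegral_swap (μ := (volume : Measure ℝ)) (ν := (volume : Measure ℝ))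
    (f := fun τ u => G (τ, u)) ?_
  · exact this
  · have : Function.uncurry (fun τ u => G (τ, u)) = G := by
      funext q; rfl
    rw [this]
    exact hGmeas.aemeasurable

lemma lintegral_swap_triangle' {F : ℝ → ℝ → ℝ≥0∞}
    (hF : Measurable (fun q : ℝ × ℝ => F q.1 q.2)) :
    ∫⁻ u in Ioo (0:ℝ) 2, ∫⁻ τ in Ioo (u - 1) 1, F τ u
      = ∫⁻ τ in Ioo (-1:ℝ) 1, ∫⁻ u in Ioo (0:ℝ) (1 + τ), F τ u := by
  set S : Set (ℝ × ℝ) := {q | (-1 < q.1 ∧ q.1 < 1) ∧ 0 < q.2 ∧ q.2 < 1 + q.1} with hS_def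
  have hS : MeasurableSet S := by
    apply MeasurableSet.inter
    · exact ((measurableSet_lt measurable_const measurable_fst).inter
        (measurableSet_lt measurable_fst measurable_const))
    · exact ((measurableSet_lt measurable_const measurable_snd).inter
        (measurableSet_lt measurable_snd (measurable_const.add measurable_fst)))
  set G : ℝ × ℝ → ℝ≥0∞ := S.indicator (fun q => F q.1 q.2) with hG_def
  have hGmeas : Measurable G := (hF.indicator hS)
  have h1 : ∫⁻ u in Ioo (0:ℝ) 2, ∫⁻ τ in Ioo (u - 1) 1, F τ u
      = ∫⁻ u : ℝ, ∫⁻ τ : ℝ, G (τ, u) := by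
    rw [← lintegral_indicator measurableSet_Ioo _]
    refine lintegral_congr (fun u => ?_)
    by_cases hu : u ∈ Ioo (0:ℝ) 2
    · rw [indicator_of_mem hu, ← lintegral_indicator measurableSet_Ioo _]
      refine lintegral_congr (fun τ => ?_)
      rw [indicator_apply, hG_def, indicator_apply]
      have : (τ ∈ Ioo (u - 1) 1) ↔ ((τ, u) ∈ S) := by
        simp only [hS_def, mem_Ioo, mem_setOf_eq]
        obtain ⟨h1, h2⟩ := hu
        constructor
        · rintro ⟨a, b⟩
          exact ⟨⟨by linarith, b⟩, h1, by linarith⟩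
        · rintro ⟨⟨_, b⟩, _, c⟩
          exact ⟨by linarith, b⟩
      rw [if_congr this rfl rfl]
    · rw [indicator_of_notMem hu]
      symm
      have : ∀ τ : ℝ, G (τ, u) = 0 := by
        intro τ
        rw [hG_def, indicator_of_notMem]
        simp only [hS_def, mem_setOf_eq]
        rintro ⟨h', h''⟩
        exact hu ⟨h''.1, by linarith [h'.2, h''.2]⟩
      simp only [this, lintegral_const, zero_mul]
  have h2 : ∫⁻ τ in Ioo (-1:ℝ) 1, ∫⁻ u in Ioo (0:ℝ) (1 + τ), F τ u
      = ∫⁻ τ : ℝ, ∫⁻ u : ℝ, G (τ, u) := by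
    rw [← lintegral_indicator measurableSet_Ioo _]
    refine lintegral_congr (fun τ => ?_)
    by_cases hτ : τ ∈ Ioo (-1:ℝ) 1
    · rw [indicator_of_mem hτ, ← lintegral_indicator measurableSet_Ioo _]
      refine lintegral_congr (fun u => ?_)
      rw [indicator_apply, hG_def, indicator_apply]
      have : (u ∈ Ioo (0:ℝ) (1 + τ)) ↔ ((τ, u) ∈ S) := by
        simp only [hS_def, mem_Ioo, mem_setOf_eq]
        obtain ⟨h1, h2⟩ := hτ
        constructor
        · rintro ⟨a, b⟩; exact ⟨⟨h1, h2⟩, a, b⟩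
        · rintro ⟨_, a, b⟩; exact ⟨a, b⟩
      rw [if_congr this rfl rfl]
    · rw [indicator_of_notMem hτ]
      symm
      have : ∀ u : ℝ, G (τ, u) = 0 := by
        intro u
        rw [hG_def, indicator_of_notMem]
        simp only [hS_def, mem_setOf_eq]
        rintro ⟨h', _⟩
        exact hτ ⟨h'.1, h'.2⟩
      simp only [this, lintegral_const, zero_mul]
  rw [h1, h2]
  have := lintegral_lintegral_swap (μ := (volume : Measure ℝ)) (ν := (volume : Measure ℝ))
    (f := fun u τ => G (τ, u)) ?_
  · exact this
  · have hmeas2 : Measurable fun q : ℝ × ℝ => G (q.2, q.1) :=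
      hGmeas.comp (measurable_snd.prodMk measurable_fst)
    have : Function.uncurry (fun u τ => G (τ, u)) = fun q : ℝ × ℝ => G (q.2, q.1) := by
      funext q; rfl
    rw [this]
    exact hmeas2.aemeasurable

lemma step_swap {γ δ z : ℝ} (hγ : 0 < γ) (hδ : 0 < δ) (hz : 0 < z) :
    (∫⁻ τ in Ioo (-1:ℝ) 1, ENNReal.ofReal (Real.exp (z * τ)) *
        ∫⁻ u in Ioo (0:ℝ) (1 - τ),
          ENNReal.ofReal (z ^ δ * u ^ (δ - 1) * (1 - (τ + u) ^ 2) ^ (γ - 1/2)))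
    ≤ ENNReal.ofReal (Real.Gamma δ) *
        ∫⁻ τ in Ioo (-1:ℝ) 1, ENNReal.ofReal ((1 - τ ^ 2) ^ (γ - 1/2) * Real.exp (z * τ)) := by
  set F : ℝ → ℝ → ℝ≥0∞ := fun τ u =>
    ENNReal.ofReal (Real.exp (z * τ) * (z ^ δ * u ^ (δ - 1) * (1 - (τ + u) ^ 2) ^ (γ - 1/2)))
    with hF_def
  set F₂ : ℝ → ℝ → ℝ≥0∞ := fun τ u =>
    ENNReal.ofReal ((1 - τ ^ 2) ^ (γ - 1/2) * Real.exp (z * τ)) *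
      ENNReal.ofReal (z ^ δ * u ^ (δ - 1) * Real.exp (-(z * u)))
    with hF₂_def
  have hFmeas : Measurable fun q : ℝ × ℝ => F q.1 q.2 := by
    simp only [hF_def]; fun_prop
  have hF₂meas : Measurable fun q : ℝ × ℝ => F₂ q.1 q.2 := by
    simp only [hF₂_def]; fun_prop
  calc ∫⁻ τ in Ioo (-1:ℝ) 1, ENNReal.ofReal (Real.exp (z * τ)) *
        ∫⁻ u in Ioo (0:ℝ) (1 - τ),
          ENNReal.ofReal (z ^ δ * u ^ (δ - 1) * (1 - (τ + u) ^ 2) ^ (γ - 1/2))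
      = ∫⁻ τ in Ioo (-1:ℝ) 1, ∫⁻ u in Ioo (0:ℝ) (1 - τ), F τ u := by
        refine setLIntegral_congr_fun measurableSet_Ioo
          (fun τ _ => ?_)
        rw [← lintegral_const_mul' _ _ ENNReal.ofReal_ne_top]
        refine setLIntegral_congr_fun measurableSet_Ioo
          (fun u _ => ?_)
        rw [hF_def, ← ENNReal.ofReal_mul (Real.exp_nonneg _)]
    _ = ∫⁻ u in Ioo (0:ℝ) 2, ∫⁻ τ in Ioo (-1:ℝ) (1 - u), F τ u := lintegral_swap_triangle hFmeas
    _ = ∫⁻ u in Ioo (0:ℝ) 2, ∫⁻ τ' in Ioo (u - 1) 1, F₂ τ' u := by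
        refine setLIntegral_congr_fun measurableSet_Ioo
          (fun u hu => ?_)
        have himg : (fun τ : ℝ => τ + u) '' Ioo (-1:ℝ) (1 - u) = Ioo (u - 1) 1 := by
          rw [image_add_const_Ioo]
          congr 1 <;> ring
        have hcov := lintegral_image_eq_lintegral_abs_deriv_mul' (s := Ioo (-1:ℝ) (1 - u))
          (f := fun τ => τ + u)
          (f' := fun _ => (1:ℝ)) measurableSet_Ioo
          (fun x _ => by simpa using ((hasDerivAt_id x).add_const u).hasDerivWithinAt)
          (fun a _ b _ h => by simpa using h)
          (fun τ' => F₂ τ' u)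
        rw [himg] at hcov
        rw [hcov]
        refine setLIntegral_congr_fun measurableSet_Ioo
          (fun τ hτ => ?_)
        simp only [abs_one, ENNReal.ofReal_one, one_mul]
        rw [hF_def, hF₂_def]
        simp only
        have hbase : (0:ℝ) ≤ 1 - (τ + u) ^ 2 := by nlinarith [hτ.1, hτ.2, hu.1, hu.2]
        rw [← ENNReal.ofReal_mul (mul_nonneg (Real.rpow_nonneg hbase _) (Real.exp_nonneg _))]
        congr 1
        rw [show z * (τ + u) = z * τ + z * u by ring, Real.exp_add, Real.exp_neg]
        field_simp
    _ = ∫⁻ τ' in Ioo (-1:ℝ) 1, ∫⁻ u in Ioo (0:ℝ) (1 + τ'), F₂ τ' u :=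
        lintegral_swap_triangle' hF₂meas
    _ ≤ ∫⁻ τ' in Ioo (-1:ℝ) 1,
          ENNReal.ofReal ((1 - τ' ^ 2) ^ (γ - 1/2) * Real.exp (z * τ')) *
            ENNReal.ofReal (Real.Gamma δ) := by
        refine setLIntegral_mono (by fun_prop) fun τ' _ => ?_
        rw [hF₂_def]
        simp only
        rw [lintegral_const_mul' _ _ ENNReal.ofReal_ne_top]
        exact mul_le_mul_right (step_gamma hδ hz (1 + τ')) _
    _ = ENNReal.ofReal (Real.Gamma δ) *
          ∫⁻ τ in Ioo (-1:ℝ) 1, ENNReal.ofReal ((1 - τ ^ 2) ^ (γ - 1/2) * Real.exp (z * τ)) := by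
        rw [lintegral_mul_const' _ _ ENNReal.ofReal_ne_top, mul_comm]

lemma main_lintegral {γ δ z : ℝ} (hγ : 0 < γ) (hδ : 0 < δ) (hz : 0 < z) :
    ENNReal.ofReal ((z/2) ^ δ) *
      (∫⁻ p in Ioo (0:ℝ) 1, ENNReal.ofReal (p ^ (δ - 1) * (1 - p) ^ (γ - 1/2))) *
      (∫⁻ τ in Ioo (-1:ℝ) 1, ENNReal.ofReal ((1 - τ ^ 2) ^ (γ + δ - 1/2) * Real.exp (z * τ)))
    ≤ ENNReal.ofReal (Real.Gamma δ) *
      ∫⁻ τ in Ioo (-1:ℝ) 1, ENNReal.ofReal ((1 - τ ^ 2) ^ (γ - 1/2) * Real.exp (z * τ)) := by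
  set B : ℝ≥0∞ := ∫⁻ p in Ioo (0:ℝ) 1, ENNReal.ofReal (p ^ (δ - 1) * (1 - p) ^ (γ - 1/2))
    with hB_def
  have hsc : ∀ τ : ℝ, (z/2) ^ δ * ((1 - τ ^ 2) ^ (γ + δ - 1/2) * Real.exp (z * τ))
      = (Real.exp (z * τ) * z ^ δ) * ((2:ℝ) ^ (-δ) * (1 - τ ^ 2) ^ (γ + δ - 1/2)) := by
    intro τ
    rw [Real.div_rpow hz.le (by norm_num), Real.rpow_neg (by norm_num : (0:ℝ) ≤ 2)]
    have h2 : (2:ℝ) ^ δ ≠ 0 := (Real.rpow_pos_of_pos two_pos δ).ne'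
    field_simp
  calc ENNReal.ofReal ((z/2) ^ δ) * B *
        (∫⁻ τ in Ioo (-1:ℝ) 1, ENNReal.ofReal ((1 - τ ^ 2) ^ (γ + δ - 1/2) * Real.exp (z * τ)))
      = ∫⁻ τ in Ioo (-1:ℝ) 1, (ENNReal.ofReal ((z/2) ^ δ) * B) *
          ENNReal.ofReal ((1 - τ ^ 2) ^ (γ + δ - 1/2) * Real.exp (z * τ)) := by
        rw [lintegral_const_mul _ (meas_f (γ + δ) z).ennreal_ofReal]
    _ = ∫⁻ τ in Ioo (-1:ℝ) 1, ENNReal.ofReal (Real.exp (z * τ) * z ^ δ) *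
          (ENNReal.ofReal ((2:ℝ) ^ (-δ) * (1 - τ ^ 2) ^ (γ + δ - 1/2)) * B) := by
        refine setLIntegral_congr_fun measurableSet_Ioo
          (fun τ _ => ?_)
        rw [mul_right_comm, ← ENNReal.ofReal_mul (by positivity),
          hsc τ, ENNReal.ofReal_mul (by positivity), mul_assoc]
    _ ≤ ∫⁻ τ in Ioo (-1:ℝ) 1, ENNReal.ofReal (Real.exp (z * τ) * z ^ δ) *
          ∫⁻ u in Ioo (0:ℝ) (1 - τ),
            ENNReal.ofReal (u ^ (δ - 1) * (1 - (τ + u) ^ 2) ^ (γ - 1/2)) :=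
        setLIntegral_mono' measurableSet_Ioo
          (fun τ hτ => mul_le_mul_right (step_beta hγ hδ hτ) _)
    _ = ∫⁻ τ in Ioo (-1:ℝ) 1, ENNReal.ofReal (Real.exp (z * τ)) *
          ∫⁻ u in Ioo (0:ℝ) (1 - τ),
            ENNReal.ofReal (z ^ δ * u ^ (δ - 1) * (1 - (τ + u) ^ 2) ^ (γ - 1/2)) := by
        refine setLIntegral_congr_fun measurableSet_Ioo
          (fun τ _ => ?_)
        rw [ENNReal.ofReal_mul (Real.exp_nonneg _), mul_assoc]
        congr 1
        rw [← lintegral_const_mul' _ _ ENNReal.ofReal_ne_top]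
        refine setLIntegral_congr_fun measurableSet_Ioo
          (fun u _ => ?_)
        rw [← ENNReal.ofReal_mul (Real.rpow_nonneg hz.le _)]
        congr 1
        ring
    _ ≤ ENNReal.ofReal (Real.Gamma δ) *
          ∫⁻ τ in Ioo (-1:ℝ) 1, ENNReal.ofReal ((1 - τ ^ 2) ^ (γ - 1/2) * Real.exp (z * τ)) :=
        step_swap hγ hδ hz

lemma key_real {γ δ z : ℝ} (hγ : 0 < γ) (hδ : 0 < δ) (hz : 0 < z) :
    (z/2) ^ δ * (Real.Gamma δ * Real.Gamma (γ + 1/2) / Real.Gamma (γ + δ + 1/2)) *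
        (∫ τ in (-1:ℝ)..1, (1 - τ ^ 2) ^ (γ + δ - 1/2) * Real.exp (z * τ))
      ≤ Real.Gamma δ * ∫ τ in (-1:ℝ)..1, (1 - τ ^ 2) ^ (γ - 1/2) * Real.exp (z * τ) := by
  have hγ2 : (0:ℝ) < γ + 1/2 := by linarith
  have hγδ : (0:ℝ) < γ + δ := by linarith
  set Br : ℝ := Real.Gamma δ * Real.Gamma (γ + 1/2) / Real.Gamma (γ + δ + 1/2) with hBr_def
  have hBrpos : 0 < Br := by
    rw [hBr_def]
    exact div_pos (mul_pos (Real.Gamma_pos_of_pos hδ) (Real.Gamma_pos_of_pos hγ2))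
      (Real.Gamma_pos_of_pos (by linarith))
  -- Beta integral value
  have hBval : ∫ p in Ioo (0:ℝ) 1, p ^ (δ - 1) * (1 - p) ^ (γ - 1/2) = Br := by
    have h := betaIntegral_real hδ hγ2
    simp only [show γ + 1/2 - 1 = γ - 1/2 by ring, show δ + (γ + 1/2) = γ + δ + 1/2 by ring] at h
    rw [h, hBr_def]
  have hBlint : ∫⁻ p in Ioo (0:ℝ) 1, ENNReal.ofReal (p ^ (δ - 1) * (1 - p) ^ (γ - 1/2))
      = ENNReal.ofReal Br := by
    rw [← hBval]
    rw [← ofReal_integral_eq_lintegral_ofReal ?_ ?_]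
    · have h := integrableOn_beta hδ hγ2
      simpa only [show γ + 1/2 - 1 = γ - 1/2 by ring, IntegrableOn] using h
    · rw [Filter.EventuallyLE, ae_restrict_iff' measurableSet_Ioo]
      refine Filter.Eventually.of_forall (fun p hp => ?_)
      exact mul_nonneg (Real.rpow_nonneg hp.1.le _)
        (Real.rpow_nonneg (by linarith [hp.2] : (0:ℝ) ≤ 1 - p) _)
  have hF1 := F_ofReal_aux (a := γ + δ) (z := z) hγδ (integrableOn_f _ z hγδ)
  have hF2 := F_ofReal_aux (a := γ) (z := z) hγ (integrableOn_f _ z hγ)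
  have M := main_lintegral hγ hδ hz
  rw [hBlint, hF1, hF2] at M
  rw [← ENNReal.ofReal_mul (Real.rpow_nonneg (by positivity) _),
    ← ENNReal.ofReal_mul (by positivity), ← ENNReal.ofReal_mul (Real.Gamma_pos_of_pos hδ).le]
    at M
  have hFγnn : 0 ≤ ∫ τ in (-1:ℝ)..1, (1 - τ ^ 2) ^ (γ - 1/2) * Real.exp (z * τ) := by
    refine intervalIntegral.integral_nonneg (by norm_num) (fun τ hτ => ?_)
    exact mul_nonneg (Real.rpow_nonneg (by nlinarith [hτ.1, hτ.2]) _) (Real.exp_nonneg _)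
  have := (ENNReal.ofReal_le_ofReal_iff
    (mul_nonneg (Real.Gamma_pos_of_pos hδ).le hFγnn)).1 M
  calc (z/2) ^ δ * Br * (∫ τ in (-1:ℝ)..1, (1 - τ ^ 2) ^ (γ + δ - 1/2) * Real.exp (z * τ))
      = (z/2) ^ δ * Br * (∫ τ in (-1:ℝ)..1, (1 - τ ^ 2) ^ (γ + δ - 1/2) * Real.exp (z * τ)) := rfl
    _ ≤ Real.Gamma δ * ∫ τ in (-1:ℝ)..1, (1 - τ ^ 2) ^ (γ - 1/2) * Real.exp (z * τ) := this

end Stmt7Aux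

/-- The modified Bessel function of the first kind of order `γ`, defined for `γ > 0`
and `z ≥ 0` via its integral representation. -/
noncomputable def besselI (γ z : ℝ) : ℝ :=
  (z / 2) ^ γ / (Real.sqrt Real.pi * Real.Gamma (γ + 1/2)) *
    ∫ τ in (-1:ℝ)..1, (1 - τ ^ 2) ^ (γ - 1/2) * Real.exp (z * τ)

/-- For all `0 < γ ≤ γ'` and `z ≥ 0`, `I_{γ'}(z) ≤ I_γ(z)`: for fixed
`z ≥ 0` the modified Bessel function of the first kind is non-increasing in its order. -/
theorem stmt7 (γ γ' z : ℝ) (hγ : 0 < γ) (hγ' : γ ≤ γ') (hz : 0 ≤ z) :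
    besselI γ' z ≤ besselI γ z := by
  rcases eq_or_lt_of_le hγ' with rfl | hlt
  · exact le_refl _
  rcases eq_or_lt_of_le hz with rfl | hz0
  · simp [besselI, Real.zero_rpow hγ.ne', Real.zero_rpow (hγ.trans hlt).ne']
  obtain ⟨δ, hδ, rfl⟩ : ∃ δ, 0 < δ ∧ γ' = γ + δ := ⟨γ' - γ, sub_pos.2 hlt, by ring⟩
  have K := Stmt7Aux.key_real hγ hδ hz0
  have hΓδ : 0 < Real.Gamma δ := Real.Gamma_pos_of_pos hδ
  have hG : 0 < Real.Gamma (γ + 1/2) := Real.Gamma_pos_of_pos (by linarith)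
  have hG' : 0 < Real.Gamma (γ + δ + 1/2) := Real.Gamma_pos_of_pos (by linarith)
  have hπ : 0 < Real.sqrt Real.pi := Real.sqrt_pos.2 Real.pi_pos
  have hzz : (0:ℝ) < z / 2 := by linarith
  set Fγ' : ℝ := ∫ τ in (-1:ℝ)..1, (1 - τ ^ 2) ^ (γ + δ - 1/2) * Real.exp (z * τ) with hFγ'd
  set Fγ : ℝ := ∫ τ in (-1:ℝ)..1, (1 - τ ^ 2) ^ (γ - 1/2) * Real.exp (z * τ) with hFγd
  have K2 : (z/2) ^ δ * (Real.Gamma (γ + 1/2) / Real.Gamma (γ + δ + 1/2)) * Fγ' ≤ Fγ := by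
    have hre : (z/2) ^ δ * (Real.Gamma δ * Real.Gamma (γ + 1/2) / Real.Gamma (γ + δ + 1/2)) * Fγ'
        = Real.Gamma δ *
          ((z/2) ^ δ * (Real.Gamma (γ + 1/2) / Real.Gamma (γ + δ + 1/2)) * Fγ') := by
      ring
    rw [hre] at K
    exact le_of_mul_le_mul_left K hΓδ
  show (z/2) ^ (γ + δ) / (Real.sqrt Real.pi * Real.Gamma (γ + δ + 1/2)) * Fγ'
      ≤ (z/2) ^ γ / (Real.sqrt Real.pi * Real.Gamma (γ + 1/2)) * Fγ
  have hsplit : (z/2) ^ (γ + δ) = (z/2) ^ γ * (z/2) ^ δ := Real.rpow_add hzz γ δ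
  calc (z/2) ^ (γ + δ) / (Real.sqrt Real.pi * Real.Gamma (γ + δ + 1/2)) * Fγ'
      = ((z/2) ^ γ / (Real.sqrt Real.pi * Real.Gamma (γ + 1/2))) *
          ((z/2) ^ δ * (Real.Gamma (γ + 1/2) / Real.Gamma (γ + δ + 1/2)) * Fγ') := by
        rw [hsplit]
        field_simp
    _ ≤ ((z/2) ^ γ / (Real.sqrt Real.pi * Real.Gamma (γ + 1/2))) * Fγ :=
        mul_le_mul_of_nonneg_left K2 (by positivity)
end

section
/- Let z ≥ 0 and α, β, c, C > 0. Then the series ∑_{k=1}^{∞} k^β · z^{C·k^α} / Γ(c·k^α) converges; equivalently, the function k ↦ k^β · z^{C·k^α} / Γ(c·k^α) on the positive integers is summable. -/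
open Real Filter Asymptotics

/-- Gamma eventually dominates any exponential. -/
lemma gamma_ge_exp (d : ℝ) (hd : 0 ≤ d) :
    ∀ᶠ x : ℝ in atTop, Real.exp (d * x) ≤ Real.Gamma x := by
  obtain ⟨N₀, hN₀⟩ := Filter.eventually_atTop.mp
    ((FloorSemiring.tendsto_pow_div_factorial_atTop (K := ℝ) (Real.exp (2 * d))).eventually_le_const
      (by norm_num : (0:ℝ) < 1))
  filter_upwards [eventually_ge_atTop (4 : ℝ), eventually_ge_atTop ((N₀ : ℝ) + 2)]
    with x hx4 hxN
  set n : ℕ := ⌊x⌋₊ with hn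
  have hx0 : (0:ℝ) ≤ x := by linarith
  have hfl : (n : ℝ) ≤ x := Nat.floor_le hx0
  have hfl' : x < (n : ℝ) + 1 := Nat.lt_floor_add_one x
  have hn4 : 4 ≤ n := by
    have := Nat.le_floor (by exact_mod_cast hx4 : ((4:ℕ) : ℝ) ≤ x)
    exact_mod_cast this
  have hnN : N₀ ≤ n - 1 := by
    have : (N₀ : ℝ) + 1 ≤ (n : ℝ) := by linarith
    have h2 : N₀ + 1 ≤ n := by exact_mod_cast this
    omega
  -- factorial bound
  have hfac : Real.exp (2 * d) ^ (n - 1) / ((n-1).factorial : ℝ) ≤ 1 := hN₀ _ hnN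
  have hfacpos : (0:ℝ) < ((n-1).factorial : ℝ) := by exact_mod_cast (n-1).factorial_pos
  have hfac' : Real.exp (2 * d) ^ (n - 1) ≤ ((n-1).factorial : ℝ) := by
    rwa [div_le_one hfacpos] at hfac
  have hexp : Real.exp (d * x) ≤ Real.exp (2 * d) ^ (n - 1) := by
    rw [← Real.exp_nat_mul]
    apply Real.exp_le_exp.mpr
    have h1 : x ≤ 2 * ((n:ℝ) - 1) := by linarith
    have hcast : ((n - 1 : ℕ) : ℝ) = (n : ℝ) - 1 := by
      have : 1 ≤ n := by omega
      push_cast [this]; ring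
    rw [hcast]
    nlinarith
  -- Gamma (n) = (n-1)!
  have hGn : Real.Gamma (n : ℝ) = ((n-1).factorial : ℝ) := by
    have : ((n - 1 : ℕ) : ℝ) + 1 = (n : ℝ) := by
      have : 1 ≤ n := by omega
      push_cast [this]; ring
    rw [← this, Real.Gamma_nat_eq_factorial]
  have hmono : Real.Gamma (n : ℝ) ≤ Real.Gamma x := by
    apply Real.Gamma_strictMonoOn_Ici.monotoneOn _ _ hfl
    · simp only [Set.mem_Ici]; exact_mod_cast by omega
    · simp only [Set.mem_Ici]; linarith
  calc Real.exp (d * x) ≤ Real.exp (2 * d) ^ (n - 1) := hexp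
    _ ≤ ((n-1).factorial : ℝ) := hfac'
    _ = Real.Gamma (n : ℝ) := hGn.symm
    _ ≤ Real.Gamma x := hmono

/-- For `z ≥ 0` and `α, β, c, C > 0`, the series
`∑_{k=1}^∞ k^β z^{C k^α} / Γ(c k^α)` converges, i.e. the function
`k ↦ k^β z^{C k^α} / Γ(c k^α)` on the positive integers is summable.
(For `z = 0` the real power `z^{C k^α}` is `0` since `C k^α > 0`.) -/
theorem stmt10 (z α β c C : ℝ) (hz : 0 ≤ z)
    (hα : 0 < α) (hβ : 0 < β) (hc : 0 < c) (hC : 0 < C) :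
    Summable (fun k : ℕ+ =>
      (k : ℝ) ^ β * z ^ (C * (k : ℝ) ^ α) / Real.Gamma (c * (k : ℝ) ^ α)) := by
  set F : ℕ → ℝ := fun n => (n : ℝ) ^ β * z ^ (C * (n : ℝ) ^ α) / Real.Gamma (c * (n : ℝ) ^ α)
    with hF
  suffices hS : Summable F by
    exact (hS.comp_injective (fun a b h => PNat.coe_injective h)).congr (fun k => rfl)
  -- z = 0 case
  rcases eq_or_lt_of_le hz with hz0 | hzpos
  · apply summable_of_isBigO_nat (g := fun _ : ℕ => (0:ℝ)) (by simpa using summable_zero)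
    apply Asymptotics.IsBigO.of_bound 1
    filter_upwards [eventually_ge_atTop 1] with n hn
    have hpos : 0 < C * (n:ℝ) ^ α := by
      apply mul_pos hC
      apply Real.rpow_pos_of_pos
      exact_mod_cast hn
    simp [hF, ← hz0, Real.zero_rpow (ne_of_gt hpos)]
  -- z > 0 case
  set L : ℝ := Real.log z with hL
  set d : ℝ := (C * |L| + 1) / c with hd
  have hd0 : 0 ≤ d := by positivity
  -- eventual facts
  have htend : Filter.Tendsto (fun n : ℕ => c * (n : ℝ) ^ α) atTop atTop :=
    ((tendsto_rpow_atTop hα).const_mul_atTop hc).comp tendsto_natCast_atTop_atTop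
  have hev1 : ∀ᶠ n : ℕ in atTop, Real.exp (d * (c * (n:ℝ) ^ α)) ≤ Real.Gamma (c * (n:ℝ) ^ α) :=
    htend.eventually (gamma_ge_exp d hd0)
  have hlog : ∀ᶠ n : ℕ in atTop, (β + 2) * Real.log (n:ℝ) ≤ (n:ℝ) ^ α := by
    have h := ((isLittleO_log_rpow_atTop hα).const_mul_left (β + 2)).bound (by norm_num : (0:ℝ) < 1)
    have h2 := tendsto_natCast_atTop_atTop (R := ℝ) |>.eventually h
    filter_upwards [h2, eventually_ge_atTop 1] with n hn hn1
    have hlogpos : 0 ≤ Real.log (n:ℝ) := Real.log_nonneg (by exact_mod_cast hn1)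
    have : |(β + 2) * Real.log (n:ℝ)| ≤ 1 * |(n:ℝ) ^ α| := by
      rw [abs_mul]
      simpa [Real.norm_eq_abs] using hn
    calc (β + 2) * Real.log (n:ℝ) ≤ |(β + 2) * Real.log (n:ℝ)| := le_abs_self _
      _ ≤ 1 * |(n:ℝ) ^ α| := this
      _ = (n:ℝ)^α := by
          rw [one_mul, abs_of_nonneg (Real.rpow_nonneg (by positivity) α)]
  apply summable_of_isBigO_nat (g := fun n : ℕ => ((n:ℝ) ^ 2)⁻¹)
  · have : Summable (fun n : ℕ => 1 / (n:ℝ) ^ 2) := summable_one_div_nat_pow.mpr (by norm_num)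
    apply this.congr
    intro n
    simp [one_div, Real.norm_eq_abs, abs_of_nonneg (by positivity : (0:ℝ) ≤ ((n:ℝ)^2)⁻¹)]
  · apply Asymptotics.IsBigO.of_bound 1
    filter_upwards [hev1, hlog, eventually_ge_atTop 1] with n hev hlg hn1
    have hn1' : (1:ℝ) ≤ (n:ℝ) := by exact_mod_cast hn1
    have hnpos : (0:ℝ) < (n:ℝ) := by linarith
    have hxpos : 0 < c * (n:ℝ) ^ α := by positivity
    have hGpos : 0 < Real.Gamma (c * (n:ℝ) ^ α) := Real.Gamma_pos_of_pos hxpos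
    have hnum : 0 ≤ (n : ℝ) ^ β * z ^ (C * (n : ℝ) ^ α) := by positivity
    have hF0 : 0 ≤ F n := div_nonneg hnum hGpos.le
    have hexppos : (0:ℝ) < Real.exp (d * (c * (n:ℝ) ^ α)) := Real.exp_pos _
    have step1 : F n ≤ (n : ℝ) ^ β * z ^ (C * (n : ℝ) ^ α) / Real.exp (d * (c * (n:ℝ) ^ α)) :=
      div_le_div_of_nonneg_left hnum hexppos hev
    have hrw : (n : ℝ) ^ β * z ^ (C * (n : ℝ) ^ α) / Real.exp (d * (c * (n:ℝ) ^ α))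
        = Real.exp (β * Real.log n + C * (n:ℝ)^α * L - d * (c * (n:ℝ) ^ α)) := by
      rw [Real.rpow_def_of_pos hnpos, Real.rpow_def_of_pos hzpos,
        ← Real.exp_add, ← Real.exp_sub]
      rw [hL]
      ring_nf
    have hdc : d * c = C * |L| + 1 := by
      rw [hd, div_mul_cancel₀ _ (ne_of_gt hc)]
    have step2 : β * Real.log n + C * (n:ℝ)^α * L - d * (c * (n:ℝ) ^ α)
        ≤ -(2 * Real.log n) := by
      have hLabs : C * (n:ℝ)^α * L ≤ C * |L| * (n:ℝ)^α := by
        have hle := mul_le_mul_of_nonneg_left (le_abs_self L)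
          (show (0:ℝ) ≤ C * (n:ℝ)^α by positivity)
        have h2 : C * (n:ℝ)^α * |L| = C * |L| * (n:ℝ)^α := by ring
        nlinarith
      have : d * (c * (n:ℝ) ^ α) = (C * |L| + 1) * (n:ℝ)^α := by
        rw [← mul_assoc, hdc]
      rw [this]
      nlinarith [hlg]
    have step3 : Real.exp (-(2 * Real.log n)) = ((n:ℝ) ^ 2)⁻¹ := by
      rw [Real.exp_neg]
      congr 1
      rw [show (2:ℝ) * Real.log n = Real.log n * 2 by ring, Real.exp_mul, Real.exp_log hnpos]
      norm_num
    rw [Real.norm_eq_abs, Real.norm_eq_abs, abs_of_nonneg hF0, one_mul,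
      abs_of_nonneg (by positivity : (0:ℝ) ≤ ((n:ℝ)^2)⁻¹)]
    calc F n ≤ _ := step1
      _ = _ := hrw
      _ ≤ Real.exp (-(2 * Real.log n)) := Real.exp_le_exp.mpr step2
      _ = ((n:ℝ) ^ 2)⁻¹ := step3
end

section
/- Let n ≥ 3 be an integer and γ ≥ (n−2)/2 with γ > 0. Then for all r, s, t > 0, |∂_r P_γ(r,s,t)| ≤ ( γ/r + r/(2t) + s/(2t) ) · P_γ(r,s,t), where ∂_r denotes the derivative with respect to r. -/
open MeasureTheory intervalIntegral Real Set Metric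


/-- `ℓ(r,s,t) = (rs)^{-n/2} (rs/(2t)) e^{-(r²+s²)/(4t)}`. -/
noncomputable def ellK (n : ℕ) (r s t : ℝ) : ℝ :=
  (r * s) ^ (-(n : ℝ) / 2) * (r * s / (2 * t)) * Real.exp (-(r ^ 2 + s ^ 2) / (4 * t))

/-- `P_γ(r,s,t) = ℓ(r,s,t) I_γ(rs/(2t))`, the `γ`-th term of the heat kernel on a cone. -/
noncomputable def Pgam (n : ℕ) (γ r s t : ℝ) : ℝ :=
  ellK n r s t * besselI γ (r * s / (2 * t))

noncomputable def Jf (p z : ℝ) : ℝ := ∫ τ in (-1:ℝ)..1, (1 - τ ^ 2) ^ p * Real.exp (z * τ)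
noncomputable def Jf1 (p z : ℝ) : ℝ := ∫ τ in (-1:ℝ)..1, (1 - τ ^ 2) ^ p * (τ * Real.exp (z * τ))

lemma cont_base {p : ℝ} (hp : 0 ≤ p) : Continuous fun τ : ℝ => (1 - τ ^ 2) ^ p :=
  (continuous_const.sub (continuous_pow 2)).rpow_const fun _ => Or.inr hp

lemma Jf_intble {p : ℝ} (z : ℝ) (hp : 0 ≤ p) :
    IntervalIntegrable (fun τ => (1 - τ ^ 2) ^ p * Real.exp (z * τ)) volume (-1) 1 :=
  (((cont_base hp).mul (Real.continuous_exp.comp (continuous_const.mul continuous_id)))).intervalIntegrable _ _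

lemma Jf1_intble {p : ℝ} (z : ℝ) (hp : 0 ≤ p) :
    IntervalIntegrable (fun τ => (1 - τ ^ 2) ^ p * (τ * Real.exp (z * τ))) volume (-1) 1 :=
  (((cont_base hp).mul (continuous_id.mul (Real.continuous_exp.comp (continuous_const.mul continuous_id))))).intervalIntegrable _ _

lemma Jf_pos {p : ℝ} (z : ℝ) (hp : 0 ≤ p) : 0 < Jf p z := by
  apply intervalIntegral_pos_of_pos_on (Jf_intble z hp)
  · intro x hx
    have h1 : 0 < 1 - x ^ 2 := by nlinarith [hx.1, hx.2]
    positivity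
  · norm_num

lemma Jf1_abs_le {p : ℝ} (z : ℝ) (hp : 0 ≤ p) : |Jf1 p z| ≤ Jf p z := by
  have h1 : |Jf1 p z| ≤ ∫ τ in (-1:ℝ)..1, |(1 - τ ^ 2) ^ p * (τ * Real.exp (z * τ))| :=
    intervalIntegral.abs_integral_le_integral_abs (by norm_num)
  refine h1.trans (intervalIntegral.integral_mono_on (by norm_num)
    ((Jf1_intble z hp).abs) (Jf_intble z hp) fun τ hτ => ?_)
  have h2 : 0 ≤ 1 - τ ^ 2 := by
    rcases hτ with ⟨h3, h4⟩; nlinarith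
  have h5 : (0:ℝ) ≤ (1 - τ ^ 2) ^ p := Real.rpow_nonneg h2 p
  rw [abs_mul, abs_mul, abs_of_nonneg h5, Real.abs_exp]
  have h6 : |τ| ≤ 1 := by
    rw [abs_le]; exact ⟨hτ.1, hτ.2⟩
  calc (1 - τ ^ 2) ^ p * (|τ| * Real.exp (z * τ))
      ≤ (1 - τ ^ 2) ^ p * (1 * Real.exp (z * τ)) := by
        gcongr
    _ = (1 - τ ^ 2) ^ p * Real.exp (z * τ) := by ring

lemma hasDerivAt_Jf {p : ℝ} (z : ℝ) (hp : 0 ≤ p) : HasDerivAt (Jf p) (Jf1 p z) z := by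
  have key := intervalIntegral.hasDerivAt_integral_of_dominated_loc_of_deriv_le
    (F := fun x τ => (1 - τ ^ 2) ^ p * Real.exp (x * τ))
    (F' := fun x τ => (1 - τ ^ 2) ^ p * (τ * Real.exp (x * τ)))
    (x₀ := z) (a := (-1:ℝ)) (b := 1) (μ := volume)
    (bound := fun τ => (1 - τ ^ 2) ^ p * Real.exp (|z| + 1))
    (ball_mem_nhds z one_pos) ?_ (Jf_intble z hp) ?_ ?_ ?_ ?_
  · exact key.2
  · filter_upwards with x
    exact (((cont_base hp).mul (Real.continuous_exp.comp (continuous_const.mul continuous_id)))).aestronglyMeasurable.restrict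
  · exact (((cont_base hp).mul (continuous_id.mul (Real.continuous_exp.comp (continuous_const.mul continuous_id))))).aestronglyMeasurable.restrict
  · filter_upwards with τ hτ x hx
    have hτ' : τ ∈ Set.Ioc (-1:ℝ) 1 := by
      simpa [Set.uIoc_of_le (by norm_num : (-1:ℝ) ≤ 1)] using hτ
    have h2 : 0 ≤ 1 - τ ^ 2 := by nlinarith [hτ'.1, hτ'.2]
    have h5 : (0:ℝ) ≤ (1 - τ ^ 2) ^ p := Real.rpow_nonneg h2 p
    have h6 : |τ| ≤ 1 := abs_le.2 ⟨hτ'.1.le, hτ'.2⟩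
    have hx' : |x| < |z| + 1 := by
      have := mem_ball_iff_norm.1 hx
      calc |x| = |z + (x - z)| := by ring_nf
        _ ≤ |z| + |x - z| := abs_add_le _ _
        _ < |z| + 1 := by
            have : |x - z| < 1 := by simpa [Real.dist_eq] using hx
            linarith
    have h8 : x * τ ≤ |z| + 1 := by
      calc x * τ ≤ |x * τ| := le_abs_self _
        _ = |x| * |τ| := abs_mul _ _
        _ ≤ (|z| + 1) * 1 := by
            exact mul_le_mul hx'.le h6 (abs_nonneg τ) (by positivity)
        _ = |z| + 1 := mul_one _
    rw [Real.norm_eq_abs, abs_mul, abs_mul, abs_of_nonneg h5, Real.abs_exp]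
    calc (1 - τ ^ 2) ^ p * (|τ| * Real.exp (x * τ))
        ≤ (1 - τ ^ 2) ^ p * (1 * Real.exp (|z| + 1)) :=
          mul_le_mul_of_nonneg_left
            (mul_le_mul h6 (Real.exp_le_exp.2 h8) (Real.exp_pos _).le zero_le_one) h5
      _ = (1 - τ ^ 2) ^ p * Real.exp (|z| + 1) := by ring
  · exact ((cont_base hp).mul continuous_const).intervalIntegrable _ _
  · filter_upwards with τ _ x _
    have : HasDerivAt (fun x : ℝ => x * τ) τ x := by
      simpa using (hasDerivAt_id x).mul_const τ
    have := (this.exp).const_mul ((1 - τ ^ 2) ^ p)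
    simpa [mul_comm, mul_left_comm] using this


set_option maxHeartbeats 1000000 in
/-- For `n ≥ 3` and `γ ≥ (n−2)/2` with `γ > 0`, for all `r, s, t > 0`,
`|∂_r P_γ(r,s,t)| ≤ (γ/r + r/(2t) + s/(2t)) P_γ(r,s,t)`. -/
theorem stmt13 (n : ℕ) (hn : 3 ≤ n) (γ : ℝ) (hγ : 0 < γ)
    (hγn : ((n : ℝ) - 2) / 2 ≤ γ)
    (r s t : ℝ) (hr : 0 < r) (hs : 0 < s) (ht : 0 < t) :
    |deriv (fun r' => Pgam n γ r' s t) r| ≤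
      (γ / r + r / (2 * t) + s / (2 * t)) * Pgam n γ r s t := by
  have hn3 : (3:ℝ) ≤ (n:ℝ) := by exact_mod_cast hn
  have hp : (0:ℝ) ≤ γ - 1/2 := by linarith
  have hα0 : 0 ≤ γ + 1 - (n:ℝ)/2 := by linarith
  have hαγ : γ + 1 - (n:ℝ)/2 ≤ γ := by linarith
  set c : ℝ := s / (2*t) with hc_def
  set α : ℝ := γ + 1 - (n:ℝ)/2 with hα_def
  set K : ℝ := Real.sqrt Real.pi * Real.Gamma (γ + 1/2) with hK_def
  have hK : 0 < K := mul_pos (Real.sqrt_pos.2 Real.pi_pos) (Real.Gamma_pos_of_pos (by linarith))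
  set D : ℝ := s ^ (-(n:ℝ)/2) * (s/(2*t)) * Real.exp (-(s^2)/(4*t)) * ((s/(4*t))^γ / K)
    with hD_def
  have hc : 0 < c := by positivity
  have hD : 0 < D := by
    have h1 : 0 < s ^ (-(n:ℝ)/2) := Real.rpow_pos_of_pos hs _
    have h2 : 0 < (s/(4*t))^γ := Real.rpow_pos_of_pos (by positivity) _
    positivity
  clear_value c α K D
  have key : ∀ r' : ℝ, 0 < r' → Pgam n γ r' s t
      = D * (r' ^ α * (Real.exp (-(r'^2)/(4*t)) * Jf (γ-1/2) (c * r'))) := by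
    intro r' hr'
    have e5 : r' * s / (2*t) = c * r' := by rw [hc_def]; ring
    have e1 : (r'*s) ^ (-(n:ℝ)/2) = r' ^ (-(n:ℝ)/2) * s ^ (-(n:ℝ)/2) :=
      Real.mul_rpow hr'.le hs.le
    have e2 : (c * r' / 2) ^ γ = r' ^ γ * (s/(4*t)) ^ γ := by
      rw [show c * r' / 2 = r' * (s/(4*t)) by rw [hc_def]; ring,
        Real.mul_rpow hr'.le (by positivity)]
    have e3 : Real.exp (-(r'^2 + s^2)/(4*t))
        = Real.exp (-(r'^2)/(4*t)) * Real.exp (-(s^2)/(4*t)) := by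
      rw [← Real.exp_add]; congr 1; ring
    have e4 : r' ^ α = r' ^ (-(n:ℝ)/2) * r' * r' ^ γ := by
      rw [hα_def, show (γ + 1 - (n:ℝ)/2) = (-(n:ℝ)/2 + 1) + γ by ring,
        Real.rpow_add hr', Real.rpow_add hr', Real.rpow_one]
    unfold Pgam ellK besselI
    rw [e5, ← hK_def, e1, e2, e3, hD_def, e4, hc_def]
    unfold Jf
    ring
  have hJpos : 0 < Jf (γ-1/2) (c*r) := Jf_pos _ hp
  have hJ1 : |Jf1 (γ-1/2) (c*r)| ≤ Jf (γ-1/2) (c*r) := Jf1_abs_le _ hp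
  have h1 : HasDerivAt (fun r' : ℝ => r' ^ α) (α * r ^ (α-1)) r :=
    Real.hasDerivAt_rpow_const (Or.inl hr.ne')
  have h2 := (((hasDerivAt_pow 2 r).neg.div_const (4*t)).exp)
  have h3 : HasDerivAt (fun r' : ℝ => Jf (γ-1/2) (c * r')) (Jf1 (γ-1/2) (c*r) * c) r := by
    have := (hasDerivAt_Jf (c*r) hp).comp r ((hasDerivAt_id r).const_mul c)
    simpa [Function.comp_def] using this
  have hg := ((h1.mul (h2.mul h3)).const_mul D)
  have hEq : (fun r' => Pgam n γ r' s t) =ᶠ[nhds r]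
      (fun r' : ℝ => D * (r' ^ α * (Real.exp (-(r'^2)/(4*t)) * Jf (γ-1/2) (c * r')))) := by
    filter_upwards [Ioi_mem_nhds hr] with r' hr' using key r' hr'
  rw [hEq.deriv_eq, show deriv (fun r' : ℝ => D * (r' ^ α * (Real.exp (-(r'^2)/(4*t)) * Jf (γ-1/2) (c * r')))) r = D * (α * r^(α-1) * (Real.exp (-(r^2)/(4*t)) * Jf (γ-1/2) (c*r)) + r^α * (Real.exp (-(r^2)/(4*t)) * (-(((2:ℕ):ℝ) * r^(2-1))/(4*t)) * Jf (γ-1/2) (c*r) + Real.exp (-(r^2)/(4*t)) * (Jf1 (γ-1/2) (c*r) * c))) from hg.deriv]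
  set J := Jf (γ-1/2) (c*r) with hJ_def
  set J1 := Jf1 (γ-1/2) (c*r) with hJ1_def
  set E := Real.exp (-(r^2)/(4*t)) with hE_def
  have hE : 0 < E := Real.exp_pos _
  clear_value J J1 E
  have hrα : 0 < r^α := Real.rpow_pos_of_pos hr α
  have hval : D * (α * r^(α-1) * (E * J)
        + r^α * (E * (-(((2:ℕ):ℝ) * r^(2-1))/(4*t)) * J + E * (J1 * c)))
      = (D * r^α * E) * (α/r * J - r/(2*t) * J + c * J1) := by
    rw [show r^(α-1) = r^α / r from by rw [Real.rpow_sub hr, Real.rpow_one]]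
    have ht' : (2:ℝ)*t ≠ 0 := by positivity
    field_simp
    ring
  rw [hval]
  have hXbound : |α/r * J - r/(2*t) * J + c * J1| ≤ (γ/r + r/(2*t) + c) * J := by
    have hAG : α/r ≤ γ/r := by gcongr
    have hA : 0 ≤ α/r := div_nonneg hα0 hr.le
    have hG : 0 ≤ γ/r := div_nonneg hγ.le hr.le
    have hR : 0 ≤ r/(2*t) := by positivity
    have hJ1' := abs_le.1 hJ1
    rw [abs_le]
    constructor <;>
      nlinarith [mul_nonneg (sub_nonneg.2 hAG) hJpos.le, mul_nonneg hR hJpos.le,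
        mul_nonneg hc.le (sub_nonneg.2 hJ1'.2),
        mul_nonneg hc.le (by linarith [hJ1'.1] : (0:ℝ) ≤ J + J1),
        mul_nonneg hA hJpos.le, mul_nonneg hG hJpos.le]
  calc |D * r^α * E * (α/r * J - r/(2*t) * J + c * J1)|
      = D * r^α * E * |α/r * J - r/(2*t) * J + c * J1| := by
        rw [abs_mul, abs_of_nonneg (mul_nonneg (mul_nonneg hD.le hrα.le) hE.le)]
    _ ≤ (D * r^α * E) * ((γ/r + r/(2*t) + c) * J) :=
        mul_le_mul_of_nonneg_left hXbound (mul_nonneg (mul_nonneg hD.le hrα.le) hE.le)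
    _ = (γ/r + r/(2*t) + c) * Pgam n γ r s t := by rw [key r hr, ← hE_def, ← hJ_def]; ring
end

section
/- Let n ≥ 3 be an integer, γ > 0, and R, S > 0. Then there exist constants C > 0 and T > 0 such that for all t ≥ T, all r with 0 < r ≤ R·t^{1/2}, and all s with 0 < s ≤ S, |P_γ(r,s,t) − (1/(2^{2γ+1}·Γ(γ+1)))·(rs)^{γ − n/2 + 1}·t^{-(γ+1)}·e^{-r²/(4t)}| ≤ C·t^{-1}·(rs)^{γ − n/2 + 1}·t^{-(γ+1)}·e^{-r²/(4t)}. -/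
open MeasureTheory intervalIntegral Real Set


lemma real_beta {a b : ℝ} (ha : 0 < a) (hb : 0 < b) :
    ∫ x in (0:ℝ)..1, x ^ (a - 1) * (1 - x) ^ (b - 1) =
      Real.Gamma a * Real.Gamma b / Real.Gamma (a + b) := by
  have hcb := Complex.Gamma_mul_Gamma_eq_betaIntegral
    (s := (a:ℂ)) (t := (b:ℂ)) (by simpa using ha) (by simpa using hb)
  have heq : Complex.betaIntegral a b =
      ((∫ x in (0:ℝ)..1, x ^ (a - 1) * (1 - x) ^ (b - 1) : ℝ) : ℂ) := by
    rw [Complex.betaIntegral, ← intervalIntegral.integral_ofReal]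
    refine intervalIntegral.integral_congr fun x hx => ?_
    rw [Set.uIcc_of_le (by norm_num : (0:ℝ) ≤ 1)] at hx
    rw [Complex.ofReal_mul, Complex.ofReal_cpow hx.1,
      Complex.ofReal_cpow (by linarith [hx.2] : (0:ℝ) ≤ 1 - x)]
    push_cast
    ring
  have hGab : Complex.Gamma ((a:ℂ) + b) = (Real.Gamma (a+b) : ℂ) := by
    rw [← Complex.ofReal_add, Complex.Gamma_ofReal]
  have hGabpos : Real.Gamma (a + b) ≠ 0 := (Real.Gamma_pos_of_pos (by linarith)).ne'
  rw [heq, hGab, Complex.Gamma_ofReal, Complex.Gamma_ofReal, ← Complex.ofReal_mul,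
    ← Complex.ofReal_mul] at hcb
  have := Complex.ofReal_injective hcb
  field_simp
  linarith [this]


lemma wInt01 {c : ℝ} (hc : -1 < c) :
    IntervalIntegrable (fun τ : ℝ => (1 - τ ^ 2) ^ c) volume 0 1 := by
  have h1 : IntervalIntegrable (fun τ : ℝ => (1 - τ) ^ c) volume 0 1 := by
    have := (intervalIntegrable_rpow' (a := 0) (b := 1) hc).comp_sub_left 1
    simpa using this.symm
  have h2 : ContinuousOn (fun τ : ℝ => (1 + τ) ^ c) (Set.uIcc 0 1) := by
    apply ContinuousOn.rpow_const (by fun_prop)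
    intro x hx
    rw [Set.uIcc_of_le (by norm_num : (0:ℝ) ≤ 1)] at hx
    exact Or.inl (by nlinarith [hx.1])
  have h3 := h1.mul_continuousOn h2
  rw [intervalIntegrable_iff] at h3 ⊢
  refine h3.congr_fun (fun τ hτ => ?_) measurableSet_uIoc
  rw [Set.uIoc_of_le (by norm_num : (0:ℝ) ≤ 1)] at hτ
  rw [show (1 : ℝ) - τ ^ 2 = (1 - τ) * (1 + τ) by ring,
    Real.mul_rpow (by nlinarith [hτ.2]) (by nlinarith [hτ.1])]

lemma wEven (c : ℝ) (f : ℝ → ℝ) :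
    (fun τ : ℝ => (1 - (-τ) ^ 2) ^ c * f ((-τ)^2)) = fun τ : ℝ => (1 - τ ^ 2) ^ c * f (τ^2) := by
  funext τ; rw [neg_sq]

lemma wIntFull {c : ℝ} (hc : -1 < c) :
    IntervalIntegrable (fun τ : ℝ => (1 - τ ^ 2) ^ c) volume (-1) 1 := by
  have h01 := wInt01 hc
  have hneg : IntervalIntegrable (fun τ : ℝ => (1 - τ ^ 2) ^ c) volume (-1) 0 := by
    have := (IntervalIntegrable.iff_comp_neg (f := fun τ : ℝ => (1 - τ ^ 2) ^ c)
      (a := 0) (b := 1)).mp h01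
    simp only [neg_sq] at this ⊢
    simpa [neg_zero] using this.symm
  exact hneg.trans h01


lemma sq_image_Ioo : (fun τ : ℝ => τ ^ 2) '' Set.Ioo 0 1 = Set.Ioo 0 1 := by
  ext y
  constructor
  · rintro ⟨x, ⟨hx0, hx1⟩, rfl⟩
    refine ⟨by positivity, ?_⟩
    show x ^ 2 < 1
    nlinarith
  · rintro ⟨hy0, hy1⟩
    exact ⟨Real.sqrt y, ⟨Real.sqrt_pos.mpr hy0,
      by nlinarith [Real.sq_sqrt hy0.le, Real.sqrt_nonneg y]⟩, Real.sq_sqrt hy0.le⟩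

lemma subst_sq {c : ℝ} :
    ∫ x in Set.Ioo (0:ℝ) 1, x ^ ((1:ℝ)/2 - 1) * (1 - x) ^ c =
      ∫ τ in Set.Ioo (0:ℝ) 1, 2 * (1 - τ ^ 2) ^ c := by
  have h := MeasureTheory.integral_image_eq_integral_abs_deriv_smul
    (s := Set.Ioo (0:ℝ) 1) (f := fun τ => τ ^ 2) (f' := fun τ => 2 * τ)
    measurableSet_Ioo
    (fun x _ => by simpa using (hasDerivAt_pow 2 x).hasDerivWithinAt)
    (fun x hx y hy hxy => by
      have hxy' : x ^ 2 = y ^ 2 := hxy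
      have : Real.sqrt (x ^ 2) = Real.sqrt (y ^ 2) := by rw [hxy']
      rwa [Real.sqrt_sq hx.1.le, Real.sqrt_sq hy.1.le] at this)
    (fun x => x ^ ((1:ℝ)/2 - 1) * (1 - x) ^ c)
  rw [sq_image_Ioo] at h
  rw [h]
  refine setIntegral_congr_fun measurableSet_Ioo fun τ hτ => ?_
  have hτ0 := hτ.1
  have h2 : (τ ^ 2 : ℝ) ^ ((1:ℝ)/2 - 1) = τ⁻¹ := by
    rw [show ((1:ℝ)/2 - 1) = -(1/2) by norm_num, Real.rpow_neg (sq_nonneg τ),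
      ← Real.sqrt_eq_rpow, Real.sqrt_sq hτ0.le]
  rw [smul_eq_mul, h2, abs_of_pos (by linarith)]
  field_simp

lemma A_value {γ : ℝ} (hγ : 0 < γ) :
    ∫ τ in (-1:ℝ)..1, (1 - τ ^ 2) ^ (γ - 1/2) =
      Real.sqrt Real.pi * Real.Gamma (γ + 1/2) / Real.Gamma (γ + 1) := by
  have hbeta : ∫ x in (0:ℝ)..1, x ^ ((1:ℝ)/2 - 1) * (1 - x) ^ ((γ + 1/2) - 1) =
      Real.Gamma (1/2) * Real.Gamma (γ + 1/2) / Real.Gamma (1/2 + (γ + 1/2)) :=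
    real_beta (by norm_num) (by linarith)
  have hexp : (γ + 1/2) - 1 = γ - 1/2 := by ring
  have harg : (1:ℝ)/2 + (γ + 1/2) = γ + 1 := by ring
  rw [hexp, harg, Real.Gamma_one_half_eq] at hbeta
  -- split [-1,1] into [-1,0] and [0,1]
  have hW01 := wInt01 (show (-1:ℝ) < γ - 1/2 by linarith)
  have hWneg : IntervalIntegrable (fun τ : ℝ => (1 - τ ^ 2) ^ (γ - 1/2)) volume (-1) 0 := by
    have := (IntervalIntegrable.iff_comp_neg (f := fun τ : ℝ => (1 - τ ^ 2) ^ (γ - 1/2))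
      (a := 0) (b := 1)).mp hW01
    simp only [neg_sq] at this ⊢
    simpa [neg_zero] using this.symm
  have hsplit : ∫ τ in (-1:ℝ)..1, (1 - τ ^ 2) ^ (γ - 1/2) =
      (∫ τ in (-1:ℝ)..0, (1 - τ ^ 2) ^ (γ - 1/2)) +
      ∫ τ in (0:ℝ)..1, (1 - τ ^ 2) ^ (γ - 1/2) :=
    (intervalIntegral.integral_add_adjacent_intervals hWneg hW01).symm
  have heven : ∫ τ in (-1:ℝ)..0, (1 - τ ^ 2) ^ (γ - 1/2) =
      ∫ τ in (0:ℝ)..1, (1 - τ ^ 2) ^ (γ - 1/2) := by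
    have := intervalIntegral.integral_comp_neg (a := (0:ℝ)) (b := 1)
      (fun τ : ℝ => (1 - τ ^ 2) ^ (γ - 1/2))
    simp only [neg_sq, neg_zero] at this
    rw [← this]
  -- relate to the beta integral via substitution
  have hsub : ∫ x in (0:ℝ)..1, x ^ ((1:ℝ)/2 - 1) * (1 - x) ^ (γ - 1/2) =
      2 * ∫ τ in (0:ℝ)..1, (1 - τ ^ 2) ^ (γ - 1/2) := by
    rw [intervalIntegral.integral_of_le (by norm_num : (0:ℝ) ≤ 1),
      intervalIntegral.integral_of_le (by norm_num : (0:ℝ) ≤ 1),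
      MeasureTheory.integral_Ioc_eq_integral_Ioo, MeasureTheory.integral_Ioc_eq_integral_Ioo,
      subst_sq, ← MeasureTheory.integral_const_mul]
  rw [hsplit, heven, ← two_mul, ← hsub, hbeta]

lemma bessel_est {γ z : ℝ} (hγ : 0 < γ) (hz0 : 0 ≤ z) (hz1 : z ≤ 1) :
    |besselI γ z - (z / 2) ^ γ / Real.Gamma (γ + 1)| ≤
      (z / 2) ^ γ / Real.Gamma (γ + 1) * z ^ 2 := by
  set c : ℝ := γ - 1/2 with hc
  have hc' : (-1:ℝ) < c := by rw [hc]; linarith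
  set w : ℝ → ℝ := fun τ => (1 - τ ^ 2) ^ c with hw
  set A : ℝ := ∫ τ in (-1:ℝ)..1, w τ with hA
  have hAval : A = Real.sqrt Real.pi * Real.Gamma (γ + 1/2) / Real.Gamma (γ + 1) :=
    A_value hγ
  have hW : IntervalIntegrable w volume (-1) 1 := wIntFull hc'
  have hWt : IntervalIntegrable (fun τ => w τ * τ) volume (-1) 1 :=
    hW.mul_continuousOn continuousOn_id
  have hWe : IntervalIntegrable (fun τ => w τ * Real.exp (z * τ)) volume (-1) 1 :=
    hW.mul_continuousOn (by fun_prop)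
  have hodd : ∫ τ in (-1:ℝ)..1, w τ * τ = 0 := by
    have h := intervalIntegral.integral_comp_neg (a := (-1:ℝ)) (b := 1)
      (fun τ : ℝ => w τ * τ)
    simp only [hw, neg_sq, neg_neg, mul_neg] at h
    have h2 : ∫ τ in (-1:ℝ)..1, -((1 - τ ^ 2) ^ c * τ) =
        -∫ τ in (-1:ℝ)..1, (1 - τ ^ 2) ^ c * τ := intervalIntegral.integral_neg
    rw [h2] at h
    linarith [h]
  set J : ℝ := ∫ τ in (-1:ℝ)..1, w τ * Real.exp (z * τ) with hJ
  have hdiff : J - A = ∫ τ in (-1:ℝ)..1, w τ * (Real.exp (z * τ) - 1 - z * τ) := by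
    have h1 : ∫ τ in (-1:ℝ)..1,
        (w τ * Real.exp (z * τ) - (w τ + z * (w τ * τ))) =
        J - (A + z * (∫ τ in (-1:ℝ)..1, w τ * τ)) := by
      rw [intervalIntegral.integral_sub hWe (hW.add (hWt.const_mul z)),
        intervalIntegral.integral_add hW (hWt.const_mul z),
        intervalIntegral.integral_const_mul]
    rw [hodd, mul_zero, add_zero] at h1
    rw [← h1]
    congr 1
    funext τ
    ring
  have hAnn : 0 ≤ A := by
    rw [hAval]
    have := Real.Gamma_pos_of_pos (show (0:ℝ) < γ + 1/2 by linarith)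
    have := Real.Gamma_pos_of_pos (show (0:ℝ) < γ + 1 by linarith)
    positivity
  have hkey : |J - A| ≤ A * z ^ 2 := by
    rw [hdiff]
    calc |∫ τ in (-1:ℝ)..1, w τ * (Real.exp (z * τ) - 1 - z * τ)|
        ≤ ∫ τ in (-1:ℝ)..1, |w τ * (Real.exp (z * τ) - 1 - z * τ)| :=
          intervalIntegral.abs_integral_le_integral_abs (by norm_num)
      _ ≤ ∫ τ in (-1:ℝ)..1, w τ * z ^ 2 := by
          apply intervalIntegral.integral_mono_on (by norm_num)
            ((hW.mul_continuousOn (by fun_prop)).abs) (hW.mul_const _)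
          intro τ hτ
          have hwnn : 0 ≤ w τ := Real.rpow_nonneg (by nlinarith [hτ.1, hτ.2]) _
          rw [abs_mul, abs_of_nonneg hwnn]
          apply mul_le_mul_of_nonneg_left _ hwnn
          have habs : |z * τ| ≤ 1 := by
            rw [abs_mul]
            have : |τ| ≤ 1 := abs_le.mpr ⟨hτ.1, hτ.2⟩
            calc |z| * |τ| ≤ 1 * 1 := by
                  apply mul_le_mul _ this (abs_nonneg _) (by norm_num)
                  rwa [abs_of_nonneg hz0]
              _ = 1 := by norm_num
          calc |Real.exp (z * τ) - 1 - z * τ| ≤ (z * τ) ^ 2 :=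
                Real.abs_exp_sub_one_sub_id_le habs
            _ ≤ z ^ 2 := by
                nlinarith [mul_nonneg (mul_nonneg (sq_nonneg z)
                  (by linarith [hτ.2] : (0:ℝ) ≤ 1 - τ)) (by linarith [hτ.1] : (0:ℝ) ≤ 1 + τ)]
      _ = A * z ^ 2 := by rw [intervalIntegral.integral_mul_const, hA]
  -- conclude
  have hDn : 0 < Real.sqrt Real.pi * Real.Gamma (γ + 1/2) := by
    have := Real.Gamma_pos_of_pos (show (0:ℝ) < γ + 1/2 by linarith)
    have := Real.sqrt_pos.mpr Real.pi_pos
    positivity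
  have hG1 : 0 < Real.Gamma (γ + 1) := Real.Gamma_pos_of_pos (by linarith)
  have hPnn : 0 ≤ (z / 2) ^ γ := Real.rpow_nonneg (by linarith) _
  have hbdef : besselI γ z = (z / 2) ^ γ / (Real.sqrt Real.pi * Real.Gamma (γ + 1/2)) * J := rfl
  have hmain : (z / 2) ^ γ / Real.Gamma (γ + 1) =
      (z / 2) ^ γ / (Real.sqrt Real.pi * Real.Gamma (γ + 1/2)) * A := by
    rw [hAval]
    field_simp
  rw [hbdef, hmain, ← mul_sub, abs_mul, abs_of_nonneg (by positivity)]
  calc (z / 2) ^ γ / (Real.sqrt Real.pi * Real.Gamma (γ + 1/2)) * |J - A|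
      ≤ (z / 2) ^ γ / (Real.sqrt Real.pi * Real.Gamma (γ + 1/2)) * (A * z ^ 2) := by
        apply mul_le_mul_of_nonneg_left hkey (by positivity)
    _ = (z / 2) ^ γ / (Real.sqrt Real.pi * Real.Gamma (γ + 1/2)) * A * z ^ 2 := by ring

set_option maxHeartbeats 1000000 in
/-- For `n ≥ 3`, `γ > 0` and `R, S > 0`, there are `C, T > 0` such that
for all `t ≥ T`, `0 < r ≤ R t^{1/2}` and `0 < s ≤ S`,
`|P_γ(r,s,t) − (1/(2^{2γ+1} Γ(γ+1))) (rs)^{γ−n/2+1} t^{-(γ+1)} e^{-r²/(4t)}|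
  ≤ C t^{-1} (rs)^{γ−n/2+1} t^{-(γ+1)} e^{-r²/(4t)}`. -/
theorem stmt14 (n : ℕ) (hn : 3 ≤ n) (γ R S : ℝ) (hγ : 0 < γ) (hR : 0 < R) (hS : 0 < S) :
    ∃ C : ℝ, 0 < C ∧ ∃ T : ℝ, 0 < T ∧ ∀ t : ℝ, T ≤ t →
      ∀ r : ℝ, 0 < r → r ≤ R * t ^ ((1:ℝ)/2) →
      ∀ s : ℝ, 0 < s → s ≤ S →
        |Pgam n γ r s t -
            1 / (2 ^ (2 * γ + 1) * Real.Gamma (γ + 1)) *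
              (r * s) ^ (γ - (n : ℝ) / 2 + 1) * t ^ (-(γ + 1)) *
              Real.exp (-r ^ 2 / (4 * t))| ≤
          C * t⁻¹ * (r * s) ^ (γ - (n : ℝ) / 2 + 1) * t ^ (-(γ + 1)) *
            Real.exp (-r ^ 2 / (4 * t)) := by
  have hG1 : 0 < Real.Gamma (γ + 1) := Real.Gamma_pos_of_pos (by linarith)
  have h2p : (0:ℝ) < 2 ^ (2 * γ + 1) := Real.rpow_pos_of_pos two_pos _
  set K : ℝ := (R * S) ^ 2 / 4 + S ^ 2 / 4 with hKdef
  have hK : 0 < K := by positivity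
  refine ⟨K / (2 ^ (2 * γ + 1) * Real.Gamma (γ + 1)), by positivity,
    max 1 ((R * S / 2) ^ 2), lt_of_lt_of_le one_pos (le_max_left _ _), ?_⟩
  intro t ht r hr0 hrR s hs0 hsS
  have ht1 : (1:ℝ) ≤ t := le_trans (le_max_left _ _) ht
  have ht0 : (0:ℝ) < t := by linarith
  have htRS : (R * S / 2) ^ 2 ≤ t := le_trans (le_max_right _ _) ht
  set u : ℝ := Real.sqrt t with hu
  have hu0 : 0 < u := Real.sqrt_pos.mpr ht0
  have hu2 : u ^ 2 = t := Real.sq_sqrt ht0.le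
  have hrR' : r ≤ R * u := by rwa [hu, Real.sqrt_eq_rpow]
  have huRS : R * S / 2 ≤ u := by
    have h := Real.sqrt_le_sqrt htRS
    rwa [Real.sqrt_sq (by positivity : (0:ℝ) ≤ R * S / 2)] at h
  set z : ℝ := r * s / (2 * t) with hz
  have hz0 : 0 < z := by positivity
  have hrsRS : r * s ≤ R * S * u :=
    le_trans (mul_le_mul hrR' hsS hs0.le (by positivity)) (le_of_eq (by ring))
  have hz1 : z ≤ 1 := by
    rw [hz, div_le_one (by positivity)]
    nlinarith [mul_le_mul_of_nonneg_right huRS hu0.le]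
  have hz2 : z ^ 2 ≤ (R * S) ^ 2 / (4 * t) := by
    rw [hz, div_pow, div_le_div_iff₀ (by positivity) (by positivity)]
    have h1 : (r * s) ^ 2 ≤ (R * S) ^ 2 * t := by
      nlinarith [mul_pos hr0 hs0, sq_nonneg (R * S * u - r * s)]
    nlinarith
  have hb := bessel_est hγ hz0.le hz1
  set G : ℝ := (z / 2) ^ γ / Real.Gamma (γ + 1) with hG
  have hGpos : 0 < G := by
    rw [hG]
    have := Real.rpow_pos_of_pos (by positivity : (0:ℝ) < z / 2) γ
    positivity
  set D : ℝ := (r * s) ^ (-(n : ℝ) / 2) with hD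
  have hDpos : 0 < D := Real.rpow_pos_of_pos (by positivity) _
  set E : ℝ := Real.exp (-r ^ 2 / (4 * t)) with hE
  set Q : ℝ := Real.exp (-s ^ 2 / (4 * t)) with hQ
  have hEpos : 0 < E := Real.exp_pos _
  have hQpos : 0 < Q := Real.exp_pos _
  have hQ1 : Q ≤ 1 := Real.exp_le_one_iff.mpr
    (div_nonpos_iff.mpr (Or.inr ⟨by nlinarith [sq_nonneg s], by linarith⟩))
  have h1Q : 1 - Q ≤ s ^ 2 / (4 * t) := by
    have h := Real.add_one_le_exp (-s ^ 2 / (4 * t))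
    have hns : -s ^ 2 / (4 * t) = -(s ^ 2 / (4 * t)) := by ring
    rw [hQ]; linarith [h, hns ▸ h]
  -- structural identities
  have hellK : ellK n r s t = D * z * (E * Q) := by
    rw [hE, hQ, ← Real.exp_add,
      show (-r ^ 2 / (4 * t) + -s ^ 2 / (4 * t)) = -(r ^ 2 + s ^ 2) / (4 * t) by ring]
    rfl
  have hrs0 : 0 < r * s := by positivity
  have e1 : (r * s) ^ (γ - (n : ℝ) / 2 + 1) = (r * s) ^ (-(n : ℝ) / 2) * (r * s) ^ (γ + 1) := by
    rw [← Real.rpow_add hrs0]; ring_nf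
  have e2 : (r * s) ^ (γ + 1) * t ^ (-(γ + 1)) = 2 ^ (γ + 1) * z ^ (γ + 1) := by
    rw [Real.rpow_neg ht0.le, ← div_eq_mul_inv, ← Real.div_rpow hrs0.le ht0.le,
      show r * s / t = 2 * z by rw [hz]; field_simp,
      Real.mul_rpow (by norm_num) hz0.le]
  have e3 : (2:ℝ) ^ (2 * γ + 1) * (z * (z / 2) ^ γ) = 2 ^ (γ + 1) * z ^ (γ + 1) := by
    have e3a : (z / 2) ^ γ = z ^ γ / 2 ^ γ := Real.div_rpow hz0.le (by norm_num : (0:ℝ) ≤ 2) γ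
    have e3b : z * z ^ γ = z ^ (γ + 1) := by
      rw [Real.rpow_add hz0, Real.rpow_one]; ring
    have e3c : (2:ℝ) ^ (2 * γ + 1) = 2 ^ (γ + 1) * 2 ^ γ := by
      rw [← Real.rpow_add two_pos]; ring_nf
    have h2g : (0:ℝ) < 2 ^ γ := Real.rpow_pos_of_pos two_pos γ
    calc (2:ℝ) ^ (2 * γ + 1) * (z * (z / 2) ^ γ)
        = 2 ^ (γ + 1) * 2 ^ γ * (z * (z ^ γ / 2 ^ γ)) := by rw [e3a, e3c]
      _ = 2 ^ (γ + 1) * (z * z ^ γ) := by field_simp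
      _ = 2 ^ (γ + 1) * z ^ (γ + 1) := by rw [e3b]
  have hpow : (r * s) ^ (γ - (n : ℝ) / 2 + 1) * t ^ (-(γ + 1)) =
      D * (2 ^ (2 * γ + 1) * (z * (z / 2) ^ γ)) := by
    rw [e1, mul_assoc, e2, ← e3, ← hD]
  have hM : 1 / (2 ^ (2 * γ + 1) * Real.Gamma (γ + 1)) *
      (r * s) ^ (γ - (n : ℝ) / 2 + 1) * t ^ (-(γ + 1)) * E = D * z * E * G := by
    calc 1 / (2 ^ (2 * γ + 1) * Real.Gamma (γ + 1)) *
        (r * s) ^ (γ - (n : ℝ) / 2 + 1) * t ^ (-(γ + 1)) * E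
        = 1 / (2 ^ (2 * γ + 1) * Real.Gamma (γ + 1)) *
            ((r * s) ^ (γ - (n : ℝ) / 2 + 1) * t ^ (-(γ + 1))) * E := by ring
      _ = 1 / (2 ^ (2 * γ + 1) * Real.Gamma (γ + 1)) *
            (D * (2 ^ (2 * γ + 1) * (z * (z / 2) ^ γ))) * E := by rw [hpow]
      _ = D * z * E * G := by rw [hG]; field_simp
  have hPgam : Pgam n γ r s t = D * z * (E * Q) * besselI γ z := by
    simp only [Pgam]
    rw [hellK, ← hz]
  have hIbound : |Q * besselI γ z - G| ≤ G * (K / t) := by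
    have h1 : |Q * besselI γ z - G| ≤ Q * |besselI γ z - G| + (1 - Q) * G := by
      rw [show Q * besselI γ z - G = Q * (besselI γ z - G) + (Q - 1) * G by ring]
      refine (abs_add_le _ _).trans ?_
      rw [abs_mul, abs_mul, abs_of_pos hQpos, abs_of_pos hGpos,
        abs_of_nonpos (by linarith : Q - 1 ≤ 0)]
      apply le_of_eq; ring
    have hs2 : s ^ 2 / (4 * t) ≤ S ^ 2 / (4 * t) := by
      gcongr
    have t1 : Q * |besselI γ z - G| ≤ 1 * (G * z ^ 2) :=
      mul_le_mul hQ1 hb (abs_nonneg _) zero_le_one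
    have t2 : (1 - Q) * G ≤ S ^ 2 / (4 * t) * G :=
      mul_le_mul_of_nonneg_right (le_trans h1Q hs2) hGpos.le
    have t3 : G * z ^ 2 ≤ G * ((R * S) ^ 2 / (4 * t)) :=
      mul_le_mul_of_nonneg_left hz2 hGpos.le
    have t4 : G * ((R * S) ^ 2 / (4 * t)) + S ^ 2 / (4 * t) * G = G * (K / t) := by
      rw [hKdef]; field_simp
    linarith
  have hRHS : K / (2 ^ (2 * γ + 1) * Real.Gamma (γ + 1)) * t⁻¹ *
      (r * s) ^ (γ - (n : ℝ) / 2 + 1) * t ^ (-(γ + 1)) * E = D * z * E * (G * (K / t)) := by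
    calc K / (2 ^ (2 * γ + 1) * Real.Gamma (γ + 1)) * t⁻¹ *
        (r * s) ^ (γ - (n : ℝ) / 2 + 1) * t ^ (-(γ + 1)) * E
        = K / (2 ^ (2 * γ + 1) * Real.Gamma (γ + 1)) * t⁻¹ *
            ((r * s) ^ (γ - (n : ℝ) / 2 + 1) * t ^ (-(γ + 1))) * E := by ring
      _ = K / (2 ^ (2 * γ + 1) * Real.Gamma (γ + 1)) * t⁻¹ *
            (D * (2 ^ (2 * γ + 1) * (z * (z / 2) ^ γ))) * E := by rw [hpow]
      _ = D * z * E * (G * (K / t)) := by rw [hG]; field_simp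
  rw [hPgam, hM, hRHS,
    show D * z * (E * Q) * besselI γ z - D * z * E * G =
      D * z * E * (Q * besselI γ z - G) by ring,
    abs_mul, abs_of_pos (by positivity : (0:ℝ) < D * z * E)]
  exact mul_le_mul_of_nonneg_left hIbound (by positivity)
end

section
/- Let n ≥ 3 be an integer, γ ≥ n/2 − 1 with γ > 0, and S > 0. Let φ : (0,∞) → ℝ be a measurable function supported in (0,S] with ∫₀^S |φ(s)|·s^{n−1} ds < ∞. Then for all r, t > 0, |w_γ(r,t)| ≤ (1/Γ(γ)) · (r·S)^{γ − n/2 + 1} · t^{-(γ+1)} · ∫₀^S |φ(s)|·s^{n−1} ds. -/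
open MeasureTheory

/-- `w_γ(r,t) = ∫₀^∞ P_γ(r,s,t) φ(s) s^{n-1} ds`. -/
noncomputable def wgam (n : ℕ) (γ : ℝ) (φ : ℝ → ℝ) (r t : ℝ) : ℝ :=
  ∫ s in Set.Ioi (0:ℝ), Pgam n γ r s t * φ s * s ^ (n - 1)

open Real

lemma realBeta {a b : ℝ} (ha : 0 < a) (hb : 0 < b) :
    Real.Gamma a * Real.Gamma b =
      Real.Gamma (a + b) * ∫ x in (0:ℝ)..1, x ^ (a-1) * (1-x) ^ (b-1) := by
  have h := Complex.Gamma_mul_Gamma_eq_betaIntegral (s := (a:ℂ)) (t := (b:ℂ))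
    (by simpa using ha) (by simpa using hb)
  have hbi : Complex.betaIntegral (a:ℂ) (b:ℂ) =
      ((∫ x in (0:ℝ)..1, x ^ (a-1) * (1-x) ^ (b-1) : ℝ) : ℂ) := by
    rw [Complex.betaIntegral, ← intervalIntegral.integral_ofReal]
    apply intervalIntegral.integral_congr
    intro x hx
    rw [Set.uIcc_of_le (by norm_num : (0:ℝ) ≤ 1)] at hx
    obtain ⟨hx0, hx1⟩ := hx
    push_cast
    rw [show (a:ℂ) - 1 = ((a - 1 : ℝ) : ℂ) by push_cast; ring,
      show (b:ℂ) - 1 = ((b - 1 : ℝ) : ℂ) by push_cast; ring,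
      show (1:ℂ) - (x:ℂ) = ((1 - x : ℝ) : ℂ) by push_cast; ring,
      ← Complex.ofReal_cpow hx0, ← Complex.ofReal_cpow (by linarith)]
  rw [hbi, show ((a:ℂ) + b) = ((a + b : ℝ) : ℂ) by push_cast; ring] at h
  rw [Complex.Gamma_ofReal, Complex.Gamma_ofReal, Complex.Gamma_ofReal] at h
  exact_mod_cast h

lemma J0_eq {γ : ℝ} (hγ : 0 < γ) :
    (∫ τ in (-1:ℝ)..1, (1 - τ^2) ^ (γ - 1/2)) =
      Real.sqrt π * Real.Gamma (γ + 1/2) / Real.Gamma (γ + 1) := by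
  have hΓh := Real.Gamma_pos_of_pos (show (0:ℝ) < γ + 1/2 by linarith)
  have hΓ1 := Real.Gamma_pos_of_pos (show (0:ℝ) < γ + 1 by linarith)
  have hΓ2 := Real.Gamma_pos_of_pos (show (0:ℝ) < 2*γ + 1 by linarith)
  have hsub := intervalIntegral.integral_comp_mul_add
      (a := 0) (b := 1) (fun τ : ℝ => (1 - τ^2) ^ (γ - 1/2)) (two_ne_zero) (-1)
  norm_num at hsub
  have hcongr : (∫ x in (0:ℝ)..1, (1 - (2*x + -1)^2) ^ (γ - 1/2))
      = ∫ x in (0:ℝ)..1, (4:ℝ)^(γ-1/2) * (x ^ (γ+1/2-1) * (1-x) ^ (γ+1/2-1)) := by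
    apply intervalIntegral.integral_congr
    intro x hx
    rw [Set.uIcc_of_le (by norm_num : (0:ℝ) ≤ 1)] at hx
    obtain ⟨h0, h1⟩ := hx
    show (1 - (2*x + -1)^2) ^ (γ - 1/2) = 4 ^ (γ-1/2) * (x ^ (γ+1/2-1) * (1-x) ^ (γ+1/2-1))
    rw [show 1 - (2*x + -1)^2 = 4 * (x * (1-x)) by ring,
      Real.mul_rpow (by norm_num) (by nlinarith), Real.mul_rpow h0 (by linarith),
      show γ + 1/2 - 1 = γ - 1/2 by ring]
  rw [intervalIntegral.integral_const_mul] at hcongr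
  have hbeta := realBeta (a := γ+1/2) (b := γ+1/2) (by linarith) (by linarith)
  rw [show γ+1/2+(γ+1/2) = 2*γ+1 by ring] at hbeta
  have hdup := Real.Gamma_mul_Gamma_add_half (γ + 1/2)
  rw [show γ+1/2+1/2 = γ+1 by ring, show 2*(γ+1/2) = 2*γ+1 by ring,
    show 1-(2*γ+1) = -(2*γ) by ring] at hdup
  have k1 : (4:ℝ)^γ = 2^γ * 2^γ := by
    rw [show (4:ℝ) = 2*2 by norm_num, Real.mul_rpow two_pos.le two_pos.le]
  have k2 : (2:ℝ)^(-(2*γ)) = ((2:ℝ)^γ * 2^γ)⁻¹ := by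
    rw [Real.rpow_neg two_pos.le, show 2*γ = γ + γ by ring, Real.rpow_add two_pos]
  have k4 : (4:ℝ)^(-(1/2):ℝ) = 1/2 := by
    rw [Real.rpow_neg (by norm_num), ← Real.sqrt_eq_rpow,
      show (4:ℝ) = 2^2 by norm_num, Real.sqrt_sq two_pos.le]
    norm_num
  have k3 : (4:ℝ)^(γ-1/2) = 2^γ * 2^γ * (1/2) := by
    rw [show γ - 1/2 = γ + (-(1/2):ℝ) by ring, Real.rpow_add (by norm_num), k4, k1]
  have h2γ : (0:ℝ) < (2:ℝ)^γ := Real.rpow_pos_of_pos two_pos γ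
  set J := ∫ τ in (-1:ℝ)..1, (1 - τ^2) ^ (γ - 1/2) with hJ
  set B := ∫ x in (0:ℝ)..1, x ^ (γ+1/2-1) * (1-x) ^ (γ+1/2-1) with hB
  rw [hcongr] at hsub
  have hJval : J = 2 * ((4:ℝ)^(γ-1/2) * B) := by linarith [hsub]
  have hBval : B = Real.Gamma (γ+1/2) * Real.Gamma (γ+1/2) / Real.Gamma (2*γ+1) := by
    field_simp at hbeta ⊢
    linarith [hbeta]
  have hπ : (0:ℝ) < Real.sqrt π := Real.sqrt_pos.mpr Real.pi_pos
  set Gh := Real.Gamma (γ+1/2)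
  set G1 := Real.Gamma (γ+1)
  set G2 := Real.Gamma (2*γ+1)
  set X := (2:ℝ)^γ
  rw [k2] at hdup
  rw [hJval, hBval, k3]
  field_simp at hdup ⊢
  nlinarith [hdup, hΓh.le, hπ.le]

lemma besselI_le {γ z : ℝ} (hγ : (1:ℝ)/2 ≤ γ) (hz : 0 ≤ z) :
    |besselI γ z| ≤ (z/2)^γ * Real.exp z / Real.Gamma (γ+1) := by
  have hγ0 : 0 < γ := lt_of_lt_of_le (by norm_num) hγ
  have hΓh := Real.Gamma_pos_of_pos (show (0:ℝ) < γ + 1/2 by linarith)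
  have hΓ1 := Real.Gamma_pos_of_pos (show (0:ℝ) < γ + 1 by linarith)
  have hπ : (0:ℝ) < Real.sqrt π := Real.sqrt_pos.mpr Real.pi_pos
  have hcont : Continuous fun τ : ℝ => (1 - τ^2) ^ (γ - 1/2) := by
    apply Continuous.rpow_const (by fun_prop)
    intro x; right; linarith
  have hi1 : IntervalIntegrable (fun τ => (1-τ^2)^(γ-1/2) * Real.exp (z*τ))
      MeasureTheory.volume (-1) 1 := (hcont.mul (by fun_prop)).intervalIntegrable _ _
  have hi2 : IntervalIntegrable (fun τ => (1-τ^2)^(γ-1/2) * Real.exp z)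
      MeasureTheory.volume (-1) 1 := (hcont.mul continuous_const).intervalIntegrable _ _
  have hJ0 : 0 ≤ ∫ τ in (-1:ℝ)..1, (1-τ^2)^(γ-1/2) * Real.exp (z*τ) := by
    apply intervalIntegral.integral_nonneg (by norm_num)
    intro τ hτ
    exact mul_nonneg (Real.rpow_nonneg (by nlinarith [hτ.1, hτ.2]) _) (Real.exp_nonneg _)
  have hmono : (∫ τ in (-1:ℝ)..1, (1-τ^2)^(γ-1/2) * Real.exp (z*τ))
      ≤ ∫ τ in (-1:ℝ)..1, (1-τ^2)^(γ-1/2) * Real.exp z := by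
    apply intervalIntegral.integral_mono_on (by norm_num) hi1 hi2
    intro τ hτ
    apply mul_le_mul_of_nonneg_left _ (Real.rpow_nonneg (by nlinarith [hτ.1, hτ.2]) _)
    exact Real.exp_le_exp.mpr (by nlinarith [hτ.1, hτ.2])
  have hval : (∫ τ in (-1:ℝ)..1, (1-τ^2)^(γ-1/2) * Real.exp z)
      = Real.exp z * (Real.sqrt π * Real.Gamma (γ+1/2) / Real.Gamma (γ+1)) := by
    rw [intervalIntegral.integral_mul_const, J0_eq hγ0]; ring
  have hc : 0 ≤ (z/2)^γ / (Real.sqrt π * Real.Gamma (γ + 1/2)) := by positivity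
  rw [besselI, abs_mul, abs_of_nonneg hc, abs_of_nonneg hJ0]
  calc (z/2)^γ / (Real.sqrt π * Real.Gamma (γ + 1/2))
        * ∫ τ in (-1:ℝ)..1, (1-τ^2)^(γ-1/2) * Real.exp (z*τ)
      ≤ (z/2)^γ / (Real.sqrt π * Real.Gamma (γ + 1/2))
        * (Real.exp z * (Real.sqrt π * Real.Gamma (γ+1/2) / Real.Gamma (γ+1))) := by
        apply mul_le_mul_of_nonneg_left _ hc
        rw [← hval]; exact hmono
    _ = (z/2)^γ * Real.exp z / Real.Gamma (γ+1) := by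
        field_simp

lemma Pgam_le (n : ℕ) {γ r s t S : ℝ} (hγ : (1:ℝ)/2 ≤ γ)
    (he : 0 ≤ γ - (n:ℝ)/2 + 1)
    (hr : 0 < r) (ht : 0 < t) (hs : 0 < s) (hsS : s ≤ S) :
    |Pgam n γ r s t| ≤
      (1 / Real.Gamma γ) * (r * S) ^ (γ - (n:ℝ)/2 + 1) * t ^ (-(γ + 1)) := by
  have hγ0 : 0 < γ := lt_of_lt_of_le (by norm_num) hγ
  have hΓ := Real.Gamma_pos_of_pos hγ0
  have hΓ1 := Real.Gamma_pos_of_pos (show (0:ℝ) < γ + 1 by linarith)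
  have hrs : 0 < r * s := mul_pos hr hs
  have hz : 0 < r * s / (2 * t) := by positivity
  have hI := besselI_le hγ hz.le
  have hell : 0 ≤ ellK n r s t := by
    rw [ellK]; positivity
  have bound1 : |Pgam n γ r s t| ≤ ellK n r s t *
      ((r * s / (2 * t) / 2) ^ γ * Real.exp (r * s / (2 * t)) / Real.Gamma (γ+1)) := by
    rw [Pgam, abs_mul, abs_of_nonneg hell]
    exact mul_le_mul_of_nonneg_left hI hell
  -- rewrite the middle expression
  have h4γ : (0:ℝ) < (4:ℝ)^γ := Real.rpow_pos_of_pos (by norm_num) γ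
  have htγ : (0:ℝ) < t^γ := Real.rpow_pos_of_pos ht γ
  have h23 : (r * s / (2 * t) / 2) ^ γ = (r*s)^γ * ((4:ℝ)^γ * t^γ)⁻¹ := by
    rw [show r * s / (2 * t) / 2 = (r*s)/(4*t) by ring,
      Real.div_rpow hrs.le (by positivity), Real.mul_rpow (by norm_num) ht.le,
      div_eq_mul_inv]
  have h4 : (r*s)^(-(n:ℝ)/2) * (r * s / (2*t)) * ((r*s)^γ * ((4:ℝ)^γ * t^γ)⁻¹)
      = (r*s)^(γ-(n:ℝ)/2+1) * t^(-(γ+1)) * (1/(2*(4:ℝ)^γ)) := by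
    rw [show γ-(n:ℝ)/2+1 = -(n:ℝ)/2 + 1 + γ by ring, Real.rpow_add hrs,
      Real.rpow_add hrs, Real.rpow_one,
      show -(γ+1) = -γ + -1 by ring, Real.rpow_add ht,
      Real.rpow_neg ht.le, Real.rpow_neg ht.le, Real.rpow_one]
    field_simp
  have hexp : Real.exp (-(r^2+s^2)/(4*t)) * Real.exp (r * s / (2*t)) ≤ 1 := by
    rw [← Real.exp_add]
    apply Real.exp_le_one_iff.mpr
    have : -(r^2+s^2)/(4*t) + r*s/(2*t) = -((r-s)^2/(4*t)) := by field_simp; ring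
    rw [this]
    exact neg_nonpos.mpr (by positivity)
  have hident : ellK n r s t *
      ((r * s / (2 * t) / 2) ^ γ * Real.exp (r * s / (2 * t)) / Real.Gamma (γ+1))
      = ((r*s)^(γ-(n:ℝ)/2+1) * t^(-(γ+1)) * (1/(2*(4:ℝ)^γ)) * (1/Real.Gamma (γ+1)))
        * (Real.exp (-(r^2+s^2)/(4*t)) * Real.exp (r * s / (2*t))) := by
    rw [ellK, h23]
    linear_combination
      (Real.exp (-(r^2+s^2)/(4*t)) * Real.exp (r * s / (2*t)) / Real.Gamma (γ+1)) * h4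
  have hM : (0:ℝ) ≤ (r*s)^(γ-(n:ℝ)/2+1) * t^(-(γ+1)) * (1/(2*(4:ℝ)^γ)) * (1/Real.Gamma (γ+1)) := by
    positivity
  have step2 : |Pgam n γ r s t| ≤
      (r*s)^(γ-(n:ℝ)/2+1) * t^(-(γ+1)) * (1/(2*(4:ℝ)^γ)) * (1/Real.Gamma (γ+1)) := by
    refine bound1.trans ?_
    rw [hident]
    exact mul_le_of_le_one_right hM hexp
  refine step2.trans ?_
  have htT : (0:ℝ) < t^(-(γ+1)) := Real.rpow_pos_of_pos ht _
  have hS0 : 0 < S := lt_of_lt_of_le hs hsS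
  have hrsS : (r*s)^(γ-(n:ℝ)/2+1) ≤ (r*S)^(γ-(n:ℝ)/2+1) :=
    Real.rpow_le_rpow hrs.le (by nlinarith) he
  have hΓ1eq : Real.Gamma (γ+1) = γ * Real.Gamma γ := Real.Gamma_add_one hγ0.ne'
  have h42 : (2:ℝ) ≤ 4^γ := by
    calc (2:ℝ) = 4^((1/2):ℝ) := by
          rw [← Real.sqrt_eq_rpow, show (4:ℝ)=2^2 by norm_num, Real.sqrt_sq two_pos.le]
      _ ≤ 4^γ := Real.rpow_le_rpow_of_exponent_le (by norm_num) hγ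
  have hcc : 1/(2*(4:ℝ)^γ) * (1/Real.Gamma (γ+1)) ≤ 1/Real.Gamma γ := by
    have key : Real.Gamma γ ≤ 2*(4:ℝ)^γ * (γ * Real.Gamma γ) := by
      nlinarith [mul_le_mul_of_nonneg_right
        (show (2:ℝ) ≤ 2*(4:ℝ)^γ*γ by nlinarith [h42, hγ0]) hΓ.le]
    calc 1/(2*(4:ℝ)^γ) * (1/Real.Gamma (γ+1)) = 1/(2*(4:ℝ)^γ*(γ*Real.Gamma γ)) := by
          rw [hΓ1eq, div_mul_div_comm, one_mul]
      _ ≤ 1/Real.Gamma γ := one_div_le_one_div_of_le hΓ key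
  calc (r*s)^(γ-(n:ℝ)/2+1) * t^(-(γ+1)) * (1/(2*(4:ℝ)^γ)) * (1/Real.Gamma (γ+1))
      = ((r*s)^(γ-(n:ℝ)/2+1) * t^(-(γ+1))) * ((1/(2*(4:ℝ)^γ)) * (1/Real.Gamma (γ+1))) := by
        ring
    _ ≤ ((r*S)^(γ-(n:ℝ)/2+1) * t^(-(γ+1))) * (1/Real.Gamma γ) :=
        mul_le_mul (mul_le_mul_of_nonneg_right hrsS htT.le) hcc
          (mul_nonneg (by positivity) (one_div_nonneg.mpr hΓ1.le))
          (mul_nonneg (Real.rpow_nonneg (by positivity) _) htT.le)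
    _ = 1 / Real.Gamma γ * (r * S) ^ (γ - (n:ℝ)/2 + 1) * t ^ (-(γ + 1)) := by ring

/-- For `n ≥ 3`, `γ ≥ n/2 − 1` with `γ > 0`, `S > 0`, and a measurable
`φ` supported in `(0,S]` with `∫₀^S |φ(s)| s^{n-1} ds < ∞`, for all `r, t > 0`,
`|w_γ(r,t)| ≤ (1/Γ(γ)) (rS)^{γ−n/2+1} t^{-(γ+1)} ∫₀^S |φ(s)| s^{n-1} ds`. -/
theorem stmt16 (n : ℕ) (hn : 3 ≤ n) (γ S : ℝ) (hγ : 0 < γ)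
    (hγn : (n : ℝ) / 2 - 1 ≤ γ) (hS : 0 < S)
    (φ : ℝ → ℝ) (hmeas : Measurable φ)
    (hsupp : ∀ s : ℝ, s ∉ Set.Ioc (0:ℝ) S → φ s = 0)
    (hint : IntegrableOn (fun s => |φ s| * s ^ (n - 1)) (Set.Ioc (0:ℝ) S)) :
    ∀ r t : ℝ, 0 < r → 0 < t →
      |wgam n γ φ r t| ≤
        (1 / Real.Gamma γ) * (r * S) ^ (γ - (n : ℝ) / 2 + 1) * t ^ (-(γ + 1)) *
          ∫ s in Set.Ioc (0:ℝ) S, |φ s| * s ^ (n - 1) := by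
  intro r t hr ht
  have hn3 : (3:ℝ) ≤ (n:ℝ) := by exact_mod_cast hn
  have hγhalf : (1:ℝ)/2 ≤ γ := by linarith
  have he : 0 ≤ γ - (n:ℝ)/2 + 1 := by linarith
  have hΓ := Real.Gamma_pos_of_pos hγ
  set C := (1 / Real.Gamma γ) * (r * S) ^ (γ - (n : ℝ)/2 + 1) * t ^ (-(γ + 1)) with hC
  have hC0 : 0 ≤ C := by
    apply mul_nonneg (mul_nonneg (one_div_nonneg.mpr hΓ.le)
      (Real.rpow_nonneg (by positivity) _)) (Real.rpow_nonneg ht.le _)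
  have hgIoc : IntegrableOn (fun s => C * (|φ s| * s ^ (n-1))) (Set.Ioc (0:ℝ) S) :=
    hint.const_mul C
  have hgIoi : IntegrableOn (fun s => C * (|φ s| * s ^ (n-1))) (Set.Ioi (0:ℝ)) := by
    rw [← Set.Ioc_union_Ioi_eq_Ioi hS.le]
    apply hgIoc.union
    apply (integrableOn_zero (μ := volume)).congr_fun ?_ measurableSet_Ioi
    intro s hs
    have hφ : φ s = 0 := hsupp s (fun h => absurd h.2 (not_le.mpr hs))
    simp [hφ]
  have hbound : ∀ s ∈ Set.Ioi (0:ℝ), |Pgam n γ r s t * φ s * s ^ (n-1)| ≤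
      C * (|φ s| * s ^ (n-1)) := by
    intro s hs
    rw [Set.mem_Ioi] at hs
    by_cases hsS : s ≤ S
    · have hp := Pgam_le n hγhalf he hr ht hs hsS
      rw [abs_mul, abs_mul, abs_of_nonneg (pow_nonneg hs.le (n-1))]
      calc |Pgam n γ r s t| * |φ s| * s^(n-1) ≤ C * |φ s| * s^(n-1) := by
            apply mul_le_mul_of_nonneg_right
              (mul_le_mul_of_nonneg_right hp (abs_nonneg _)) (pow_nonneg hs.le _)
        _ = C * (|φ s| * s^(n-1)) := by ring
    · have hφ : φ s = 0 := hsupp s (fun h => absurd h.2 hsS)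
      simp [hφ]
  have key : |wgam n γ φ r t| ≤ ∫ s in Set.Ioi (0:ℝ), C * (|φ s| * s ^ (n-1)) := by
    rw [wgam, ← Real.norm_eq_abs]
    apply MeasureTheory.norm_integral_le_of_norm_le hgIoi
    apply (MeasureTheory.ae_restrict_iff' measurableSet_Ioi).mpr
    exact Filter.Eventually.of_forall fun s hs => by
      rw [Real.norm_eq_abs]; exact hbound s hs
  have hval : (∫ s in Set.Ioi (0:ℝ), C * (|φ s| * s ^ (n-1)))
      = C * ∫ s in Set.Ioc (0:ℝ) S, |φ s| * s ^ (n-1) := by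
    rw [MeasureTheory.setIntegral_eq_of_subset_of_forall_diff_eq_zero measurableSet_Ioi
      Set.Ioc_subset_Ioi_self (fun s hs => by
        have hφ : φ s = 0 := hsupp s hs.2
        simp [hφ])]
    exact MeasureTheory.integral_const_mul C _
  rw [hval] at key
  exact key
end

section
/- Let n ≥ 3 be an integer, K ≥ 1 an integer, and R, S > 1, A, c, C > 0. Let (γ_k)_{k ≥ K} be a sequence of positive reals satisfying γ_K ≥ n/2 − 1, γ_k ≥ γ_K for all k ≥ K, and c·k^{1/(n−1)} ≤ γ_k ≤ C·k^{1/(n−1)} for all k ≥ K. Let (B_k)_{k ≥ K} be reals with 0 ≤ B_k ≤ C·k^{(n−2)/(2(n−1))}, and let W_k : (0,∞) × (0,∞) → ℝ be functions satisfying |W_k(r,t)| ≤ A·(r·S)^{γ_k − n/2 + 1}·t^{-(γ_k + 1)}/Γ(γ_k) for all r, t > 0 and all k ≥ K. Then there exists a constant C₁ > 0 such that for all t ≥ 1 and all r with 0 < r ≤ R·t^{1/2}, the series ∑_{k ≥ K} |W_k(r,t)|·B_k converges and ∑_{k ≥ K} |W_k(r,t)|·B_k ≤ C₁·r^{γ_K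 − n/2 + 1}·t^{-(γ_K + 1)}. -/
open Set MeasureTheory
open scoped Nat

lemma gamma_ge_exp_s17 (x : ℝ) (hx : 1 ≤ x) : Real.exp (-1) ≤ Real.Gamma x := by
  have hx0 : (0:ℝ) < x := lt_of_lt_of_le one_pos hx
  rw [Real.Gamma_eq_integral hx0]
  have hint : IntegrableOn (fun u : ℝ => Real.exp (-u) * u ^ (x - 1)) (Ioi 1) :=
    (Real.GammaIntegral_convergent hx0).mono_set (Ioi_subset_Ioi zero_le_one)
  have hint2 : IntegrableOn (fun u : ℝ => Real.exp (-u)) (Ioi 1) := by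
    have h := exp_neg_integrableOn_Ioi 1 (one_pos (α := ℝ))
    simpa using h
  calc Real.exp (-1) = ∫ u in Ioi (1:ℝ), Real.exp (-u) := (integral_exp_neg_Ioi 1).symm
    _ ≤ ∫ u in Ioi (1:ℝ), Real.exp (-u) * u ^ (x - 1) := by
        apply setIntegral_mono_on hint2 hint measurableSet_Ioi
        intro u hu
        have hu1 : (1:ℝ) ≤ u := le_of_lt hu
        have h1 : (1:ℝ) ≤ u ^ (x - 1) := Real.one_le_rpow hu1 (by linarith)
        nlinarith [Real.exp_pos (-u)]
    _ ≤ ∫ u in Ioi (0:ℝ), Real.exp (-u) * u ^ (x - 1) := by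
        apply setIntegral_mono_set (Real.GammaIntegral_convergent hx0)
        · rw [Filter.EventuallyLE, ae_restrict_iff' measurableSet_Ioi]
          filter_upwards with u hu
          have : (0:ℝ) < u := hu
          positivity
        · exact HasSubset.Subset.eventuallyLE (Ioi_subset_Ioi zero_le_one)

lemma gamma_ge_factorial : ∀ (m : ℕ) (x : ℝ), (m:ℝ) + 1 ≤ x →
    (m ! : ℝ) * Real.exp (-1) ≤ Real.Gamma x := by
  intro m
  induction m with
  | zero => intro x hx; simpa using gamma_ge_exp_s17 x (by simpa using hx)
  | succ m ih =>
    intro x hx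
    have hx1 : (m:ℝ) + 1 ≤ x - 1 := by push_cast at hx ⊢; linarith
    have hm0 : (0:ℝ) ≤ (m:ℝ) := Nat.cast_nonneg m
    have h0 : x - 1 ≠ 0 := by intro h; rw [h] at hx1; linarith
    have hG : Real.Gamma x = (x - 1) * Real.Gamma (x - 1) := by
      have h := Real.Gamma_add_one h0
      rw [sub_add_cancel] at h
      exact h
    rw [hG]
    have hih := ih (x - 1) hx1
    have hfac : ((m+1)! : ℝ) = ((m:ℝ) + 1) * (m ! : ℝ) := by
      push_cast [Nat.factorial_succ]; ring
    calc ((m+1)! : ℝ) * Real.exp (-1) = ((m:ℝ)+1) * ((m ! : ℝ) * Real.exp (-1)) := by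
          rw [hfac]; ring
      _ ≤ (x - 1) * Real.Gamma (x - 1) := by
          apply mul_le_mul (by linarith) hih (by positivity) (by linarith)

lemma gamma_ge_floor (x : ℝ) (hx : 1/2 ≤ x) :
    ((⌊x⌋₊ - 1)! : ℝ) * Real.exp (-1) ≤ Real.Gamma x := by
  rcases lt_or_ge x 1 with h1 | h1
  · have hfl : ⌊x⌋₊ = 0 := Nat.floor_eq_zero.mpr h1
    rw [hfl]
    simp only [Nat.zero_sub, Nat.factorial_zero, Nat.cast_one, one_mul]
    have hx0 : (0:ℝ) < x := by linarith
    have h2 : Real.Gamma (x + 1) = x * Real.Gamma x := Real.Gamma_add_one (ne_of_gt hx0)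
    have h3 : Real.exp (-1) ≤ Real.Gamma (x + 1) := gamma_ge_exp_s17 _ (by linarith)
    have h4 : 0 < Real.Gamma x := Real.Gamma_pos_of_pos hx0
    nlinarith
  · have hm : 1 ≤ ⌊x⌋₊ := by
      rw [Nat.one_le_iff_ne_zero]
      intro h
      have := Nat.floor_eq_zero.mp h
      linarith
    apply gamma_ge_factorial
    have hcast : ((⌊x⌋₊ - 1 : ℕ) : ℝ) + 1 = (⌊x⌋₊ : ℝ) := by
      push_cast [Nat.cast_sub hm]
      ring
    rw [hcast]
    exact Nat.floor_le (by linarith)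

lemma pow_div_fact_le_exp (w : ℝ) (hw : 0 ≤ w) (m : ℕ) : w ^ m / m ! ≤ Real.exp w := by
  have h := Real.sum_le_exp_of_nonneg hw (m + 1)
  have h' : w ^ m / m ! ≤ ∑ i ∈ Finset.range (m + 1), w ^ i / i ! := by
    apply Finset.single_le_sum (f := fun i => w ^ i / (i ! : ℝ))
    · intro i _; positivity
    · exact Finset.self_mem_range_succ m
  linarith

lemma aux_summable (M c α β C₂ : ℝ) (hM : 1 ≤ M) (hc : 0 < c) (hα : 0 < α)
    (hβ : 0 ≤ β) (hC₂ : 0 ≤ C₂) (x y : ℕ → ℝ)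
    (hx2 : ∀ k, 1/2 ≤ x k) (hxlo : ∀ k : ℕ, c * ((k:ℝ)+1) ^ α ≤ x k)
    (hy0 : ∀ k, 0 ≤ y k) (hy : ∀ k, y k ≤ C₂ * ((k:ℝ)+1) ^ β) :
    Summable (fun k => M ^ (x k) * y k / Real.Gamma (x k)) := by
  have hM0 : (0:ℝ) < M := by linarith
  set q : ℕ := ⌈(β + 2)/α⌉₊ with hq
  set L : ℝ := c * Real.log 2 with hLdef
  have hL0 : 0 < L := mul_pos hc (Real.log_pos one_lt_two)
  set E : ℝ := Real.exp 1 * M^2 * C₂ * Real.exp (2*M) * 4 * (q ! : ℝ) / L^q with hE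
  have hqα : β + 2 ≤ α * q := by
    have h := Nat.le_ceil ((β + 2)/α)
    calc β + 2 = α * ((β + 2)/α) := by field_simp
      _ ≤ α * q := by
          apply mul_le_mul_of_nonneg_left h hα.le
  have hexp : β - α * q < -1 := by linarith
  have hsum0 : Summable (fun k : ℕ => ((k:ℝ)+1) ^ (β - α * q)) := by
    have h := (Real.summable_nat_rpow (p := β - α * q)).mpr hexp
    have h2 := (summable_nat_add_iff 1).mpr h
    refine h2.congr fun k => ?_
    push_cast
    ring_nf
  apply Summable.of_nonneg_of_le (fun k => ?_) (fun k => ?_) (hsum0.mul_left E)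
  · have hΓ : 0 < Real.Gamma (x k) := Real.Gamma_pos_of_pos (by linarith [hx2 k])
    have h1 : (0:ℝ) ≤ M ^ x k := (Real.rpow_pos_of_pos hM0 _).le
    exact div_nonneg (mul_nonneg h1 (hy0 k)) hΓ.le
  · -- main term bound
    set m : ℕ := ⌊x k⌋₊ - 1 with hm
    have hxk := hx2 k
    have hΓpos : 0 < Real.Gamma (x k) := Real.Gamma_pos_of_pos (by linarith)
    have hΓ : (m ! : ℝ) * Real.exp (-1) ≤ Real.Gamma (x k) := gamma_ge_floor _ hxk
    have hk1 : (0:ℝ) < (k:ℝ) + 1 := by positivity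
    have hz : (0:ℝ) < ((k:ℝ)+1) ^ α := Real.rpow_pos_of_pos hk1 _
    have hfl : (⌊x k⌋₊ : ℕ) ≤ m + 1 := by omega
    have hmx : x k ≤ (m:ℝ) + 2 := by
      have h1 : x k < ⌊x k⌋₊ + 1 := Nat.lt_floor_add_one _
      have h2 : ((⌊x k⌋₊ : ℕ) : ℝ) ≤ (m:ℝ) + 1 := by exact_mod_cast hfl
      linarith
    have hmlo : x k - 2 ≤ (m:ℝ) := by
      have h1 : x k - 1 < ⌊x k⌋₊ := Nat.sub_one_lt_floor (x k)
      have h2 : ((⌊x k⌋₊ : ℕ) : ℝ) ≤ (m:ℝ) + 1 := by exact_mod_cast hfl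
      linarith
    -- (1) M ^ (x k) ≤ M ^ m * M ^ 2
    have hMx : M ^ (x k) ≤ M ^ m * M ^ 2 := by
      have h1 : M ^ (x k) ≤ M ^ ((m:ℝ) + 2) := Real.rpow_le_rpow_of_exponent_le hM hmx
      have h2 : M ^ ((m:ℝ) + 2) = M ^ m * M ^ 2 := by
        rw [show ((m:ℝ) + 2) = ((m + 2 : ℕ) : ℝ) by push_cast; ring, Real.rpow_natCast,
          pow_add]
      linarith
    -- (2) M^m / m! ≤ exp (2M) * (1/2)^m
    have hMm : (M:ℝ) ^ m / (m ! : ℝ) ≤ Real.exp (2*M) * (1/2:ℝ) ^ m := by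
      have key : (M:ℝ) ^ m = (2*M) ^ m * (1/2:ℝ) ^ m := by
        rw [← mul_pow]
        congr 1
        ring
      have h2M : (2*M) ^ m / (m ! : ℝ) ≤ Real.exp (2*M) :=
        pow_div_fact_le_exp _ (by linarith) m
      calc (M:ℝ) ^ m / (m ! : ℝ) = ((2*M) ^ m / (m ! : ℝ)) * (1/2:ℝ) ^ m := by
            rw [key]; ring
        _ ≤ Real.exp (2*M) * (1/2:ℝ) ^ m := by
            apply mul_le_mul_of_nonneg_right h2M (by positivity)
    -- (3) (1/2)^m <= 4 * exp (-(L * (k+1)^alpha))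
    have hhalf : ((1:ℝ)/2) ^ m ≤ 4 * Real.exp (-(L * ((k:ℝ)+1) ^ α)) := by
      have h1 : ((1:ℝ)/2) ^ m = Real.exp (-((m:ℝ) * Real.log 2)) := by
        rw [show -((m:ℝ) * Real.log 2) = (m:ℝ) * (-Real.log 2) by ring,
          show -Real.log 2 = Real.log (1/2) by rw [one_div, Real.log_inv],
          Real.exp_nat_mul, Real.exp_log one_half_pos]
      have hlog2 : 0 < Real.log 2 := Real.log_pos one_lt_two
      have h2 : -((m:ℝ) * Real.log 2) ≤ 2 * Real.log 2 + -(L * ((k:ℝ)+1) ^ α) := by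
        have h3 := hxlo k
        rw [hLdef]
        nlinarith
      have h4 : Real.exp (2 * Real.log 2) = 4 := by
        rw [show (2:ℝ) * Real.log 2 = Real.log 2 + Real.log 2 by ring, Real.exp_add,
          Real.exp_log two_pos]
        norm_num
      calc ((1:ℝ)/2) ^ m = Real.exp (-((m:ℝ) * Real.log 2)) := h1
        _ ≤ Real.exp (2 * Real.log 2 + -(L * ((k:ℝ)+1) ^ α)) := Real.exp_le_exp.mpr h2
        _ = 4 * Real.exp (-(L * ((k:ℝ)+1) ^ α)) := by rw [Real.exp_add, h4]
    -- (4) exp (-(L*z)) <= q!/L^q * (k+1)^(-(alpha*q))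
    have hfin : Real.exp (-(L * ((k:ℝ)+1) ^ α)) ≤
        (q ! : ℝ)/L^q * ((k:ℝ)+1) ^ (-(α * (q:ℝ))) := by
      set w : ℝ := L * ((k:ℝ)+1) ^ α with hw
      have hw0 : 0 < w := mul_pos hL0 hz
      have h1 : w ^ q ≤ (q ! : ℝ) * Real.exp w := by
        have := pow_div_fact_le_exp w hw0.le q
        have hqf : (0:ℝ) < (q ! : ℝ) := by positivity
        rw [div_le_iff₀ hqf] at this
        linarith
      have hzq : (((k:ℝ)+1) ^ α) ^ q = ((k:ℝ)+1) ^ (α * (q:ℝ)) := by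
        rw [← Real.rpow_natCast (((k:ℝ)+1) ^ α) q, ← Real.rpow_mul hk1.le]
      have hrw : (q ! : ℝ)/L^q * ((k:ℝ)+1) ^ (-(α * (q:ℝ))) = (q ! : ℝ) / w ^ q := by
        rw [Real.rpow_neg hk1.le, hw, mul_pow L (((k:ℝ)+1) ^ α) q, hzq]
        field_simp
      rw [hrw, Real.exp_neg, inv_eq_one_div, div_le_div_iff₀ (Real.exp_pos w) (pow_pos hw0 q)]
      linarith
    -- combine
    calc M ^ x k * y k / Real.Gamma (x k)
        ≤ (M^m * M^2) * (C₂ * ((k:ℝ)+1) ^ β) / ((m ! : ℝ) * Real.exp (-1)) := by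
          apply div_le_div₀ (by positivity) ?_ (by positivity) hΓ
          apply mul_le_mul hMx (hy k) (hy0 k) (by positivity)
      _ = (M^2 * C₂ * Real.exp 1 * ((k:ℝ)+1) ^ β) * ((M:ℝ)^m / (m ! : ℝ)) := by
          rw [Real.exp_neg]
          have hmf : (0:ℝ) < (m ! : ℝ) := by positivity
          have hee : (0:ℝ) < Real.exp 1 := Real.exp_pos 1
          field_simp
      _ ≤ (M^2 * C₂ * Real.exp 1 * ((k:ℝ)+1) ^ β) * (Real.exp (2*M) * (1/2:ℝ)^m) := by
          apply mul_le_mul_of_nonneg_left hMm (by positivity)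
      _ = (M^2 * C₂ * Real.exp 1 * ((k:ℝ)+1) ^ β * Real.exp (2*M)) * ((1/2:ℝ)^m) := by
          ring
      _ ≤ (M^2 * C₂ * Real.exp 1 * ((k:ℝ)+1) ^ β * Real.exp (2*M)) *
            (4 * Real.exp (-(L * ((k:ℝ)+1) ^ α))) := by
          apply mul_le_mul_of_nonneg_left hhalf (by positivity)
      _ = (M^2 * C₂ * Real.exp 1 * Real.exp (2*M) * 4 * ((k:ℝ)+1) ^ β) *
            Real.exp (-(L * ((k:ℝ)+1) ^ α)) := by ring
      _ ≤ (M^2 * C₂ * Real.exp 1 * Real.exp (2*M) * 4 * ((k:ℝ)+1) ^ β) *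
            ((q ! : ℝ)/L^q * ((k:ℝ)+1) ^ (-(α * (q:ℝ)))) := by
          apply mul_le_mul_of_nonneg_left hfin (by positivity)
      _ = E * (((k:ℝ)+1) ^ β * ((k:ℝ)+1) ^ (-(α * (q:ℝ)))) := by
          rw [hE]
          have hLq : (0:ℝ) < L ^ q := pow_pos hL0 q
          field_simp
      _ = E * ((k:ℝ)+1) ^ (β - α * (q:ℝ)) := by
          rw [← Real.rpow_add hk1]
          ring_nf

/-- Analytic core of the tail estimate for the heat kernel on a cone:
given `n ≥ 3`, `K ≥ 1`, `R, S > 1`, `A, c, C > 0`, a sequence `γ_k > 0` (for `k ≥ K`)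
with `γ_K ≥ n/2 − 1`, `γ_k ≥ γ_K`, and `c k^{1/(n-1)} ≤ γ_k ≤ C k^{1/(n-1)}`,
reals `0 ≤ B_k ≤ C k^{(n-2)/(2(n-1))}`, and functions `W_k` with
`|W_k(r,t)| ≤ A (rS)^{γ_k − n/2 + 1} t^{-(γ_k+1)} / Γ(γ_k)` for `r, t > 0`,
there is `C₁ > 0` such that for all `t ≥ 1` and `0 < r ≤ R t^{1/2}`, the series
`∑_{k ≥ K} |W_k(r,t)| B_k` converges and is at most
`C₁ r^{γ_K − n/2 + 1} t^{-(γ_K + 1)}`. -/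
theorem stmt17 (n K : ℕ) (hn : 3 ≤ n) (hK : 1 ≤ K)
    (R S A c C : ℝ) (hR : 1 < R) (hS : 1 < S) (hA : 0 < A) (hc : 0 < c) (hC : 0 < C)
    (γ : ℕ → ℝ) (hγpos : ∀ k, K ≤ k → 0 < γ k)
    (hγK : (n : ℝ) / 2 - 1 ≤ γ K)
    (hγmono : ∀ k, K ≤ k → γ K ≤ γ k)
    (hγlo : ∀ k, K ≤ k → c * (k : ℝ) ^ ((1:ℝ) / ((n : ℝ) - 1)) ≤ γ k)
    (hγhi : ∀ k, K ≤ k → γ k ≤ C * (k : ℝ) ^ ((1:ℝ) / ((n : ℝ) - 1)))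
    (B : ℕ → ℝ) (hB0 : ∀ k, K ≤ k → 0 ≤ B k)
    (hB : ∀ k, K ≤ k → B k ≤ C * (k : ℝ) ^ (((n : ℝ) - 2) / (2 * ((n : ℝ) - 1))))
    (W : ℕ → ℝ → ℝ → ℝ)
    (hW : ∀ k, K ≤ k → ∀ r t : ℝ, 0 < r → 0 < t →
      |W k r t| ≤
        A * (r * S) ^ (γ k - (n : ℝ) / 2 + 1) * t ^ (-(γ k + 1)) / Real.Gamma (γ k)) :
    ∃ C₁ : ℝ, 0 < C₁ ∧ ∀ t : ℝ, 1 ≤ t → ∀ r : ℝ, 0 < r → r ≤ R * t ^ ((1:ℝ)/2) →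
      Summable (fun k : ℕ => |W (k + K) r t| * B (k + K)) ∧
      (∑' k : ℕ, |W (k + K) r t| * B (k + K)) ≤
        C₁ * r ^ (γ K - (n : ℝ) / 2 + 1) * t ^ (-(γ K + 1)) := by
  have hn3 : (3:ℝ) ≤ (n:ℝ) := by exact_mod_cast hn
  have hK1 : (1:ℝ) ≤ (K:ℝ) := by exact_mod_cast hK
  set α : ℝ := (1:ℝ)/((n:ℝ)-1) with hαdef
  set β : ℝ := ((n:ℝ)-2)/(2*((n:ℝ)-1)) with hβdef
  have hα0 : 0 < α := by rw [hαdef]; apply div_pos one_pos; linarith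
  have hβ0 : 0 ≤ β := by rw [hβdef]; apply div_nonneg (by linarith) (by linarith)
  have hg2 : 1/2 ≤ γ K := by linarith
  have hg' : 0 ≤ γ K - (n:ℝ)/2 + 1 := by linarith
  have hS0 : (0:ℝ) < S := by linarith
  set M : ℝ := R * S with hMdef
  have hM1 : 1 < M := by rw [hMdef]; nlinarith
  have hM0 : (0:ℝ) < M := by linarith
  have hkK : ∀ k : ℕ, K ≤ k + K := fun k => Nat.le_add_left K k
  have hx2 : ∀ k : ℕ, 1/2 ≤ γ (k + K) := fun k => le_trans hg2 (hγmono _ (hkK k))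
  have hxpos : ∀ k : ℕ, 0 < γ (k + K) := fun k => by linarith [hx2 k]
  have hΓpos : ∀ k : ℕ, 0 < Real.Gamma (γ (k + K)) :=
    fun k => Real.Gamma_pos_of_pos (hxpos k)
  have hxlo : ∀ k : ℕ, c * ((k:ℝ)+1) ^ α ≤ γ (k + K) := by
    intro k
    have h1 := hγlo (k+K) (hkK k)
    have h2 : ((k:ℝ)+1) ^ α ≤ ((k+K:ℕ):ℝ) ^ α := by
      apply Real.rpow_le_rpow (by positivity) ?_ hα0.le
      push_cast; linarith
    calc c * ((k:ℝ)+1) ^ α ≤ c * ((k+K:ℕ):ℝ) ^ α :=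
          mul_le_mul_of_nonneg_left h2 hc.le
      _ ≤ γ (k + K) := h1
  have hy0 : ∀ k : ℕ, (0:ℝ) ≤ ((k+K:ℕ):ℝ) ^ β := fun k => Real.rpow_nonneg (by positivity) _
  have hyle : ∀ k : ℕ, ((k+K:ℕ):ℝ) ^ β ≤ (K:ℝ)^β * ((k:ℝ)+1) ^ β := by
    intro k
    have h1 : ((k+K:ℕ):ℝ) ≤ (K:ℝ) * ((k:ℝ)+1) := by
      push_cast; nlinarith [Nat.cast_nonneg (α := ℝ) k]
    calc ((k+K:ℕ):ℝ) ^ β ≤ ((K:ℝ) * ((k:ℝ)+1)) ^ β :=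
          Real.rpow_le_rpow (by positivity) h1 hβ0
      _ = (K:ℝ)^β * ((k:ℝ)+1)^β := Real.mul_rpow (by positivity) (by positivity)
  have hGsum : Summable (fun k : ℕ =>
      M ^ (γ (k+K)) * ((k+K:ℕ):ℝ) ^ β / Real.Gamma (γ (k+K))) :=
    aux_summable M c α β ((K:ℝ)^β) hM1.le hc hα0 hβ0
      (Real.rpow_nonneg (by positivity) _)
      (fun k => γ (k+K)) (fun k => ((k+K:ℕ):ℝ) ^ β) hx2 hxlo hy0 hyle
  have hGnn : ∀ k : ℕ, 0 ≤ M ^ (γ (k+K)) * ((k+K:ℕ):ℝ) ^ β / Real.Gamma (γ (k+K)) :=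
    fun k => div_nonneg (mul_nonneg (Real.rpow_pos_of_pos hM0 _).le (hy0 k)) (hΓpos k).le
  set Q : ℝ := ∑' k : ℕ, M ^ (γ (k+K)) * ((k+K:ℕ):ℝ) ^ β / Real.Gamma (γ (k+K)) with hQdef
  have hQ0 : 0 ≤ Q := tsum_nonneg hGnn
  refine ⟨A*C*S^(γ K - (n:ℝ)/2 + 1)*M^(-γ K)*Q + 1, by positivity, ?_⟩
  intro t ht r hr hrt
  have ht0 : (0:ℝ) < t := lt_of_lt_of_le one_pos ht
  set D : ℝ := A*C*S^(γ K - (n:ℝ)/2 + 1)*M^(-γ K) * (r^(γ K - (n:ℝ)/2 + 1) * t^(-(γ K+1)))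
    with hDdef
  have hD0 : 0 ≤ D := by
    rw [hDdef]; positivity
  have hkey : ∀ k : ℕ, |W (k+K) r t| * B (k+K) ≤
      D * (M ^ (γ (k+K)) * ((k+K:ℕ):ℝ) ^ β / Real.Gamma (γ (k+K))) := by
    intro k
    have hW1 := hW (k+K) (hkK k) r t hr ht0
    have hB1 := hB (k+K) (hkK k)
    have hB0' := hB0 (k+K) (hkK k)
    have he0 : 0 ≤ γ (k+K) - γ K := by linarith [hγmono (k+K) (hkK k)]
    have hrs : 0 < r * S := by positivity
    have hcore : (r*S) ^ (γ (k+K) - (n:ℝ)/2 + 1) * t ^ (-(γ (k+K) + 1)) ≤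
        S^(γ K - (n:ℝ)/2 + 1) * M^(-γ K) * r^(γ K - (n:ℝ)/2 + 1) * t^(-(γ K+1)) *
          M^(γ (k+K)) := by
      set e : ℝ := γ (k+K) - γ K with hedef
      have hsplit : γ (k+K) - (n:ℝ)/2 + 1 = (γ K - (n:ℝ)/2 + 1) + e := by
        rw [hedef]; ring
      have h1 : (r*S) ^ ((γ K - (n:ℝ)/2 + 1) + e) =
          r^(γ K - (n:ℝ)/2 + 1) * S^(γ K - (n:ℝ)/2 + 1) * (r*S)^e := by
        rw [Real.rpow_add hrs, Real.mul_rpow hr.le hS0.le]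
      have h2 : (r*S)^e ≤ (M * t^((1:ℝ)/2))^e := by
        apply Real.rpow_le_rpow (by positivity) ?_ he0
        calc r*S ≤ (R*t^((1:ℝ)/2))*S := mul_le_mul_of_nonneg_right hrt hS0.le
          _ = M * t^((1:ℝ)/2) := by rw [hMdef]; ring
      have h3 : (M * t^((1:ℝ)/2))^e = M^e * t^(e/2) := by
        rw [Real.mul_rpow hM0.le (Real.rpow_nonneg ht0.le _), ← Real.rpow_mul ht0.le]
        ring_nf
      have h4 : t^(-(γ (k+K) + 1)) = t^(-(γ K+1)) * t^(-e) := by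
        rw [← Real.rpow_add ht0]; congr 1; try rw [hedef]; try ring
      have h5 : M^e = M^(γ (k+K)) * M^(-γ K) := by
        rw [← Real.rpow_add hM0]; congr 1; try rw [hedef]; try ring
      have h6 : t^(e/2) * t^(-e) ≤ 1 := by
        rw [← Real.rpow_add ht0]
        apply Real.rpow_le_one_of_one_le_of_nonpos ht
        linarith
      calc (r*S) ^ (γ (k+K) - (n:ℝ)/2 + 1) * t ^ (-(γ (k+K) + 1))
          = (r^(γ K - (n:ℝ)/2 + 1) * S^(γ K - (n:ℝ)/2 + 1) * (r*S)^e) *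
              (t^(-(γ K+1)) * t^(-e)) := by rw [hsplit, h1, h4]
        _ ≤ (r^(γ K - (n:ℝ)/2 + 1) * S^(γ K - (n:ℝ)/2 + 1) * (M^e * t^(e/2))) *
              (t^(-(γ K+1)) * t^(-e)) := by
            apply mul_le_mul_of_nonneg_right ?_ (by positivity)
            apply mul_le_mul_of_nonneg_left (h2.trans_eq h3) (by positivity)
        _ = (S^(γ K - (n:ℝ)/2 + 1) * M^(-γ K) * r^(γ K - (n:ℝ)/2 + 1) * t^(-(γ K+1)) *
              M^(γ (k+K))) * (t^(e/2) * t^(-e)) := by rw [h5]; ring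
        _ ≤ (S^(γ K - (n:ℝ)/2 + 1) * M^(-γ K) * r^(γ K - (n:ℝ)/2 + 1) * t^(-(γ K+1)) *
              M^(γ (k+K))) * 1 := by
            apply mul_le_mul_of_nonneg_left h6 (by positivity)
        _ = _ := mul_one _
    calc |W (k+K) r t| * B (k+K)
        ≤ (A * (r*S) ^ (γ (k+K) - (n:ℝ)/2 + 1) * t ^ (-(γ (k+K) + 1)) /
            Real.Gamma (γ (k+K))) * (C * ((k+K:ℕ):ℝ) ^ β) := by
          apply mul_le_mul hW1 hB1 hB0'
          have := hΓpos k
          positivity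
      _ = (A*C*((k+K:ℕ):ℝ) ^ β / Real.Gamma (γ (k+K))) *
            ((r*S) ^ (γ (k+K) - (n:ℝ)/2 + 1) * t ^ (-(γ (k+K) + 1))) := by ring
      _ ≤ (A*C*((k+K:ℕ):ℝ) ^ β / Real.Gamma (γ (k+K))) *
            (S^(γ K - (n:ℝ)/2 + 1) * M^(-γ K) * r^(γ K - (n:ℝ)/2 + 1) * t^(-(γ K+1)) *
              M^(γ (k+K))) := by
          apply mul_le_mul_of_nonneg_left hcore
          have := hΓpos k
          positivity
      _ = D * (M ^ (γ (k+K)) * ((k+K:ℕ):ℝ) ^ β / Real.Gamma (γ (k+K))) := by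
          rw [hDdef]
          have := (hΓpos k).ne'
          field_simp
  have hsum : Summable (fun k : ℕ => |W (k+K) r t| * B (k+K)) :=
    Summable.of_nonneg_of_le
      (fun k => mul_nonneg (abs_nonneg _) (hB0 _ (hkK k))) hkey (hGsum.mul_left D)
  refine ⟨hsum, ?_⟩
  have h1 : (∑' k : ℕ, |W (k+K) r t| * B (k+K)) ≤
      ∑' k : ℕ, D * (M ^ (γ (k+K)) * ((k+K:ℕ):ℝ) ^ β / Real.Gamma (γ (k+K))) :=
    Summable.tsum_le_tsum hkey hsum (hGsum.mul_left D)
  have h2 : (∑' k : ℕ, D * (M ^ (γ (k+K)) * ((k+K:ℕ):ℝ) ^ β / Real.Gamma (γ (k+K))))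
      = D * Q := tsum_mul_left
  have hrt0 : (0:ℝ) ≤ r^(γ K - (n:ℝ)/2 + 1) * t^(-(γ K+1)) := by positivity
  calc (∑' k : ℕ, |W (k+K) r t| * B (k+K)) ≤ D * Q := by rw [← h2]; exact h1
    _ = (A*C*S^(γ K - (n:ℝ)/2 + 1)*M^(-γ K)*Q) *
          (r^(γ K - (n:ℝ)/2 + 1) * t^(-(γ K+1))) := by rw [hDdef]; ring
    _ ≤ (A*C*S^(γ K - (n:ℝ)/2 + 1)*M^(-γ K)*Q + 1) *
          (r^(γ K - (n:ℝ)/2 + 1) * t^(-(γ K+1))) :=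
        mul_le_mul_of_nonneg_right (by linarith) hrt0
    _ = (A*C*S^(γ K - (n:ℝ)/2 + 1)*M^(-γ K)*Q + 1) *
          r^(γ K - (n:ℝ)/2 + 1) * t^(-(γ K+1)) := by ring
end
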